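/- arXiv:1101.1539 — 9 statements merged into one kernel-verified Lean document; each statement's English description precedes it below -/
import Mathlib

section
/- For every n ≥ 1 and every A ⊆ ℝⁿ, the convex geometry Co(ℝⁿ, A) satisfies the n-Carousel Rule: for every S ⊆ A and all x, y ∈ A with x, y ∈ convexHull ℝ S, there exist a₁, …, aₙ ∈ S (not necessarily distinct) such that x ∈ convexHull ℝ ({y} ∪ {a₁, …, aₙ}). -/
/-!
By Carathéodory, `x = ∑ cᵢ pᵢ` is a convex combination of affinely independent points `pᵢ ∈ S`,
at most `n + 1` of them, and with at most `n` there is nothing to prove. With `n + 1` they span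
the whole space, so `y = ∑ dᵢ pᵢ` with `∑ dᵢ = 1`. Pushing `x` away from `y`, the weights
`cᵢ + s (cᵢ - dᵢ)` of `x + s (x - y)` stay nonnegative until one of them, say the `j`-th,
vanishes; the point `z` reached then lies in the convex hull of the `pᵢ` with `i ≠ j`, and `x`
lies on the segment from `y` to `z`.
-/

open Finset

theorem Set.Finite.exists_fin_subset_range {α : Type*} {n : ℕ} {S T : Set α} (hT : T.Finite)
    (hTS : T ⊆ S) (hTn : T.ncard ≤ n) (hS : S.Nonempty) :
    ∃ a : Fin n → α, (∀ i, a i ∈ S) ∧ T ⊆ Set.range a := by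
  obtain ⟨s₀, hs₀⟩ := hS
  have := hT.fintype
  obtain ⟨f⟩ : Nonempty (T ↪ Fin n) := Function.Embedding.nonempty_of_card_le <| by
    rwa [Fintype.card_fin, ← Nat.card_eq_fintype_card, Nat.card_coe_set_eq]
  refine ⟨Function.extend f Subtype.val fun _ => s₀, fun i => ?_,
    fun t ht => ⟨f ⟨t, ht⟩, f.injective.extend_apply _ _ _⟩⟩
  rw [Function.extend_def]
  split_ifs with h
  exacts [hTS h.choose.2, hs₀]

variable {𝕜 E ι : Type*} [Field 𝕜] [LinearOrder 𝕜] [IsStrictOrderedRing 𝕜]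

theorem exists_nonneg_add_mul_sub_eq_zero [Fintype ι] {c d : ι → 𝕜} (hc : ∀ i, 0 ≤ c i)
    (h : ∃ i, c i < d i) :
    ∃ j, ∃ s ≥ 0, (∀ i, 0 ≤ c i + s * (c i - d i)) ∧ c j + s * (c j - d j) = 0 := by
  classical
  obtain ⟨j, hj, hmin⟩ := (univ.filter fun i => c i < d i).exists_min_image
    (fun i => c i / (d i - c i)) (by simpa [filter_nonempty_iff] using h)
  have hdj : 0 < d j - c j := sub_pos.mpr (mem_filter.mp hj).2
  have hs : 0 ≤ c j / (d j - c j) := div_nonneg (hc j) hdj.le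
  refine ⟨j, c j / (d j - c j), hs, fun i => ?_, by field_simp; ring⟩
  rcases le_or_gt (d i) (c i) with hi | hi
  · nlinarith [hc i]
  · have := (le_div_iff₀ (sub_pos.mpr hi)).mp (hmin i (by simp [hi]))
    linarith

variable [AddCommGroup E] [Module 𝕜 E]

theorem exists_sum_smul_mem_convexHull_insert_sum_smul_image_compl [Fintype ι] (p : ι → E)
    {c d : ι → 𝕜} (hc₀ : ∀ i, 0 ≤ c i) (hc₁ : ∑ i, c i = 1) (hd₁ : ∑ i, d i = 1) :
    ∃ j, ∑ i, c i • p i ∈ convexHull 𝕜 (insert (∑ i, d i • p i) (p '' {j}ᶜ)) := by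
  classical
  by_cases h : ∀ i, d i ≤ c i
  · have hcd : c = d := funext fun i =>
      ((sum_eq_sum_iff_of_le fun i _ => h i).mp (by rw [hc₁, hd₁]) i (mem_univ i)).symm
    obtain ⟨j, -⟩ := nonempty_of_sum_ne_zero (hc₁.trans_ne one_ne_zero)
    exact ⟨j, subset_convexHull 𝕜 _ (hcd ▸ Set.mem_insert _ _)⟩
  simp only [not_forall, not_le] at h
  obtain ⟨j, s, hs, hw₀, hwj⟩ := exists_nonneg_add_mul_sub_eq_zero hc₀ h
  set w : ι → 𝕜 := fun i => c i + s * (c i - d i)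
  replace hwj : w j = 0 := hwj
  have hz : ∑ i, w i • p i ∈ convexHull 𝕜 (p '' {j}ᶜ) := by
    rw [← sum_erase (a := j) _ (by rw [hwj, zero_smul])]
    refine (convex_convexHull 𝕜 _).sum_mem (fun i _ => hw₀ i) ?_ fun i hi =>
      subset_convexHull 𝕜 _ ⟨i, ne_of_mem_erase hi, rfl⟩
    rw [sum_erase _ hwj]
    simp [w, sum_add_distrib, ← mul_sum, hc₁, hd₁]
  have hx : ∑ i, c i • p i =
      (s / (1 + s)) • ∑ i, d i • p i + (1 / (1 + s)) • ∑ i, w i • p i := by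
    rw [smul_sum, smul_sum, ← sum_add_distrib]
    refine sum_congr rfl fun i _ => ?_
    match_scalars
    field_simp
    ring
  refine ⟨j, hx ▸ convex_convexHull 𝕜 _ (subset_convexHull 𝕜 _ (Set.mem_insert _ _))
    (convexHull_mono (Set.subset_insert _ _) hz) (by positivity) (by positivity) ?_⟩
  field_simp
  ring

theorem exists_sum_smul_mem_convexHull_insert_image_compl_of_mem_affineSpan [Fintype ι]
    {p : ι → E} {c : ι → 𝕜} (hc₀ : ∀ i, 0 ≤ c i) (hc₁ : ∑ i, c i = 1) {y : E}
    (hy : y ∈ affineSpan 𝕜 (Set.range p)) :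
    ∃ j, ∑ i, c i • p i ∈ convexHull 𝕜 (insert y (p '' {j}ᶜ)) := by
  obtain ⟨d, hd₁, rfl⟩ := eq_affineCombination_of_mem_affineSpan_of_fintype hy
  rw [univ.affineCombination_eq_linear_combination p d hd₁]
  exact exists_sum_smul_mem_convexHull_insert_sum_smul_image_compl p hc₀ hc₁ hd₁

theorem exists_fin_mem_convexHull_insert [FiniteDimensional 𝕜 E] {n : ℕ}
    (hE : Module.finrank 𝕜 E ≤ n) {S : Set E} {x : E} (hx : x ∈ convexHull 𝕜 S) (y : E) :
    ∃ a : Fin n → E, (∀ i, a i ∈ S) ∧ x ∈ convexHull 𝕜 (insert y (Set.range a)) := by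
  suffices ∃ T ⊆ S, T.Finite ∧ T.ncard ≤ n ∧ x ∈ convexHull 𝕜 (insert y T) by
    obtain ⟨T, hTS, hT, hTn, hxT⟩ := this
    obtain ⟨a, haS, hTa⟩ :=
      hT.exists_fin_subset_range hTS hTn (convexHull_nonempty_iff.mp ⟨x, hx⟩)
    exact ⟨a, haS, convexHull_mono (Set.insert_subset_insert hTa) hxT⟩
  obtain ⟨ι, _, p, c, hpS, hp, hc₀, hc₁, rfl⟩ := eq_pos_convex_span_of_mem_convexHull hx
  have hcard : Nat.card ι ≤ Module.finrank 𝕜 E + 1 := by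
    rw [Nat.card_eq_fintype_card]
    exact hp.card_le_finrank_succ.trans (Nat.add_le_add_right (Submodule.finrank_le _) 1)
  by_cases hle : Nat.card ι ≤ n
  · refine ⟨Set.range p, hpS, Set.finite_range p, ?_,
      convexHull_mono (Set.subset_insert _ _) ?_⟩
    · rw [← Set.image_univ]
      exact (Set.ncard_image_le (Set.toFinite _)).trans (by rwa [Set.ncard_univ])
    · exact (convex_convexHull 𝕜 _).sum_mem (fun i _ => (hc₀ i).le) hc₁
        fun i _ => subset_convexHull 𝕜 _ (Set.mem_range_self i)
  have hspan : affineSpan 𝕜 (Set.range p) = ⊤ :=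
    hp.affineSpan_eq_top_iff_card_eq_finrank_add_one.mpr <| by
      rw [← Nat.card_eq_fintype_card]
      omega
  obtain ⟨j, hj⟩ := exists_sum_smul_mem_convexHull_insert_image_compl_of_mem_affineSpan
    (fun i => (hc₀ i).le) hc₁ (hspan ▸ AffineSubspace.mem_top 𝕜 E y)
  refine ⟨p '' {j}ᶜ, (Set.image_subset_range _ _).trans hpS, Set.toFinite _, ?_, hj⟩
  exact (Set.ncard_image_le (Set.toFinite _)).trans
    (by rw [Set.ncard_compl, Set.ncard_singleton]; omega)

theorem stmt_3_general (n : ℕ) (S : Set (Fin n → ℝ))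
    (x y : Fin n → ℝ)
    (hxS : x ∈ convexHull ℝ S) :
    ∃ a : Fin n → (Fin n → ℝ), (∀ i, a i ∈ S) ∧
      x ∈ convexHull ℝ (insert y (Set.range a)) :=
  exists_fin_mem_convexHull_insert (Module.finrank_fin_fun ℝ).le hxS y

/-- for every `n ≥ 1` and `A ⊆ ℝⁿ`, `Co(ℝⁿ, A)` satisfies the
`n`-Carousel Rule: if `x, y ∈ A` lie in the convex hull of `S ⊆ A`, then there
exist `a₁, …, aₙ ∈ S` with `x ∈ convexHull ℝ ({y} ∪ {a₁, …, aₙ})`. -/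
theorem stmt_3 (n : ℕ) (hn : 1 ≤ n) (A S : Set (Fin n → ℝ)) (hSA : S ⊆ A)
    (x y : Fin n → ℝ) (hxA : x ∈ A) (hyA : y ∈ A)
    (hxS : x ∈ convexHull ℝ S) (hyS : y ∈ convexHull ℝ S) :
    ∃ a : Fin n → (Fin n → ℝ), (∀ i, a i ∈ S) ∧
      x ∈ convexHull ℝ (insert y (Set.range a)) :=
  stmt_3_general n S x y hxS
end

section
/- Let (H, cl_H) be a convex geometry satisfying the n-Carousel Rule and let (G, cl_G) be a finite convex geometry that is a sub-geometry of (H, cl_H). Then (G, cl_G) satisfies the n-Carousel Rule. -/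
/-- A convex geometry: a closure operator on subsets of `A` (extensive, monotone,
idempotent, valued in subsets of `A`) which is zero-closed and satisfies the
anti-exchange axiom. -/
def IsConvexGeometry {α : Type*} (A : Set α) (cl : Set α → Set α) : Prop :=
  (∀ Y : Set α, Y ⊆ A → Y ⊆ cl Y) ∧
  (∀ Y : Set α, Y ⊆ A → cl Y ⊆ A) ∧
  (∀ Y Z : Set α, Y ⊆ Z → Z ⊆ A → cl Y ⊆ cl Z) ∧
  (∀ Y : Set α, Y ⊆ A → cl (cl Y) = cl Y) ∧
  cl ∅ = ∅ ∧
  (∀ x ∈ A, ∀ y ∈ A, x ≠ y → ∀ X : Set α, X ⊆ A → cl X = X →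
    x ∈ cl (X ∪ {y}) → x ∉ X → y ∉ cl (X ∪ {x}))

/-- The `n`-Carousel Rule for a closure operator `cl` on subsets of `A`. -/
def CarouselRule {α : Type*} (n : ℕ) (A : Set α) (cl : Set α → Set α) : Prop :=
  ∀ S : Set α, S ⊆ A → ∀ x y, x ∈ cl S → y ∈ cl S →
    ∃ a : Fin n → α, (∀ i, a i ∈ S) ∧ x ∈ cl (insert y (Set.range a))

/-- `(A, clG)` is a sub-geometry of `(B, clH)`: there is an injective map `φ` from
`clG`-closed subsets of `A` to `clH`-closed subsets of `B` preserving intersections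
and closures of unions. -/
def IsSubGeometry {α β : Type*} (A : Set α) (clG : Set α → Set α)
    (B : Set β) (clH : Set β → Set β) : Prop :=
  ∃ φ : Set α → Set β,
    (∀ X : Set α, X ⊆ A → clG X = X → φ X ⊆ B ∧ clH (φ X) = φ X) ∧
    (∀ X Y : Set α, X ⊆ A → clG X = X → Y ⊆ A → clG Y = Y → φ X = φ Y → X = Y) ∧
    (∀ X Y : Set α, X ⊆ A → clG X = X → Y ⊆ A → clG Y = Y →
      φ (X ∩ Y) = φ X ∩ φ Y) ∧
    (∀ X Y : Set α, X ⊆ A → clG X = X → Y ⊆ A → clG Y = Y →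
      φ (clG (X ∪ Y)) = clH (φ X ∪ φ Y))

/-!
Every point `x` of the finite geometry `G` is an extreme point of `cl_G {x}`, so `cl_G {x} \ {x}`
is closed, and injectivity of `φ` yields a point `x'` of `φ (cl_G {x})` outside
`φ (cl_G {x} \ {x})`. Meet preservation then shows that `x'` lies in `φ U` exactly when `x ∈ U`,
for every closed `U`. Since `φ (cl_G S)` is generated by the sets `φ (cl_G {s})`, `s ∈ S`, the
Carousel Rule in `H`, applied to the representatives of `x` and `y`, produces `a'₁, …, a'ₙ` lying in
sets `φ (cl_G {sᵢ})`; then `x'` lies in `φ (cl_G {y, s₁, …, sₙ})`, i.e. `x ∈ cl_G {y, s₁, …, sₙ}`.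
-/

section

variable {α β : Type*}

structure IsClosureOn (A : Set α) (cl : Set α → Set α) : Prop where
  subset_cl : ∀ Y ⊆ A, Y ⊆ cl Y
  cl_subset : ∀ Y ⊆ A, cl Y ⊆ A
  cl_mono : ∀ Y Z, Y ⊆ Z → Z ⊆ A → cl Y ⊆ cl Z
  cl_cl : ∀ Y ⊆ A, cl (cl Y) = cl Y

namespace IsClosureOn

variable {A : Set α} {cl : Set α → Set α}

theorem cl_subset_cl_of_subset_cl (h : IsClosureOn A cl) {Y Z : Set α} (hZ : Z ⊆ A)
    (hYZ : Y ⊆ cl Z) : cl Y ⊆ cl Z :=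
  (h.cl_mono Y (cl Z) hYZ (h.cl_subset Z hZ)).trans (h.cl_cl Z hZ).le

theorem cl_subset_of_subset_closed (h : IsClosureOn A cl) {X Y : Set α} (hX : X ⊆ A)
    (hXc : cl X = X) (hYX : Y ⊆ X) : cl Y ⊆ X := by
  rw [← hXc] at hYX ⊢
  exact h.cl_subset_cl_of_subset_cl hX hYX

theorem cl_inter_of_closed (h : IsClosureOn A cl) {X Y : Set α} (hX : X ⊆ A) (hXc : cl X = X)
    (hY : Y ⊆ A) (hYc : cl Y = Y) : cl (X ∩ Y) = X ∩ Y := by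
  refine (h.subset_cl _ (Set.inter_subset_left.trans hX)).antisymm' (Set.subset_inter ?_ ?_)
  · exact h.cl_subset_of_subset_closed hX hXc Set.inter_subset_left
  · exact h.cl_subset_of_subset_closed hY hYc Set.inter_subset_right

theorem cl_union_cl (h : IsClosureOn A cl) {X Y : Set α} (hX : X ⊆ A) (hY : Y ⊆ A) :
    cl (cl X ∪ cl Y) = cl (X ∪ Y) := by
  have hXY : X ∪ Y ⊆ A := Set.union_subset hX hY
  refine (h.cl_subset_cl_of_subset_cl hXY (Set.union_subset ?_ ?_)).antisymm
    (h.cl_mono _ _ (Set.union_subset_union (h.subset_cl X hX) (h.subset_cl Y hY))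
      (Set.union_subset (h.cl_subset X hX) (h.cl_subset Y hY)))
  · exact h.cl_mono _ _ Set.subset_union_left hXY
  · exact h.cl_mono _ _ Set.subset_union_right hXY

end IsClosureOn

namespace IsConvexGeometry

variable {A : Set α} {cl : Set α → Set α}

theorem isClosureOn (h : IsConvexGeometry A cl) : IsClosureOn A cl :=
  ⟨h.1, h.2.1, h.2.2.1, h.2.2.2.1⟩

theorem cl_empty (h : IsConvexGeometry A cl) : cl ∅ = ∅ :=
  h.2.2.2.2.1

theorem cl_cl_singleton_diff_singleton (h : IsConvexGeometry A cl) (hfin : A.Finite) {x : α}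
    (hx : x ∈ A) : cl (cl {x} \ {x}) = cl {x} \ {x} := by
  have hc := h.isClosureOn
  have hanti := h.2.2.2.2.2
  have hxA : {x} ⊆ A := Set.singleton_subset_iff.2 hx
  -- a maximal closed set avoiding `x` contains every other point of `cl {x}`, by anti-exchange
  obtain ⟨K, ⟨hKA, hKc, hxK⟩, hKmax⟩ :=
    (hfin.finite_subsets.subset fun K (hK : K ⊆ A ∧ cl K = K ∧ x ∉ K) => hK.1).exists_maximal
      ⟨∅, Set.empty_subset A, h.cl_empty, Set.notMem_empty x⟩
  have hK : cl {x} \ {x} ⊆ K := by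
    rintro e ⟨hex, hne : e ≠ x⟩
    by_contra heK
    have heA : e ∈ A := hc.cl_subset _ hxA hex
    have hKeA : K ∪ {e} ⊆ A := Set.union_subset hKA (Set.singleton_subset_iff.2 heA)
    have hxKe : x ∈ cl (K ∪ {e}) := by
      by_contra hxKe
      exact heK (hKmax ⟨hc.cl_subset _ hKeA, hc.cl_cl _ hKeA, hxKe⟩
        (Set.subset_union_left.trans (hc.subset_cl _ hKeA)) (hc.subset_cl _ hKeA (Or.inr rfl)))
    refine hanti x hx e heA hne.symm K hKA hKc hxKe hxK ?_
    exact hc.cl_mono _ _ Set.subset_union_right (Set.union_subset hKA hxA) hex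
  refine (hc.subset_cl _ (Set.sdiff_subset.trans (hc.cl_subset _ hxA))).antisymm'
    fun e he => ⟨?_, ?_⟩
  · exact hc.cl_subset_of_subset_closed (hc.cl_subset _ hxA) (hc.cl_cl _ hxA) Set.sdiff_subset he
  · rintro rfl
    exact hxK (hc.cl_subset_of_subset_closed hKA hKc hK he)

end IsConvexGeometry

structure IsSubGeometryMap (G : Set α) (clG : Set α → Set α) (H : Set β) (clH : Set β → Set β)
    (φ : Set α → Set β) : Prop where
  map_closed : ∀ X ⊆ G, clG X = X → φ X ⊆ H ∧ clH (φ X) = φ X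
  injOn : ∀ X Y, X ⊆ G → clG X = X → Y ⊆ G → clG Y = Y → φ X = φ Y → X = Y
  map_inter : ∀ X Y, X ⊆ G → clG X = X → Y ⊆ G → clG Y = Y → φ (X ∩ Y) = φ X ∩ φ Y
  map_cl_union : ∀ X Y, X ⊆ G → clG X = X → Y ⊆ G → clG Y = Y →
    φ (clG (X ∪ Y)) = clH (φ X ∪ φ Y)

theorem IsSubGeometry.exists_isSubGeometryMap {G : Set α} {clG : Set α → Set α} {H : Set β}
    {clH : Set β → Set β} (h : IsSubGeometry G clG H clH) :
    ∃ φ, IsSubGeometryMap G clG H clH φ :=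
  let ⟨φ, h₁, h₂, h₃, h₄⟩ := h
  ⟨φ, h₁, h₂, h₃, h₄⟩

namespace IsSubGeometryMap

variable {G : Set α} {clG : Set α → Set α} {H : Set β} {clH : Set β → Set β} {φ : Set α → Set β}

theorem map_cl_subset (hφ : IsSubGeometryMap G clG H clH φ) (hG : IsClosureOn G clG)
    {X : Set α} (hX : X ⊆ G) : φ (clG X) ⊆ H :=
  (hφ.map_closed _ (hG.cl_subset X hX) (hG.cl_cl X hX)).1

theorem map_mono (hφ : IsSubGeometryMap G clG H clH φ) {X Y : Set α} (hX : X ⊆ G)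
    (hXc : clG X = X) (hY : Y ⊆ G) (hYc : clG Y = Y) (hXY : X ⊆ Y) : φ X ⊆ φ Y := by
  have h := hφ.map_inter X Y hX hXc hY hYc
  rw [Set.inter_eq_left.2 hXY] at h
  exact h ▸ Set.inter_subset_right

theorem map_cl_subset_map (hφ : IsSubGeometryMap G clG H clH φ) (hG : IsClosureOn G clG)
    {X Y : Set α} (hY : Y ⊆ G) (hYc : clG Y = Y) (hXY : X ⊆ Y) : φ (clG X) ⊆ φ Y :=
  hφ.map_mono (hG.cl_subset X (hXY.trans hY)) (hG.cl_cl X (hXY.trans hY)) hY hYc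
    (hG.cl_subset_of_subset_closed hY hYc hXY)

theorem map_cl_subset_cl_union_biUnion (hφ : IsSubGeometryMap G clG H clH φ)
    (hG : IsClosureOn G clG) (hH : IsClosureOn H clH) {F : Set α} (hF : F.Finite) (hFG : F ⊆ G) :
    φ (clG F) ⊆ clH (φ (clG ∅) ∪ ⋃ g ∈ F, φ (clG {g})) := by
  have hUH : ∀ {F : Set α}, F ⊆ G → φ (clG ∅) ∪ ⋃ g ∈ F, φ (clG {g}) ⊆ H := fun hF' =>
    Set.union_subset (hφ.map_cl_subset hG (Set.empty_subset G))
      (Set.iUnion₂_subset fun g hg => hφ.map_cl_subset hG (Set.singleton_subset_iff.2 (hF' hg)))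
  induction F, hF using Set.Finite.induction_on with
  | empty =>
    simpa using hH.subset_cl _ (hφ.map_cl_subset hG (Set.empty_subset G))
  | @insert a t _ _ ih =>
    obtain ⟨haG, htG⟩ := Set.insert_subset_iff.1 hFG
    have haG' : {a} ⊆ G := Set.singleton_subset_iff.2 haG
    have hU : φ (clG ∅) ∪ ⋃ g ∈ insert a t, φ (clG {g}) =
        φ (clG {a}) ∪ (φ (clG ∅) ∪ ⋃ g ∈ t, φ (clG {g})) := by
      rw [Set.biUnion_insert, Set.union_left_comm]
    have hcl : clG (insert a t) = clG (clG {a} ∪ clG t) := by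
      rw [hG.cl_union_cl haG' htG, Set.insert_eq]
    have hWH := hU ▸ hUH hFG
    rw [hcl, hφ.map_cl_union _ _ (hG.cl_subset _ haG') (hG.cl_cl _ haG') (hG.cl_subset _ htG)
      (hG.cl_cl _ htG), hU]
    refine hH.cl_subset_cl_of_subset_cl hWH (Set.union_subset ?_ ?_)
    · exact Set.subset_union_left.trans (hH.subset_cl _ hWH)
    · exact (ih htG).trans (hH.cl_mono _ _ Set.subset_union_right hWH)

theorem map_cl_subset_cl_biUnion (hφ : IsSubGeometryMap G clG H clH φ) (hG : IsClosureOn G clG)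
    (hH : IsClosureOn H clH) {F : Set α} (hF : F.Finite) (hFG : F ⊆ G) (hne : F.Nonempty) :
    φ (clG F) ⊆ clH (⋃ g ∈ F, φ (clG {g})) := by
  obtain ⟨g₀, hg₀⟩ := hne
  have hg₀G : {g₀} ⊆ G := Set.singleton_subset_iff.2 (hFG hg₀)
  have hempty : φ (clG ∅) ⊆ ⋃ g ∈ F, φ (clG {g}) :=
    (hφ.map_cl_subset_map hG (hG.cl_subset _ hg₀G) (hG.cl_cl _ hg₀G) (Set.empty_subset _)).trans
      (Set.subset_biUnion_of_mem (u := fun g => φ (clG {g})) hg₀)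
  rw [← Set.union_eq_self_of_subset_left hempty]
  exact hφ.map_cl_subset_cl_union_biUnion hG hH hF hFG

theorem exists_forall_mem_map_iff (hφ : IsSubGeometryMap G clG H clH φ)
    (hG : IsConvexGeometry G clG) (hfin : G.Finite) {x : α} (hx : x ∈ G) :
    ∃ x', ∀ U ⊆ G, clG U = U → (x' ∈ φ U ↔ x ∈ U) := by
  have hc := hG.isClosureOn
  have hxG : {x} ⊆ G := Set.singleton_subset_iff.2 hx
  have hCG := hc.cl_subset _ hxG
  have hCc := hc.cl_cl _ hxG
  have hKG : clG {x} \ {x} ⊆ G := Set.sdiff_subset.trans hCG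
  have hKc := hG.cl_cl_singleton_diff_singleton hfin hx
  have hCK : ¬ φ (clG {x}) ⊆ φ (clG {x} \ {x}) := by
    intro hsub
    have hinter := hφ.injOn _ _ hCG hCc (Set.inter_subset_left.trans hCG)
      (hc.cl_inter_of_closed hCG hCc hKG hKc)
      (by rw [hφ.map_inter _ _ hCG hCc hKG hKc, Set.inter_eq_left.2 hsub])
    exact (hinter ▸ hc.subset_cl _ hxG rfl : x ∈ clG {x} ∩ (clG {x} \ {x})).2.2 rfl
  obtain ⟨x', hx'C, hx'K⟩ := Set.not_subset.1 hCK
  refine ⟨x', fun U hUG hUc => ⟨fun hx'U => ?_, fun hxU =>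
    hφ.map_cl_subset_map hc hUG hUc (Set.singleton_subset_iff.2 hxU) hx'C⟩⟩
  by_contra hxU
  refine hx'K (hφ.map_mono (Set.inter_subset_left.trans hCG)
    (hc.cl_inter_of_closed hCG hCc hUG hUc) hKG hKc ?_
    (hφ.map_inter _ _ hCG hCc hUG hUc ▸ ⟨hx'C, hx'U⟩))
  rintro e ⟨heC, heU⟩
  exact ⟨heC, fun hex : e = x => hxU (hex ▸ heU)⟩

end IsSubGeometryMap

end

/-- the `n`-Carousel Rule is inherited by finite sub-geometries. -/
theorem stmt_4 {α β : Type*} (n : ℕ)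
    (H : Set β) (clH : Set β → Set β) (hH : IsConvexGeometry H clH)
    (hHcar : CarouselRule n H clH)
    (G : Set α) (clG : Set α → Set α) (hG : IsConvexGeometry G clG)
    (hGfin : G.Finite)
    (hsub : IsSubGeometry G clG H clH) :
    CarouselRule n G clG := by
  obtain ⟨φ, hφ⟩ := hsub.exists_isSubGeometryMap
  have hGc := hG.isClosureOn
  have hHc := hH.isClosureOn
  intro S hSG x y hx hy
  have hS : S.Nonempty := Set.nonempty_iff_ne_empty.2 fun hS => by
    simp [hS, hG.cl_empty] at hx
  obtain ⟨x', hx'⟩ := hφ.exists_forall_mem_map_iff hG hGfin (hGc.cl_subset S hSG hx)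
  obtain ⟨y', hy'⟩ := hφ.exists_forall_mem_map_iff hG hGfin (hGc.cl_subset S hSG hy)
  have hSc := hGc.cl_cl S hSG
  have hST := hφ.map_cl_subset_cl_biUnion hGc hHc (hGfin.subset hSG) hSG hS
  obtain ⟨a', ha'S, hx'a'⟩ := hHcar _
    (Set.iUnion₂_subset fun s hs => hφ.map_cl_subset hGc (Set.singleton_subset_iff.2 (hSG hs)))
    x' y' (hST ((hx' _ (hGc.cl_subset S hSG) hSc).2 hx))
    (hST ((hy' _ (hGc.cl_subset S hSG) hSc).2 hy))
  choose s hsS ha's using fun i => Set.mem_iUnion₂.1 (ha'S i)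
  refine ⟨s, hsS, ?_⟩
  have hFG : insert y (Set.range s) ⊆ G :=
    Set.insert_subset (hGc.cl_subset S hSG hy) (Set.range_subset_iff.2 fun i => hSG (hsS i))
  have hUG := hGc.cl_subset _ hFG
  have hUc := hGc.cl_cl _ hFG
  obtain ⟨hφUH, hφUc⟩ := hφ.map_closed _ hUG hUc
  refine (hx' _ hUG hUc).1 (hHc.cl_subset_of_subset_closed hφUH hφUc ?_ hx'a')
  rintro _ (rfl | ⟨i, rfl⟩)
  · exact (hy' _ hUG hUc).2 (hGc.subset_cl _ hFG (Set.mem_insert y _))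
  · have hsU := hGc.subset_cl _ hFG (Set.mem_insert_of_mem y ⟨i, rfl⟩)
    exact hφ.map_cl_subset_map hGc hUG hUc (Set.singleton_subset_iff.2 hsU) (ha's i)
end

section
/- With the construction of C_n: the family 𝒟 contains ∅ and D ∪ {x, y}, is closed under arbitrary intersections, and for every Z ∈ 𝒟 with Z ≠ D ∪ {x, y} there exists p ∈ (D ∪ {x, y}) \ Z with Z ∪ {p} ∈ 𝒟. Consequently C_n is a finite convex geometry (its closure operator cl_C is zero-closed and satisfies the anti-exchange axiom), and cl_C satisfies the n-Carathéodory property. -/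
/-!
Write `D` for the vertex set and `S = D ∪ {x, y}`. In barycentric coordinates, a vertex lies in
the convex hull of some `Z ⊆ S` only if it lies in `Z`. If `x ∉ Z` lies in the hull of `Z ⊆ S`
and some vertex `aₗ` is missing from `Z`, then `x ∈ conv({y} ∪ D \ {aₗ})`; uniqueness of that
index, together with `x` lying on no facet, forces `Z = {y} ∪ D \ {aᵢ}`. Hence `𝒟` is exactly
the family of those `Z ⊆ S` that contain `D` only when `Z = S`. For that family the structural
properties and the Carathéodory property are immediate, and anti-exchange follows, as in any
finite closure system with one-point extensions, by extending `X` to a maximal closed set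
avoiding `u`.
-/

open Set

section ClosureSystem

variable {α : Type*}

def closureIn (𝒟 : Set (Set α)) (Z : Set α) : Set α := ⋂₀ {W | W ∈ 𝒟 ∧ Z ⊆ W}

variable {𝒟 : Set (Set α)} {Z W : Set α}

lemma subset_closureIn : Z ⊆ closureIn 𝒟 Z := subset_sInter fun _ hW => hW.2

lemma closureIn_subset (hW : W ∈ 𝒟) (hZW : Z ⊆ W) : closureIn 𝒟 Z ⊆ W :=
  sInter_subset_of_mem ⟨hW, hZW⟩

lemma closureIn_mem (h𝒟 : ∀ 𝒮 ⊆ 𝒟, 𝒮.Nonempty → ⋂₀ 𝒮 ∈ 𝒟) (hW : W ∈ 𝒟) (hZW : Z ⊆ W) :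
    closureIn 𝒟 Z ∈ 𝒟 :=
  h𝒟 _ (fun _ hV => hV.1) ⟨W, hW, hZW⟩

theorem notMem_closureIn_of_exists_insert_mem {S : Set α} (hS : S.Finite)
    (h𝒟S : ∀ Z ∈ 𝒟, Z ⊆ S) (hext : ∀ Z ∈ 𝒟, Z ≠ S → ∃ p ∈ S \ Z, insert p Z ∈ 𝒟)
    {u v : α} (hu : u ∈ S) (huv : u ≠ v) {X : Set α} (hX : X ∈ 𝒟) (huX : u ∉ X)
    (hu_cl : u ∈ closureIn 𝒟 (X ∪ {v})) : v ∉ closureIn 𝒟 (X ∪ {u}) := by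
  intro hv_cl
  obtain ⟨T, ⟨hT, hXT, huT⟩, hTmax⟩ :=
    (hS.finite_subsets.subset fun T (hT : T ∈ 𝒟 ∧ X ⊆ T ∧ u ∉ T) => h𝒟S T hT.1).exists_maximal
      ⟨X, hX, subset_rfl, huX⟩
  obtain ⟨p, ⟨-, hpT⟩, hpT𝒟⟩ := hext T hT fun h => huT (h ▸ hu)
  obtain rfl : u = p := by
    by_contra hup
    refine hpT (hTmax ⟨hpT𝒟, hXT.trans (subset_insert p T), ?_⟩ (subset_insert p T)
      (mem_insert p T))
    exact fun h => huT (h.resolve_left hup)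
  have hvT : v ∈ T :=
    (closureIn_subset hpT𝒟 (union_subset (hXT.trans (subset_insert u T))
      (singleton_subset_iff.2 (mem_insert u T))) hv_cl).resolve_left huv.symm
  exact huT (closureIn_subset hT (union_subset hXT (singleton_subset_iff.2 hvT)) hu_cl)

end ClosureSystem

section CollapseAbove

variable {α : Type*} {S A Z : Set α}

def collapseAbove (S A : Set α) : Set (Set α) := {W | W ⊆ S ∧ (A ⊆ W → W = S)}

lemma empty_mem_collapseAbove (hA : A.Nonempty) : ∅ ∈ collapseAbove S A :=
  ⟨empty_subset S, fun h => absurd (h hA.some_mem) (notMem_empty _)⟩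

lemma self_mem_collapseAbove : S ∈ collapseAbove S A := ⟨subset_rfl, fun _ => rfl⟩

lemma sInter_mem_collapseAbove {𝒮 : Set (Set α)} (h𝒮 : 𝒮 ⊆ collapseAbove S A)
    (hne : 𝒮.Nonempty) : ⋂₀ 𝒮 ∈ collapseAbove S A := by
  obtain ⟨Z₀, hZ₀⟩ := hne
  refine ⟨(sInter_subset_of_mem hZ₀).trans (h𝒮 hZ₀).1, fun hA => ?_⟩
  have hall : ∀ Z ∈ 𝒮, Z = S := fun Z hZ => (h𝒮 hZ).2 (hA.trans (sInter_subset_of_mem hZ))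
  exact ((sInter_subset_of_mem hZ₀).trans (hall Z₀ hZ₀).le).antisymm
    (subset_sInter fun Z hZ => (hall Z hZ).ge)

lemma exists_insert_mem_collapseAbove (hZ : Z ∈ collapseAbove S A) (hZS : Z ≠ S) :
    ∃ p ∈ S \ Z, insert p Z ∈ collapseAbove S A := by
  by_cases hA : ∃ p ∈ S \ Z, p ∉ A
  · obtain ⟨p, hp, hpA⟩ := hA
    refine ⟨p, hp, insert_subset hp.1 hZ.1, fun hAZ => absurd (hZ.2 fun q hq => ?_) hZS⟩
    exact (hAZ hq).resolve_left (ne_of_mem_of_not_mem hq hpA)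
  · push Not at hA
    obtain ⟨q, hq⟩ : (S \ Z).Nonempty := sdiff_nonempty.2 fun h => hZS (hZ.1.antisymm h)
    refine ⟨q, hq, insert_subset hq.1 hZ.1, fun hAZ => (insert_subset hq.1 hZ.1).antisymm ?_⟩
    intro s hs
    by_cases hsZ : s ∈ Z
    · exact mem_insert_of_mem q hsZ
    · exact hAZ (hA s ⟨hs, hsZ⟩)

lemma insert_range_diff_mem_collapseAbove {ι : Type*} (f : ι → α) {T : Set α} {p : α}
    (hpT : p ∈ T) (hpf : p ∉ range f) (k : ι) :
    insert p (range f \ {f k}) ∈ collapseAbove (range f ∪ T) (range f) := by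
  refine ⟨insert_subset (Or.inr hpT) (sdiff_subset.trans subset_union_left), fun h => ?_⟩
  rcases h (mem_range_self k) with hkp | ⟨-, hkk⟩
  · exact (hpf (hkp ▸ mem_range_self k)).elim
  · exact (hkk rfl).elim

lemma closureIn_collapseAbove_of_superset (hAZ : A ⊆ Z) (hZS : Z ⊆ S) :
    closureIn (collapseAbove S A) Z = S :=
  (closureIn_subset self_mem_collapseAbove hZS).antisymm
    (subset_sInter fun _ hW => (hW.1.2 (hAZ.trans hW.2)).ge)

lemma closureIn_collapseAbove_of_not_superset (hAZ : ¬A ⊆ Z) (hZS : Z ⊆ S) :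
    closureIn (collapseAbove S A) Z = Z :=
  (closureIn_subset (𝒟 := collapseAbove S A) ⟨hZS, fun h => absurd h hAZ⟩ subset_rfl).antisymm
    subset_closureIn

lemma exists_mem_closureIn_collapseAbove_range {ι : Type*} [Nonempty ι] {f : ι → α}
    (hfS : range f ⊆ S) (hZS : Z ⊆ S) {z : α} (hz : z ∈ closureIn (collapseAbove S (range f)) Z) :
    ∃ b : ι → α, (∀ k, b k ∈ Z) ∧ z ∈ closureIn (collapseAbove S (range f)) (range b) := by
  by_cases hfZ : range f ⊆ Z
  · refine ⟨f, fun k => hfZ (mem_range_self k), ?_⟩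
    rwa [closureIn_collapseAbove_of_superset subset_rfl hfS,
      ← closureIn_collapseAbove_of_superset hfZ hZS]
  · rw [closureIn_collapseAbove_of_not_superset hfZ hZS] at hz
    exact ⟨fun _ => z, fun _ => hz, subset_closureIn (mem_range_self (Classical.arbitrary ι))⟩

end CollapseAbove

namespace AffineBasis

variable {ι E : Type*} [AddCommGroup E] [Module ℝ E] (B : AffineBasis ι ℝ E)

lemma coord_lt_one_of_mem_convexHull [Fintype ι] {k : ι} {w : E}
    (hw : w ∈ convexHull ℝ (range B)) (hne : w ≠ B k) : B.coord k w < 1 := by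
  classical
  rw [B.convexHull_eq_nonneg_coord] at hw
  by_contra! hk
  have hsplit := Finset.add_sum_erase Finset.univ (fun m => B.coord m w) (Finset.mem_univ k)
  have hsum := B.sum_coord_apply_eq_one w
  have hrest : ∑ m ∈ Finset.univ.erase k, B.coord m w = 0 :=
    le_antisymm (by linarith) (Finset.sum_nonneg fun m _ => hw m)
  refine hne (B.ext_elem fun m => ?_)
  rcases eq_or_ne m k with rfl | hmk
  · rw [B.coord_apply_eq]
    linarith
  · rw [B.coord_apply_ne hmk]
    exact (Finset.sum_eq_zero_iff_of_nonneg fun m _ => hw m).1 hrest m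
      (Finset.mem_erase.2 ⟨hmk, Finset.mem_univ m⟩)

lemma mem_of_mem_convexHull [Fintype ι] {Z : Set E} (hZ : Z ⊆ convexHull ℝ (range B)) {k : ι}
    (hk : B k ∈ convexHull ℝ Z) : B k ∈ Z := by
  by_contra hkZ
  have hhull : convexHull ℝ Z ⊆ B.coord k ⁻¹' Iio 1 :=
    convexHull_min
      (fun z hz => B.coord_lt_one_of_mem_convexHull (hZ hz) (ne_of_mem_of_not_mem hz hkZ))
      ((convex_Iio 1).affine_preimage (B.coord k))
  simpa [B.coord_apply_eq] using hhull hk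

lemma coord_eq_zero_of_mem_convexHull_range_diff {k : ι} {w : E}
    (hw : w ∈ convexHull ℝ (range B \ {B k})) : B.coord k w = 0 := by
  have hfacet : range B \ {B k} ⊆ B.coord k ⁻¹' {0} := by
    rintro _ ⟨⟨m, rfl⟩, hm⟩
    exact B.coord_apply_ne fun hkm => hm (hkm ▸ rfl)
  exact convexHull_min hfacet ((convex_singleton 0).affine_preimage (B.coord k)) hw

variable {x y : E}

lemma eq_insert_range_diff_of_mem_convexHull {i : ι} (hx : ∀ k, 0 < B.coord k x)
    (hxi : ∀ i', x ∈ convexHull ℝ (insert y (range B \ {B i'})) → i' = i)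
    {Z : Set E} (hZ : Z ⊆ range B ∪ {x, y}) (hxZ : x ∉ Z) (hx_hull : x ∈ convexHull ℝ Z)
    (hBZ : ¬range B ⊆ Z) : Z = insert y (range B \ {B i}) := by
  have hZ_sub : ∀ l, B l ∉ Z → Z ⊆ insert y (range B \ {B l}) := by
    intro l hl z hz
    rcases hZ hz with hzB | rfl | rfl
    · exact mem_insert_of_mem _ ⟨hzB, fun hzl => hl (hzl ▸ hz)⟩
    · exact absurd hz hxZ
    · exact mem_insert _ _
  have hmissing : ∀ l, B l ∉ Z → l = i := fun l hl => hxi l (convexHull_mono (hZ_sub l hl) hx_hull)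
  obtain ⟨_, ⟨k, rfl⟩, hk⟩ := not_subset.1 hBZ
  have hiZ : B i ∉ Z := hmissing k hk ▸ hk
  have hyZ : y ∈ Z := by
    by_contra hyZ
    have hfacet : Z ⊆ range B \ {B i} := fun z hz =>
      (hZ_sub i hiZ hz).resolve_left (ne_of_mem_of_not_mem hz hyZ)
    exact (hx i).ne' (B.coord_eq_zero_of_mem_convexHull_range_diff (convexHull_mono hfacet hx_hull))
  refine (hZ_sub i hiZ).antisymm (insert_subset hyZ ?_)
  rintro _ ⟨⟨m, rfl⟩, hm⟩
  by_contra hmZ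
  exact hm (hmissing m hmZ ▸ rfl)

lemma convexHull_inter_range_union_pair_eq [Fintype ι] (hx : x ∈ convexHull ℝ (range B))
    (hy : y ∈ convexHull ℝ (range B)) {Z : Set E} (hZ : Z ⊆ range B ∪ {x, y})
    (hxZ : x ∈ convexHull ℝ Z → x ∈ Z) (hyZ : y ∈ convexHull ℝ Z → y ∈ Z) :
    convexHull ℝ Z ∩ (range B ∪ {x, y}) = Z := by
  refine subset_antisymm ?_ fun p hp => ⟨subset_convexHull ℝ Z hp, hZ hp⟩
  have hZ_hull : Z ⊆ convexHull ℝ (range B) :=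
    hZ.trans (union_subset (subset_convexHull ℝ _) (pair_subset hx hy))
  rintro p ⟨hp, ⟨k, rfl⟩ | rfl | rfl⟩
  · exact B.mem_of_mem_convexHull hZ_hull hp
  · exact hxZ hp
  · exact hyZ hp

theorem relConvex_union_eq_collapseAbove [Fintype ι] {i j : ι} (hx : ∀ k, 0 < B.coord k x)
    (hy : ∀ k, 0 < B.coord k y) (hxB : x ∉ range B) (hyB : y ∉ range B)
    (hxi : ∀ i', x ∈ convexHull ℝ (insert y (range B \ {B i'})) → i' = i)
    (hyj : ∀ j', y ∈ convexHull ℝ (insert x (range B \ {B j'})) → j' = j) :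
    {Z | Z ⊆ range B ∪ {x, y} ∧ convexHull ℝ Z ∩ (range B ∪ {x, y}) = Z} ∪
        {insert y (range B \ {B i}), insert x (range B \ {B j})} =
      collapseAbove (range B ∪ {x, y}) (range B) := by
  have hx_hull : x ∈ convexHull ℝ (range B) := B.convexHull_eq_nonneg_coord ▸ fun k => (hx k).le
  have hy_hull : y ∈ convexHull ℝ (range B) := B.convexHull_eq_nonneg_coord ▸ fun k => (hy k).le
  ext Z
  constructor
  · rintro (⟨hZS, hZ⟩ | rfl | rfl)
    · refine ⟨hZS, fun hBZ => hZS.antisymm (union_subset hBZ (pair_subset ?_ ?_))⟩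
      · exact hZ ▸ ⟨convexHull_mono hBZ hx_hull, Or.inr (mem_insert x {y})⟩
      · exact hZ ▸ ⟨convexHull_mono hBZ hy_hull, Or.inr (mem_insert_of_mem x rfl)⟩
    · exact insert_range_diff_mem_collapseAbove B (mem_insert_of_mem x (mem_singleton y)) hyB i
    · exact insert_range_diff_mem_collapseAbove B (mem_insert x {y}) hxB j
  · rintro ⟨hZS, hZ⟩
    by_cases hBZ : range B ⊆ Z
    · left
      rw [hZ hBZ]
      exact ⟨subset_rfl, inter_eq_right.2 (subset_convexHull ℝ _)⟩
    by_cases hxZ : x ∈ convexHull ℝ Z ∧ x ∉ Z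
    · exact Or.inr (Or.inl (B.eq_insert_range_diff_of_mem_convexHull hx hxi hZS hxZ.2 hxZ.1 hBZ))
    by_cases hyZ : y ∈ convexHull ℝ Z ∧ y ∉ Z
    · rw [pair_comm] at hZS
      exact Or.inr (Or.inr (B.eq_insert_range_diff_of_mem_convexHull hy hyj hZS hyZ.2 hyZ.1 hBZ))
    push Not at hxZ hyZ
    exact Or.inl ⟨hZS, B.convexHull_inter_range_union_pair_eq hx_hull hy_hull hZS hxZ hyZ⟩

end AffineBasis

theorem stmt_5_general (n : ℕ)
    (a : Fin (n + 1) → (Fin n → ℝ)) (ha : AffineIndependent ℝ a)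
    (x y : Fin n → ℝ)
    (hxP : x ∈ interior (convexHull ℝ (Set.range a)))
    (hyP : y ∈ interior (convexHull ℝ (Set.range a)))
    (hxD : x ∉ Set.range a) (hyD : y ∉ Set.range a)
    (i j : Fin (n + 1))
    (hxiu : ∀ i' : Fin (n + 1),
      x ∈ convexHull ℝ (insert y (Set.range a \ {a i'})) → i' = i)
    (hyju : ∀ j' : Fin (n + 1),
      y ∈ convexHull ℝ (insert x (Set.range a \ {a j'})) → j' = j)
    (𝒟 : Set (Set (Fin n → ℝ)))
    (h𝒟 : 𝒟 = {Z | Z ⊆ Set.range a ∪ {x, y} ∧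
                convexHull ℝ Z ∩ (Set.range a ∪ {x, y}) = Z} ∪
              {insert y (Set.range a \ {a i}), insert x (Set.range a \ {a j})})
    (clC : Set (Fin n → ℝ) → Set (Fin n → ℝ))
    (hclC : ∀ Z : Set (Fin n → ℝ), clC Z = ⋂₀ {W | W ∈ 𝒟 ∧ Z ⊆ W}) :
    (∅ ∈ 𝒟) ∧
    (Set.range a ∪ {x, y} ∈ 𝒟) ∧
    (∀ 𝒮 : Set (Set (Fin n → ℝ)), 𝒮 ⊆ 𝒟 → 𝒮.Nonempty → ⋂₀ 𝒮 ∈ 𝒟) ∧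
    (∀ Z ∈ 𝒟, Z ≠ Set.range a ∪ {x, y} →
      ∃ p ∈ (Set.range a ∪ {x, y}) \ Z, insert p Z ∈ 𝒟) ∧
    (clC ∅ = ∅) ∧
    (∀ u ∈ Set.range a ∪ {x, y}, ∀ v ∈ Set.range a ∪ {x, y}, u ≠ v →
      ∀ X : Set (Fin n → ℝ), X ⊆ Set.range a ∪ {x, y} → clC X = X →
        u ∈ clC (X ∪ {v}) → u ∉ X → v ∉ clC (X ∪ {u})) ∧
    (∀ S : Set (Fin n → ℝ), S ⊆ Set.range a ∪ {x, y} → ∀ z, z ∈ clC S →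
      ∃ b : Fin (n + 1) → (Fin n → ℝ), (∀ k, b k ∈ S) ∧ z ∈ clC (Set.range b)) := by
  obtain ⟨B, rfl⟩ : ∃ B : AffineBasis (Fin (n + 1)) ℝ (Fin n → ℝ), ⇑B = a :=
    ⟨⟨a, ha, ha.affineSpan_eq_top_iff_card_eq_finrank_add_one.2 (by simp)⟩, rfl⟩
  rw [B.interior_convexHull] at hxP hyP
  rw [B.relConvex_union_eq_collapseAbove hxP hyP hxD hyD hxiu hyju] at h𝒟
  obtain rfl : clC = closureIn 𝒟 := funext hclC
  subst h𝒟
  have hS : (range B ∪ {x, y}).Finite := toFinite _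
  refine ⟨empty_mem_collapseAbove (range_nonempty B), self_mem_collapseAbove,
    fun _ => sInter_mem_collapseAbove, fun _ => exists_insert_mem_collapseAbove,
    subset_eq_empty (closureIn_subset (empty_mem_collapseAbove (range_nonempty B)) subset_rfl) rfl,
    ?_, fun _ hZS _ => exists_mem_closureIn_collapseAbove_range subset_union_left hZS⟩
  intro u hu v _ huv X hXS hX hu_cl huX
  have hX_mem : X ∈ collapseAbove (range B ∪ {x, y}) (range B) :=
    hX ▸ closureIn_mem (fun _ => sInter_mem_collapseAbove) self_mem_collapseAbove hXS
  exact notMem_closureIn_of_exists_insert_mem hS (fun _ hZ => hZ.1)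
    (fun _ => exists_insert_mem_collapseAbove) hu huv hX_mem huX hu_cl

/-- for the construction of `C_n` (vertex set `D = range a` of an
`n`-simplex together with two interior points `x, y`, closed sets `𝒟` consisting of
the relatively convex subsets of `D ∪ {x, y}` plus the two extra sets
`{y} ∪ (D \ {aᵢ})` and `{x} ∪ (D \ {aⱼ})`):
`𝒟` contains `∅` and `D ∪ {x, y}`, is closed under (nonempty) arbitrary
intersections, and every `Z ∈ 𝒟` other than `D ∪ {x, y}` extends by one point inside
`𝒟`; consequently the associated closure operator `clC` is zero-closed and satisfies
the anti-exchange axiom (so `C_n` is a finite convex geometry), and `clC` satisfies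
the `n`-Carathéodory property. -/
theorem stmt_5 (n : ℕ) (hn : 1 ≤ n)
    (a : Fin (n + 1) → (Fin n → ℝ)) (ha : AffineIndependent ℝ a)
    (x y : Fin n → ℝ) (hxy : x ≠ y)
    (hxP : x ∈ interior (convexHull ℝ (Set.range a)))
    (hyP : y ∈ interior (convexHull ℝ (Set.range a)))
    (hxD : x ∉ Set.range a) (hyD : y ∉ Set.range a)
    (i j : Fin (n + 1))
    (hxi : x ∈ convexHull ℝ (insert y (Set.range a \ {a i})))
    (hxiu : ∀ i' : Fin (n + 1),
      x ∈ convexHull ℝ (insert y (Set.range a \ {a i'})) → i' = i)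
    (hyj : y ∈ convexHull ℝ (insert x (Set.range a \ {a j})))
    (hyju : ∀ j' : Fin (n + 1),
      y ∈ convexHull ℝ (insert x (Set.range a \ {a j'})) → j' = j)
    (𝒟 : Set (Set (Fin n → ℝ)))
    (h𝒟 : 𝒟 = {Z | Z ⊆ Set.range a ∪ {x, y} ∧
                convexHull ℝ Z ∩ (Set.range a ∪ {x, y}) = Z} ∪
              {insert y (Set.range a \ {a i}), insert x (Set.range a \ {a j})})
    (clC : Set (Fin n → ℝ) → Set (Fin n → ℝ))
    (hclC : ∀ Z : Set (Fin n → ℝ), clC Z = ⋂₀ {W | W ∈ 𝒟 ∧ Z ⊆ W}) :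
    (∅ ∈ 𝒟) ∧
    (Set.range a ∪ {x, y} ∈ 𝒟) ∧
    (∀ 𝒮 : Set (Set (Fin n → ℝ)), 𝒮 ⊆ 𝒟 → 𝒮.Nonempty → ⋂₀ 𝒮 ∈ 𝒟) ∧
    (∀ Z ∈ 𝒟, Z ≠ Set.range a ∪ {x, y} →
      ∃ p ∈ (Set.range a ∪ {x, y}) \ Z, insert p Z ∈ 𝒟) ∧
    (clC ∅ = ∅) ∧
    (∀ u ∈ Set.range a ∪ {x, y}, ∀ v ∈ Set.range a ∪ {x, y}, u ≠ v →
      ∀ X : Set (Fin n → ℝ), X ⊆ Set.range a ∪ {x, y} → clC X = X →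
        u ∈ clC (X ∪ {v}) → u ∉ X → v ∉ clC (X ∪ {u})) ∧
    (∀ S : Set (Fin n → ℝ), S ⊆ Set.range a ∪ {x, y} → ∀ z, z ∈ clC S →
      ∃ b : Fin (n + 1) → (Fin n → ℝ), (∀ k, b k ∈ S) ∧ z ∈ clC (Set.range b)) :=
  stmt_5_general n a ha x y hxP hyP hxD hyD i j hxiu hyju 𝒟 h𝒟 clC hclC
end

section
/- With the construction of C_n: the closure system C_n does not satisfy the n-Carousel Rule; specifically x, y ∈ cl_C(D), but for all a'₁, …, a'ₙ ∈ D one has x ∉ cl_C({y, a'₁, …, a'ₙ}) (and symmetrically y ∉ cl_C({x, a'₁, …, a'ₙ})). Consequently, for every A ⊆ ℝⁿ, C_n is not a sub-geometry of Co(ℝⁿ, A). -/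
open Set Finset Module

section Carousel

variable {𝕜 E : Type*} [Field 𝕜] [LinearOrder 𝕜] [IsStrictOrderedRing 𝕜]
  [AddCommGroup E] [Module 𝕜 E]

/-- `Caratheodory.mem_convexHull_erase`, keeping track of the erased point: the weights of `x`
slide along the affine relation `g` until the first one with `0 < g` vanishes. -/
lemma exists_pos_mem_convexHull_erase [DecidableEq E] {t : Finset E} {x : E}
    (hx : x ∈ convexHull 𝕜 (t : Set E)) {g : E → 𝕜} (hgsum : ∑ e ∈ t, g e = 0)
    (hgcombo : ∑ e ∈ t, g e • e = 0) (hgpos : ∃ e ∈ t, 0 < g e) :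
    ∃ z ∈ t, 0 < g z ∧ x ∈ convexHull 𝕜 (↑(t.erase z) : Set E) := by
  obtain ⟨f, hf0, hfsum, rfl⟩ := Finset.mem_convexHull'.1 hx
  obtain ⟨z, hz, hmin⟩ := {e ∈ t | 0 < g e}.exists_min_image (fun e => f e / g e) <| by
    obtain ⟨e, he, hge⟩ := hgpos
    exact ⟨e, mem_filter.2 ⟨he, hge⟩⟩
  rw [mem_filter] at hz
  set r := f z / g z
  have hr : 0 ≤ r := div_nonneg (hf0 z hz.1) hz.2.le
  have hkz : f z - r * g z = 0 := by simp [r, hz.2.ne']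
  refine ⟨z, hz.1, hz.2, Finset.mem_convexHull'.2 ⟨fun e => f e - r * g e, ?_, ?_, ?_⟩⟩
  · intro e he
    have he := mem_of_mem_erase he
    by_cases hge : 0 < g e
    · have := (le_div_iff₀ hge).1 (hmin e (mem_filter.2 ⟨he, hge⟩))
      linarith
    · linarith [hf0 e he, mul_nonpos_of_nonneg_of_nonpos hr (not_lt.1 hge)]
  · rw [sum_erase t hkz, sum_sub_distrib, ← mul_sum, hgsum, hfsum, mul_zero, sub_zero]
  · rw [sum_erase t (f := fun e => (f e - r * g e) • e) (by simp only [hkz, zero_smul])]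
    simp only [sub_smul, mul_smul, sum_sub_distrib, ← smul_sum, hgcombo, smul_zero, sub_zero]

lemma exists_ne_mem_convexHull_erase [DecidableEq E] {t : Finset E}
    (ht : ¬AffineIndependent 𝕜 ((↑) : t → E)) {x : E}
    (hx : x ∈ convexHull 𝕜 (t : Set E)) (y : E) :
    ∃ z ∈ t, z ≠ y ∧ x ∈ convexHull 𝕜 (↑(t.erase z) : Set E) := by
  obtain ⟨g, hgcombo, hgsum, hgne⟩ := exists_nontrivial_relation_sum_zero_of_not_affine_ind ht
  wlog hgy : g y ≤ 0 generalizing g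
  · exact this (-g) (by simp [hgcombo]) (by simp [hgsum])
      (by simpa only [Pi.neg_apply, neg_ne_zero] using hgne) (by simp only [Pi.neg_apply]; linarith)
  obtain ⟨z, hz, hgz, hxz⟩ := exists_pos_mem_convexHull_erase hx hgsum hgcombo
    (exists_pos_of_sum_zero_of_exists_nonzero g hgsum hgne)
  exact ⟨z, hz, fun hzy => (hgz.trans_le (hzy ▸ hgy)).false, hxz⟩

/-- The `n`-Carousel rule for convex hulls in an `n`-dimensional space. -/
theorem exists_card_le_finrank_mem_convexHull_insert [FiniteDimensional 𝕜 E] {S : Set E}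
    {x : E} (hx : x ∈ convexHull 𝕜 S) (y : E) :
    ∃ T : Finset E, ↑T ⊆ S ∧ T.card ≤ finrank 𝕜 E ∧
      x ∈ convexHull 𝕜 (insert y (T : Set E)) := by
  classical
  rw [convexHull_eq_union] at hx
  simp only [mem_iUnion] at hx
  obtain ⟨t, htS, ht, hxt⟩ := hx
  have hcard : t.card ≤ finrank 𝕜 E + 1 := by
    have := ht.card_le_finrank_succ
    rw [Fintype.card_coe] at this
    exact this.trans (Nat.add_le_add_right (Submodule.finrank_le _) 1)
  rcases hcard.lt_or_eq with hlt | heq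
  · exact ⟨t, htS, Nat.lt_succ_iff.1 hlt, convexHull_mono (subset_insert _ _) hxt⟩
  by_cases hyt : y ∈ t
  · refine ⟨t.erase y, (coe_subset.2 (erase_subset y t)).trans htS,
      by rw [card_erase_of_mem hyt]; omega, ?_⟩
    rwa [coe_erase, insert_sdiff_singleton, Set.insert_eq_of_mem (mem_coe.2 hyt)]
  have hdep : ¬AffineIndependent 𝕜 ((↑) : ↥(insert y t) → E) := fun hind => by
    have := hind.card_le_finrank_succ
    rw [Fintype.card_coe, card_insert_of_notMem hyt] at this
    have := Submodule.finrank_le (vectorSpan 𝕜 (range ((↑) : ↥(insert y t) → E)))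
    omega
  obtain ⟨z, hz, hzy, hxz⟩ := exists_ne_mem_convexHull_erase hdep
    (convexHull_mono (by rw [coe_insert]; exact subset_insert _ _) hxt) y
  have hzt : z ∈ t := (mem_insert.1 hz).resolve_left hzy
  refine ⟨t.erase z, (coe_subset.2 (erase_subset z t)).trans htS,
    by rw [card_erase_of_mem hzt]; omega, ?_⟩
  rwa [erase_insert_of_ne hzy.symm, coe_insert] at hxz

end Carousel

section Closure

variable {α : Type*}

def sInterClosure (𝒟 : Set (Set α)) : ClosureOperator (Set α) :=
  .mk₂ (fun Z => ⋂₀ {W | W ∈ 𝒟 ∧ Z ⊆ W}) (fun _ => subset_sInter fun _ hW => hW.2)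
    fun _ _ h => subset_sInter fun _ hW =>
      sInter_subset_of_mem ⟨hW.1, h.trans (sInter_subset_of_mem hW)⟩

variable {𝒟 : Set (Set α)} {Z W : Set α}

lemma mem_sInterClosure {p : α} :
    p ∈ sInterClosure 𝒟 Z ↔ ∀ W ∈ 𝒟, Z ⊆ W → p ∈ W := by
  simp [sInterClosure]

lemma sInterClosure_subset (hW : W ∈ 𝒟) (hZW : Z ⊆ W) : sInterClosure 𝒟 Z ⊆ W :=
  sInter_subset_of_mem ⟨hW, hZW⟩

lemma sInterClosure_eq_self (hW : W ∈ 𝒟) : sInterClosure 𝒟 W = W :=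
  (sInterClosure_subset hW subset_rfl).antisymm ((sInterClosure 𝒟).le_closure W)

end Closure

section ConvexTrace

variable {𝕜 E : Type*} [Semiring 𝕜] [PartialOrder 𝕜] [AddCommMonoid E] [Module 𝕜 E]

lemma convexHull_convexHull_inter_inter (Z B : Set E) :
    convexHull 𝕜 (convexHull 𝕜 Z ∩ B) ∩ B = convexHull 𝕜 Z ∩ B :=
  (inter_subset_inter_left B (convexHull_min inter_subset_left (convex_convexHull 𝕜 Z))).antisymm
    fun _ hp => ⟨subset_convexHull 𝕜 _ hp, hp.2⟩

lemma convexHull_union_convexHull_inter_inter (P : Set E) {Q B : Set E} (hQ : Q ⊆ B) :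
    convexHull 𝕜 (P ∪ convexHull 𝕜 Q ∩ B) ∩ B = convexHull 𝕜 (P ∪ Q) ∩ B := by
  refine (inter_subset_inter_left B ?_).antisymm (inter_subset_inter_left B (convexHull_mono ?_))
  · rw [← convexHull_convexHull_union_right P Q]
    exact convexHull_mono (union_subset_union_right P inter_subset_left)
  · exact union_subset_union_right P (subset_inter (subset_convexHull 𝕜 Q) hQ)

lemma image_closure_eq_convexHull_biUnion {α : Type*} {A : Set α}
    {c : ClosureOperator (Set α)} {A' : Set E} {φ : Set α → Set E}
    (hφ : ∀ X, X ⊆ A → c X = X → φ X ⊆ A' ∧ convexHull 𝕜 (φ X) ∩ A' = φ X)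
    (hsup : ∀ X Y, X ⊆ A → c X = X → Y ⊆ A → c Y = Y →
      φ (c (X ∪ Y)) = convexHull 𝕜 (φ X ∪ φ Y) ∩ A')
    (hA : c A = A) (hsing : ∀ p ∈ A, c {p} = {p}) {F : Finset α} (hF : F.Nonempty)
    (hFA : ↑F ⊆ A) : φ (c F) = convexHull 𝕜 (⋃ p ∈ F, φ {p}) ∩ A' := by
  classical
  induction hF using Finset.Nonempty.cons_induction with
  | singleton p =>
    have hpA : p ∈ A := hFA (mem_singleton_self p)
    rw [coe_singleton, hsing p hpA, set_biUnion_singleton,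
      (hφ {p} (singleton_subset_iff.2 hpA) (hsing p hpA)).2]
  | cons p F hpF hF ih =>
    rw [cons_eq_insert, coe_insert, insert_subset_iff] at *
    obtain ⟨hpA, hFA⟩ := hFA
    have hF' : ⋃ q ∈ F, φ {q} ⊆ A' := iUnion₂_subset fun q hq =>
      (hφ {q} (singleton_subset_iff.2 (hFA hq)) (hsing q (hFA hq))).1
    calc φ (c (insert p ↑F)) = φ (c ({p} ∪ c ↑F)) :=
          congrArg φ (c.closure_sup_closure_right {p} F).symm
      _ = convexHull 𝕜 (φ {p} ∪ φ (c ↑F)) ∩ A' :=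
          hsup _ _ (singleton_subset_iff.2 hpA) (hsing p hpA) (hA ▸ c.monotone hFA)
            (c.idempotent _)
      _ = convexHull 𝕜 (⋃ q ∈ insert p F, φ {q}) ∩ A' := by
          rw [ih hFA, convexHull_union_convexHull_inter_inter _ hF', set_biUnion_insert]

end ConvexTrace

/-- The `n`-Carousel rule of `Co(E, A')`, `n = dim E`, passes to its sub-geometries. -/
theorem IsSubGeometry.exists_card_le_finrank_mem_closure_insert {α 𝕜 E : Type*} [Field 𝕜]
    [LinearOrder 𝕜] [IsStrictOrderedRing 𝕜] [AddCommGroup E] [Module 𝕜 E]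
    [FiniteDimensional 𝕜 E] {A : Set α} {c : ClosureOperator (Set α)} {A' : Set E}
    (h : IsSubGeometry A c A' (fun Z => convexHull 𝕜 Z ∩ A')) (hA : c A = A)
    (h₀ : c ∅ = ∅) (hsing : ∀ p ∈ A, c {p} = {p}) {x y : α} (hx : x ∈ A) (hy : y ∈ A)
    {F : Finset α} (hFA : ↑F ⊆ A) (hxF : x ∈ c F) :
    ∃ G ⊆ F, G.card ≤ finrank 𝕜 E ∧ x ∈ c (insert y (G : Set α)) := by
  classical
  obtain ⟨φ, hφ, hinj, hinter, hsup⟩ := h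
  have hsubA : ∀ Z ⊆ A, c Z ⊆ A := fun Z hZ => hA ▸ c.monotone hZ
  have hmono : ∀ X Y, X ⊆ A → c X = X → Y ⊆ A → c Y = Y → X ⊆ Y → φ X ⊆ φ Y :=
    fun X Y hX hXc hY hYc hXY => by
      have := hinter X Y hX hXc hY hYc
      rw [inter_eq_left.2 hXY] at this
      exact inter_eq_left.1 this.symm
  have hφ₀ : ∀ p ∈ A, φ ∅ ⊂ φ {p} := fun p hp =>
    (hmono _ _ (empty_subset A) h₀ (singleton_subset_iff.2 hp) (hsing p hp) (empty_subset _))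
      |>.ssubset_of_ne fun he => singleton_ne_empty p
        (hinj _ _ (empty_subset A) h₀ (singleton_subset_iff.2 hp) (hsing p hp) he).symm
  obtain ⟨x', hx', hx'₀⟩ := exists_of_ssubset (hφ₀ x hx)
  obtain ⟨y', hy'⟩ := nonempty_of_ssubset' (hφ₀ y hy)
  have hFne : F.Nonempty := Finset.nonempty_iff_ne_empty.2 fun hF => by simp [hF, h₀] at hxF
  have hx'F : x' ∈ convexHull 𝕜 (⋃ p ∈ F, φ {p}) := by
    have := hmono {x} (c F) (singleton_subset_iff.2 hx) (hsing x hx) (hsubA _ hFA)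
      (c.idempotent _) (singleton_subset_iff.2 hxF) hx'
    rw [image_closure_eq_convexHull_biUnion hφ hsup hA hsing hFne hFA] at this
    exact this.1
  obtain ⟨T, hTF, hTcard, hx'T⟩ := exists_card_le_finrank_mem_convexHull_insert hx'F y'
  have hT : ∀ t ∈ T, ∃ p ∈ F, t ∈ φ {p} := fun t ht => by simpa using hTF ht
  have : Nonempty α := ⟨x⟩
  choose! q hqF hq using hT
  refine ⟨T.image q, image_subset_iff.2 hqF, card_image_le.trans hTcard, ?_⟩
  -- otherwise `x' ∈ φ {x} ∩ φ (c (insert y G)) = φ ({x} ∩ c (insert y G)) = φ ∅`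
  by_contra hxG
  have hGA : insert y (↑(T.image q) : Set α) ⊆ A :=
    insert_subset hy fun p hp => hFA (image_subset_iff.2 hqF (mem_coe.1 hp))
  have hx'G : x' ∈ φ (c (insert y ↑(T.image q))) := by
    rw [← coe_insert, image_closure_eq_convexHull_biUnion hφ hsup hA hsing
      (insert_nonempty _ _) (by rwa [coe_insert])]
    refine ⟨convexHull_mono (insert_subset ?_ fun t ht => ?_) hx'T,
      (hφ _ (singleton_subset_iff.2 hx) (hsing x hx)).1 hx'⟩
    · exact mem_biUnion (mem_insert_self y _) hy'
    · exact mem_biUnion (mem_insert_of_mem (mem_image_of_mem q ht)) (hq t ht)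
  have hdisj := hinter {x} _ (singleton_subset_iff.2 hx) (hsing x hx) (hsubA _ hGA)
    (c.idempotent _)
  rw [singleton_inter_eq_empty.2 hxG] at hdisj
  exact hx'₀ (hdisj ▸ ⟨hx', hx'G⟩)
section Construction

variable {ι 𝕜 E : Type*} {a : ι → E}

lemma convexHull_inter_eq_of_range_subset [Semiring 𝕜] [PartialOrder 𝕜] [AddCommMonoid E]
    [Module 𝕜 E] {A W : Set E} {x y : E} {i j : ι} (hxD : x ∉ range a) (hyD : y ∉ range a)
    (hW : W ∈ {Z | Z ⊆ A ∧ convexHull 𝕜 Z ∩ A = Z} ∪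
      {insert y (range a \ {a i}), insert x (range a \ {a j})})
    (hDW : range a ⊆ W) : convexHull 𝕜 W ∩ A = W := by
  have hmiss : ∀ {z : E} (k : ι), z ∉ range a → ¬range a ⊆ insert z (range a \ {a k}) :=
    fun k hz h => (h (mem_range_self k)).elim (fun h => hz ⟨k, h⟩) fun h => h.2 rfl
  rcases hW with ⟨-, hW⟩ | rfl | rfl
  · exact hW
  · exact absurd hDW (hmiss i hyD)
  · exact absurd hDW (hmiss j hxD)

lemma notMem_sInterClosure_insert_of_card_lt [Fintype ι] [Field 𝕜] [LinearOrder 𝕜]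
    [AddCommGroup E] [Module 𝕜 E] (ha : Function.Injective a) {A : Set E}
    {𝒟 : Set (Set E)} {x y : E} {i : ι} (hxy : x ≠ y) (hxD : x ∉ range a)
    (hDA : range a ⊆ A) (hyA : y ∈ A)
    (hhull : ∀ k, convexHull 𝕜 (insert y (range a \ {a k})) ∩ A ∈ 𝒟)
    (hi : insert y (range a \ {a i}) ∈ 𝒟)
    (hxi : ∀ k, x ∈ convexHull 𝕜 (insert y (range a \ {a k})) → k = i)
    {G : Finset E} (hG : ↑G ⊆ range a) (hcard : G.card < Fintype.card ι) :
    x ∉ sInterClosure 𝒟 (insert y ↑G) := by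
  classical
  intro hx
  -- `G` misses a vertex `a k`; the closed set `conv ({y} ∪ D \ {a k}) ∩ A` forces `k = i`
  obtain ⟨k, hk⟩ : ∃ k, a k ∉ G := by
    by_contra! h
    have := card_le_card (s := Finset.univ.image a) fun p hp => by
      obtain ⟨k, -, rfl⟩ := mem_image.1 hp
      exact h k
    rw [card_image_of_injective _ ha, card_univ] at this
    omega
  have hGk : insert y ↑G ⊆ insert y (range a \ {a k}) :=
    insert_subset_insert fun p hp => ⟨hG hp, by rintro rfl; exact hk hp⟩
  obtain rfl : k = i := hxi k <| (sInterClosure_subset (hhull k) (hGk.trans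
    (subset_inter (subset_convexHull 𝕜 _) (insert_subset hyA (sdiff_subset.trans hDA)))) hx).1
  rcases sInterClosure_subset hi hGk hx with hxy' | hxD'
  · exact hxy hxy'
  · exact hxD hxD'.1

end Construction

theorem stmt_6_general (n : ℕ)
    (a : Fin (n + 1) → (Fin n → ℝ)) (ha : AffineIndependent ℝ a)
    (x y : Fin n → ℝ) (hxy : x ≠ y)
    (hxP : x ∈ interior (convexHull ℝ (Set.range a)))
    (hyP : y ∈ interior (convexHull ℝ (Set.range a)))
    (hxD : x ∉ Set.range a) (hyD : y ∉ Set.range a)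
    (i j : Fin (n + 1))
    (hxiu : ∀ i' : Fin (n + 1),
      x ∈ convexHull ℝ (insert y (Set.range a \ {a i'})) → i' = i)
    (hyju : ∀ j' : Fin (n + 1),
      y ∈ convexHull ℝ (insert x (Set.range a \ {a j'})) → j' = j)
    (𝒟 : Set (Set (Fin n → ℝ)))
    (h𝒟 : 𝒟 = {Z | Z ⊆ Set.range a ∪ {x, y} ∧
                convexHull ℝ Z ∩ (Set.range a ∪ {x, y}) = Z} ∪
              {insert y (Set.range a \ {a i}), insert x (Set.range a \ {a j})})
    (clC : Set (Fin n → ℝ) → Set (Fin n → ℝ))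
    (hclC : ∀ Z : Set (Fin n → ℝ), clC Z = ⋂₀ {W | W ∈ 𝒟 ∧ Z ⊆ W}) :
    (x ∈ clC (Set.range a)) ∧
    (y ∈ clC (Set.range a)) ∧
    (∀ a' : Fin n → (Fin n → ℝ), (∀ k, a' k ∈ Set.range a) →
      x ∉ clC (insert y (Set.range a'))) ∧
    (∀ a' : Fin n → (Fin n → ℝ), (∀ k, a' k ∈ Set.range a) →
      y ∉ clC (insert x (Set.range a'))) ∧
    (∀ A' : Set (Fin n → ℝ),
      ¬ IsSubGeometry (Set.range a ∪ {x, y}) clC A'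
          (fun Z => convexHull ℝ Z ∩ A')) := by
  classical
  obtain rfl : clC = sInterClosure 𝒟 := funext hclC
  set A := range a ∪ {x, y}
  have hxA : x ∈ A := by simp [A]
  have hyA : y ∈ A := by simp [A]
  have hhull : ∀ Z, convexHull ℝ Z ∩ A ∈ 𝒟 := fun Z =>
    h𝒟 ▸ Or.inl ⟨inter_subset_right, convexHull_convexHull_inter_inter Z A⟩
  have hclosed : ∀ Z, convexHull ℝ Z ∩ A = Z → sInterClosure 𝒟 Z = Z := fun Z hZ =>
    sInterClosure_eq_self (hZ ▸ hhull Z)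
  have hD : ∀ p ∈ interior (convexHull ℝ (range a)), p ∈ A →
      p ∈ sInterClosure 𝒟 (range a) :=
    fun p hp hpA => mem_sInterClosure.2 fun W hW hDW =>
      convexHull_inter_eq_of_range_subset hxD hyD (h𝒟 ▸ hW) hDW ▸
        ⟨convexHull_mono hDW (interior_subset hp), hpA⟩
  have hx : ∀ G : Finset (Fin n → ℝ), ↑G ⊆ range a → G.card ≤ n →
      x ∉ sInterClosure 𝒟 (insert y ↑G) := fun G hG hcard =>
    notMem_sInterClosure_insert_of_card_lt ha.injective hxy hxD subset_union_left hyA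
      (fun _ => hhull _) (h𝒟 ▸ Or.inr (mem_insert _ _)) hxiu hG (by simpa using hcard)
  have hy : ∀ G : Finset (Fin n → ℝ), ↑G ⊆ range a → G.card ≤ n →
      y ∉ sInterClosure 𝒟 (insert x ↑G) := fun G hG hcard =>
    notMem_sInterClosure_insert_of_card_lt ha.injective hxy.symm hyD subset_union_left hxA
      (fun _ => hhull _) (h𝒟 ▸ Or.inr (mem_insert_of_mem _ rfl)) hyju hG (by simpa using hcard)
  have hDfin : (↑(Finset.univ.image a) : Set (Fin n → ℝ)) = range a := by simp
  refine ⟨hD x hxP hxA, hD y hyP hyA, fun a' ha' => ?_, fun a' ha' => ?_, fun A' hsub => ?_⟩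
  · simpa using hx (Finset.univ.image a') (by simpa [range_subset_iff] using ha')
      (card_image_le.trans (by simp))
  · simpa using hy (Finset.univ.image a') (by simpa [range_subset_iff] using ha')
      (card_image_le.trans (by simp))
  · obtain ⟨G, hGD, hGcard, hxG⟩ := hsub.exists_card_le_finrank_mem_closure_insert
      (hclosed A (inter_eq_right.2 (subset_convexHull ℝ A))) (hclosed ∅ (by simp))
      (fun p hp => hclosed {p} (by simpa using hp)) hxA hyA (F := Finset.univ.image a)
      (by rw [hDfin]; exact subset_union_left) (by rw [hDfin]; exact hD x hxP hxA)
    exact hx G (by simpa using coe_subset.2 hGD) (by simpa using hGcard) hxG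

/-- the closure system `C_n` fails the `n`-Carousel Rule: `x, y` lie in
`clC D`, but `x` is not in the closure of `y` together with any `n` points of `D`
(and symmetrically for `y`). Consequently `C_n` is not a sub-geometry of
`Co(ℝⁿ, A')` for any `A' ⊆ ℝⁿ`. -/
theorem stmt_6 (n : ℕ) (hn : 1 ≤ n)
    (a : Fin (n + 1) → (Fin n → ℝ)) (ha : AffineIndependent ℝ a)
    (x y : Fin n → ℝ) (hxy : x ≠ y)
    (hxP : x ∈ interior (convexHull ℝ (Set.range a)))
    (hyP : y ∈ interior (convexHull ℝ (Set.range a)))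
    (hxD : x ∉ Set.range a) (hyD : y ∉ Set.range a)
    (i j : Fin (n + 1))
    (hxi : x ∈ convexHull ℝ (insert y (Set.range a \ {a i})))
    (hxiu : ∀ i' : Fin (n + 1),
      x ∈ convexHull ℝ (insert y (Set.range a \ {a i'})) → i' = i)
    (hyj : y ∈ convexHull ℝ (insert x (Set.range a \ {a j})))
    (hyju : ∀ j' : Fin (n + 1),
      y ∈ convexHull ℝ (insert x (Set.range a \ {a j'})) → j' = j)
    (𝒟 : Set (Set (Fin n → ℝ)))
    (h𝒟 : 𝒟 = {Z | Z ⊆ Set.range a ∪ {x, y} ∧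
                convexHull ℝ Z ∩ (Set.range a ∪ {x, y}) = Z} ∪
              {insert y (Set.range a \ {a i}), insert x (Set.range a \ {a j})})
    (clC : Set (Fin n → ℝ) → Set (Fin n → ℝ))
    (hclC : ∀ Z : Set (Fin n → ℝ), clC Z = ⋂₀ {W | W ∈ 𝒟 ∧ Z ⊆ W}) :
    (x ∈ clC (Set.range a)) ∧
    (y ∈ clC (Set.range a)) ∧
    (∀ a' : Fin n → (Fin n → ℝ), (∀ k, a' k ∈ Set.range a) →
      x ∉ clC (insert y (Set.range a'))) ∧
    (∀ a' : Fin n → (Fin n → ℝ), (∀ k, a' k ∈ Set.range a) →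
      y ∉ clC (insert x (Set.range a'))) ∧
    (∀ A' : Set (Fin n → ℝ),
      ¬ IsSubGeometry (Set.range a ∪ {x, y}) clC A'
          (fun Z => convexHull ℝ Z ∩ A')) :=
  stmt_6_general n a ha x y hxy hxP hyP hxD hyD i j hxiu hyju 𝒟 h𝒟 clC hclC
end

section
/- With the construction of C_n and the construction of K: C_n is a sub-geometry of Co(ℝ^{n+1}, K). Indeed, the map φ determined by φ(∅) = ∅, φ({aᵢ}) = {cᵢ, bᵢ} for i = 0, …, n, φ({x}) = {u}, φ({y}) = {v}, and φ(S) = ⋃_{s ∈ S} φ({s}) for every cl_C-closed set S, is a well-defined injective map from the closed sets of C_n to the closed sets of Co(ℝ^{n+1}, K) that preserves intersections (φ(X ∩ Y) = φ(X) ∩ φ(Y)) and closures of unions (φ(cl_C(X ∪ Y)) = τ(φ(X) ∪ φ(Y)), where τ(Z) = convexHull(Z) ∩ K). -/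
/-!
Every subset of `D ∪ {x, y}` that misses a vertex is `cl_C`-closed: a vertex is never in the hull of
other points of the simplex, and if `x` (say) is in the hull of such a set without belonging to it,
the set must contain `y` and every vertex but one, and uniqueness of `i` forces it to be
`{y} ∪ (D \ {aᵢ})`. A set containing `D` has `x` and `y` in its hull, so its closure is everything.

In `K` the vertices `aₖ` become the vertical edges `cₖbₖ` of a prism, and `x`, `y` become the points
`u`, `v` stacked above each other inside the bottom and top faces. Testing against the barycentric
coordinates of the base and against the height shows the same dichotomy for `φ Z`: its hull meets
`K` only in `φ Z`, unless `Z ⊇ D`, in which case it contains all of `K`.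
-/

open Set

section Convexity

variable {E : Type*} [AddCommGroup E] [Module ℝ E]

theorem AffineMap.exists_le_of_mem_convexHull (f : E →ᵃ[ℝ] ℝ) {S : Set E} {z : E}
    (hz : z ∈ convexHull ℝ S) : ∃ p ∈ S, f z ≤ f p :=
  ConvexOn.exists_ge_of_mem_convexHull (s := univ)
    ⟨convex_univ, fun _ _ _ _ _ _ _ _ hab => (Convex.combo_affine_apply hab).le⟩
    (subset_univ S) hz

variable {ι : Type*} (β : AffineBasis ι ℝ E)

theorem AffineBasis.coord_lt_one_of_forall_pos [Fintype ι] [Nontrivial ι] {p : E}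
    (hp : ∀ k, 0 < β.coord k p) (m : ι) : β.coord m p < 1 := by
  classical
  obtain ⟨m', hm'⟩ := exists_ne m
  have hpair : β.coord m p + β.coord m' p ≤ ∑ k, β.coord k p := by
    rw [← Finset.sum_pair (f := fun k => β.coord k p) hm'.symm]
    exact Finset.sum_le_sum_of_subset_of_nonneg (Finset.subset_univ _) fun k _ _ => (hp k).le
  linarith [hp m', β.sum_coord_apply_eq_one p]

theorem AffineBasis.mem_of_apply_mem_convexHull {Z : Set E} {m : ι}
    (hZ : ∀ p ∈ Z, p ∉ range β → β.coord m p < 1) (hm : β m ∈ convexHull ℝ Z) : β m ∈ Z := by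
  classical
  obtain ⟨p, hpZ, hle⟩ := (β.coord m).exists_le_of_mem_convexHull hm
  rw [β.coord_apply_eq] at hle
  by_cases hp : p ∈ range β
  · obtain ⟨k, rfl⟩ := hp
    rw [β.coord_apply] at hle
    split_ifs at hle with hmk
    · rwa [hmk]
    · linarith
  · linarith [hZ p hpZ hp]

end Convexity

theorem intrinsicInterior_eq_interior_of_affineSpan_eq_top {V : Type*} [NormedAddCommGroup V]
    [NormedSpace ℝ V] {s : Set V} (h : affineSpan ℝ s = ⊤) :
    intrinsicInterior ℝ s = interior s := by
  refine Subset.antisymm ?_ interior_subset_intrinsicInterior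
  rintro _ ⟨z, hz, rfl⟩
  have hopen : IsOpen (affineSpan ℝ s : Set V) := by
    rw [h, AffineSubspace.top_coe]
    exact isOpen_univ
  exact interior_mono (image_preimage_subset _ _)
    (hopen.isOpenMap_subtype_val.image_interior_subset _ (mem_image_of_mem _ hz))

namespace Cn

variable {ι E : Type*} [AddCommGroup E] [Module ℝ E] (β : AffineBasis ι ℝ E) (x y : E) (i j : ι)

def closedSets : Set (Set E) :=
  {Z | Z ⊆ range β ∪ {x, y} ∧ convexHull ℝ Z ∩ (range β ∪ {x, y}) = Z} ∪
    {insert y (range β \ {β i}), insert x (range β \ {β j})}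

variable {β x y i j} {Z W : Set E}

theorem eq_insert_of_mem_convexHull (hZ : Z ⊆ range β ∪ {x, y}) (hx : ∀ m, 0 < β.coord m x)
    (hxi : ∀ i', x ∈ convexHull ℝ (insert y (range β \ {β i'})) → i' = i)
    (hxZ : x ∈ convexHull ℝ Z) (hxZ' : x ∉ Z) (hβZ : ¬ range β ⊆ Z) :
    Z = insert y (range β \ {β i}) := by
  have hmissing : ∀ m, β m ∉ Z → m = i := by
    refine fun m hm => hxi m (convexHull_mono (fun p hp => ?_) hxZ)
    rcases hZ hp with ⟨k, rfl⟩ | rfl | rfl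
    · exact Or.inr ⟨⟨k, rfl⟩, fun h => hm (h ▸ hp)⟩
    · exact absurd hp hxZ'
    · exact Or.inl rfl
  obtain ⟨_, ⟨m₀, rfl⟩, hm₀⟩ := not_subset.1 hβZ
  obtain rfl := hmissing m₀ hm₀
  -- otherwise `Z` lies in the facet opposite `β m₀`, where the `m₀`-th coordinate vanishes
  have hyZ : y ∈ Z := by
    by_contra hyZ
    obtain ⟨p, hpZ, hle⟩ := (β.coord m₀).exists_le_of_mem_convexHull hxZ
    rcases hZ hpZ with ⟨k, rfl⟩ | rfl | rfl
    · classical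
      rw [β.coord_apply, if_neg (by rintro rfl; exact hm₀ hpZ)] at hle
      linarith [hx m₀]
    · exact hxZ' hpZ
    · exact hyZ hpZ
  ext p
  constructor
  · intro hp
    rcases hZ hp with ⟨k, rfl⟩ | rfl | rfl
    · exact Or.inr ⟨⟨k, rfl⟩, fun h => hm₀ (h ▸ hp)⟩
    · exact absurd hp hxZ'
    · exact Or.inl rfl
  · rintro (rfl | ⟨⟨k, rfl⟩, hk⟩)
    · exact hyZ
    · by_contra hkZ
      exact hk (congrArg β (hmissing k hkZ))

theorem mem_closedSets_of_not_range_subset [Fintype ι] [Nontrivial ι]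
    (hx : ∀ m, 0 < β.coord m x) (hy : ∀ m, 0 < β.coord m y)
    (hxi : ∀ i', x ∈ convexHull ℝ (insert y (range β \ {β i'})) → i' = i)
    (hyj : ∀ j', y ∈ convexHull ℝ (insert x (range β \ {β j'})) → j' = j)
    (hZ : Z ⊆ range β ∪ {x, y}) (hβZ : ¬ range β ⊆ Z) : Z ∈ closedSets β x y i j := by
  by_cases hcl : convexHull ℝ Z ∩ (range β ∪ {x, y}) = Z
  · exact Or.inl ⟨hZ, hcl⟩
  obtain ⟨p, ⟨hpZ, hpG⟩, hp⟩ : ∃ p ∈ convexHull ℝ Z ∩ (range β ∪ {x, y}), p ∉ Z :=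
    not_subset.1 fun h => hcl (h.antisymm (subset_inter (subset_convexHull ℝ Z) hZ))
  refine Or.inr ?_
  rcases hpG with ⟨m, rfl⟩ | hpx | hpy
  · refine absurd (β.mem_of_apply_mem_convexHull (fun q hq hqβ => ?_) hpZ) hp
    rcases hZ hq with hq' | rfl | rfl
    · exact absurd hq' hqβ
    · exact β.coord_lt_one_of_forall_pos hx m
    · exact β.coord_lt_one_of_forall_pos hy m
  · rw [mem_singleton_iff.1 hpx] at hpZ hp
    exact Or.inl (eq_insert_of_mem_convexHull hZ hx hxi hpZ hp hβZ)
  · rw [mem_singleton_iff.1 hpy] at hpZ hp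
    exact Or.inr (eq_insert_of_mem_convexHull (pair_comm x y ▸ hZ) hy hyj hpZ hp hβZ)

theorem range_union_pair_mem_closedSets : range β ∪ {x, y} ∈ closedSets β x y i j :=
  Or.inl ⟨subset_rfl, inter_eq_right.2 (subset_convexHull ℝ _)⟩

theorem eq_range_union_pair_of_range_subset (hx : ∀ m, 0 < β.coord m x)
    (hy : ∀ m, 0 < β.coord m y) (hxβ : x ∉ range β) (hyβ : y ∉ range β)
    (hW : W ∈ closedSets β x y i j) (hβW : range β ⊆ W) : W = range β ∪ {x, y} := by
  have hsimplex : ∀ p, (∀ m, 0 < β.coord m p) → p ∈ convexHull ℝ W := fun p hp =>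
    convexHull_mono hβW (β.convexHull_eq_nonneg_coord ▸ fun m => (hp m).le)
  rcases hW with ⟨hWG, hWcl⟩ | rfl | rfl
  · refine hWG.antisymm (union_subset hβW (pair_subset ?_ ?_)) <;> rw [← hWcl]
    · exact ⟨hsimplex x hx, Or.inr (Or.inl rfl)⟩
    · exact ⟨hsimplex y hy, Or.inr (Or.inr rfl)⟩
  · rcases hβW ⟨i, rfl⟩ with h | h
    exacts [absurd ⟨i, h⟩ hyβ, absurd rfl h.2]
  · rcases hβW ⟨j, rfl⟩ with h | h
    exacts [absurd ⟨j, h⟩ hxβ, absurd rfl h.2]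

open Classical in
theorem sInter_closedSets [Fintype ι] [Nontrivial ι]
    (hx : ∀ m, 0 < β.coord m x) (hy : ∀ m, 0 < β.coord m y)
    (hxβ : x ∉ range β) (hyβ : y ∉ range β)
    (hxi : ∀ i', x ∈ convexHull ℝ (insert y (range β \ {β i'})) → i' = i)
    (hyj : ∀ j', y ∈ convexHull ℝ (insert x (range β \ {β j'})) → j' = j)
    (hZ : Z ⊆ range β ∪ {x, y}) :
    ⋂₀ {W | W ∈ closedSets β x y i j ∧ Z ⊆ W} = if range β ⊆ Z then range β ∪ {x, y} else Z := by
  split_ifs with hβZ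
  · have hunique : {W | W ∈ closedSets β x y i j ∧ Z ⊆ W} = {range β ∪ {x, y}} := by
      ext W
      constructor
      · rintro ⟨hW, hZW⟩
        exact eq_range_union_pair_of_range_subset hx hy hxβ hyβ hW (hβZ.trans hZW)
      · rintro rfl
        exact ⟨range_union_pair_mem_closedSets, hZ⟩
    rw [hunique, sInter_singleton]
  · refine (sInter_subset_of_mem ?_).antisymm (subset_sInter fun W hW => hW.2)
    exact ⟨mem_closedSets_of_not_range_subset hx hy hxi hyj hZ hβZ, subset_rfl⟩

end Cn

section PrismLift

variable {ι E F : Type*} (a : ι → E) (x y : E) (c b : ι → F) (u v : F)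

def prismFiber (s : E) : Set F :=
  {p | (∃ k, s = a k ∧ (p = c k ∨ p = b k)) ∨ (s = x ∧ p = u) ∨ (s = y ∧ p = v)}

def prismLift (Z : Set E) : Set F :=
  ⋃ s ∈ Z, prismFiber a x y c b u v s

variable {a x y c b u v} {X Y Z : Set E} {p : F}

@[simp]
theorem mem_prismLift : p ∈ prismLift a x y c b u v Z ↔
    (∃ k, a k ∈ Z ∧ (p = c k ∨ p = b k)) ∨ (x ∈ Z ∧ p = u) ∨ (y ∈ Z ∧ p = v) := by
  simp only [prismLift, prismFiber, mem_iUnion₂, mem_ofPred_eq, exists_prop]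
  aesop

theorem prismLift_swap : prismLift a y x b c v u Z = prismLift a x y c b u v Z := by
  ext p
  simp only [mem_prismLift, or_comm (a := p = b _), or_comm (a := y ∈ Z ∧ p = v)]

theorem prismLift_singleton (s : E) :
    prismLift a x y c b u v {s} = prismFiber a x y c b u v s :=
  biUnion_singleton _ _

theorem prismLift_union :
    prismLift a x y c b u v (X ∪ Y) = prismLift a x y c b u v X ∪ prismLift a x y c b u v Y :=
  biUnion_union _ _ _

theorem prismLift_mono (h : X ⊆ Y) : prismLift a x y c b u v X ⊆ prismLift a x y c b u v Y :=
  biUnion_subset_biUnion_left h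

theorem prismLift_subset : prismLift a x y c b u v Z ⊆ range c ∪ range b ∪ {u, v} := by
  intro p hp
  rcases mem_prismLift.1 hp with ⟨k, -, rfl | rfl⟩ | ⟨-, rfl⟩ | ⟨-, rfl⟩
  exacts [Or.inl (Or.inl ⟨k, rfl⟩), Or.inl (Or.inr ⟨k, rfl⟩), Or.inr (Or.inl rfl),
    Or.inr (Or.inr rfl)]

theorem prismLift_range_union_pair :
    prismLift a x y c b u v (range a ∪ {x, y}) = range c ∪ range b ∪ {u, v} := by
  refine prismLift_subset.antisymm ?_
  rintro p ((⟨k, rfl⟩ | ⟨k, rfl⟩) | rfl | rfl)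
  exacts [mem_prismLift.2 (Or.inl ⟨k, Or.inl ⟨k, rfl⟩, Or.inl rfl⟩),
    mem_prismLift.2 (Or.inl ⟨k, Or.inl ⟨k, rfl⟩, Or.inr rfl⟩),
    mem_prismLift.2 (Or.inr (Or.inl ⟨Or.inr (Or.inl rfl), rfl⟩)),
    mem_prismLift.2 (Or.inr (Or.inr ⟨Or.inr (Or.inr rfl), rfl⟩))]

theorem prismLift_singleton_apply (ha : Function.Injective a) (hx : x ∉ range a)
    (hy : y ∉ range a) (k : ι) : prismLift a x y c b u v {a k} = {c k, b k} := by
  ext p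
  simp only [mem_prismLift, mem_singleton_iff, ha.eq_iff, mem_insert_iff]
  constructor
  · rintro (⟨k, rfl, h⟩ | ⟨rfl, -⟩ | ⟨rfl, -⟩)
    exacts [h, absurd ⟨k, rfl⟩ hx, absurd ⟨k, rfl⟩ hy]
  · exact fun h => Or.inl ⟨k, rfl, h⟩

theorem prismLift_singleton_left (hx : x ∉ range a) (hxy : x ≠ y) :
    prismLift a x y c b u v {x} = {u} := by
  ext p
  simp only [mem_prismLift, mem_singleton_iff, true_and]
  constructor
  · rintro (⟨k, hk, -⟩ | h | ⟨h, -⟩)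
    exacts [absurd ⟨k, hk⟩ hx, h, absurd h.symm hxy]
  · exact fun h => Or.inr (Or.inl h)

theorem prismLift_singleton_right (hy : y ∉ range a) (hxy : x ≠ y) :
    prismLift a x y c b u v {y} = {v} := by
  rw [← prismLift_swap]
  exact prismLift_singleton_left hy hxy.symm

end PrismLift

section PrismFrame

variable {ι E F : Type*} [DecidableEq ι] [AddCommGroup F] [Module ℝ F]

/-- Affine functions certifying that `c`, `b`, `u`, `v` span a prism over a simplex: the `g m` are
barycentric coordinates of the base, `t` is the height, `u` lies inside the bottom face and `v`
above it in the top face. -/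
structure IsPrismFrame (c b : ι → F) (u v : F) (g : ι → F →ᵃ[ℝ] ℝ) (t : F →ᵃ[ℝ] ℝ) : Prop where
  g_c : ∀ m k, g m (c k) = if m = k then 1 else 0
  g_b : ∀ m k, g m (b k) = if m = k then 1 else 0
  g_v : ∀ m, g m v = g m u
  g_u_pos : ∀ m, 0 < g m u
  g_u_lt_one : ∀ m, g m u < 1
  t_c : ∀ k, t (c k) = 0
  t_b : ∀ k, t (b k) = 1
  t_u : t u = 0
  t_v : t v = 1
  u_mem : u ∈ convexHull ℝ (range c)
  v_mem : v ∈ convexHull ℝ (range b)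

namespace IsPrismFrame

variable {a : ι → E} {x y : E} {c b : ι → F} {u v : F} {g : ι → F →ᵃ[ℝ] ℝ} {t : F →ᵃ[ℝ] ℝ}
  {X Y Z : Set E} {m : ι} {p : F}

theorem swap (P : IsPrismFrame c b u v g t) :
    IsPrismFrame b c v u g (AffineMap.const ℝ F 1 - t) where
  g_c := P.g_b
  g_b := P.g_c
  g_v m := (P.g_v m).symm
  g_u_pos m := P.g_v m ▸ P.g_u_pos m
  g_u_lt_one m := P.g_v m ▸ P.g_u_lt_one m
  t_c k := by simp [P.t_b]
  t_b k := by simp [P.t_c]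
  t_u := by simp [P.t_v]
  t_v := by simp [P.t_u]
  u_mem := P.v_mem
  v_mem := P.u_mem

variable (P : IsPrismFrame c b u v g t)
include P

theorem c_mem_prismLift_iff : c m ∈ prismLift a x y c b u v Z ↔ a m ∈ Z := by
  refine ⟨fun h => ?_, fun h => mem_prismLift.2 (Or.inl ⟨m, h, Or.inl rfl⟩)⟩
  rcases mem_prismLift.1 h with ⟨k, hk, h | h⟩ | ⟨-, h⟩ | ⟨-, h⟩
  · have hg := congrArg (g k) h
    rw [P.g_c, P.g_c, if_pos rfl] at hg
    split_ifs at hg with hkm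
    · rwa [← hkm]
    · exact absurd hg zero_ne_one
  · have ht := congrArg t h
    rw [P.t_c, P.t_b] at ht
    exact absurd ht zero_ne_one
  · have hg := congrArg (g m) h
    rw [P.g_c, if_pos rfl] at hg
    exact absurd hg (P.g_u_lt_one m).ne'
  · have ht := congrArg t h
    rw [P.t_c, P.t_v] at ht
    exact absurd ht zero_ne_one

theorem u_mem_prismLift_iff : u ∈ prismLift a x y c b u v Z ↔ x ∈ Z := by
  refine ⟨fun h => ?_, fun h => mem_prismLift.2 (Or.inr (Or.inl ⟨h, rfl⟩))⟩
  rcases mem_prismLift.1 h with ⟨k, -, h | h⟩ | ⟨hx, -⟩ | ⟨-, h⟩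
  · have hg := congrArg (g k) h
    rw [P.g_c, if_pos rfl] at hg
    exact absurd hg (P.g_u_lt_one k).ne
  · have ht := congrArg t h
    rw [P.t_u, P.t_b] at ht
    exact absurd ht zero_ne_one
  · exact hx
  · have ht := congrArg t h
    rw [P.t_u, P.t_v] at ht
    exact absurd ht zero_ne_one

theorem b_mem_prismLift_iff : b m ∈ prismLift a x y c b u v Z ↔ a m ∈ Z :=
  prismLift_swap (a := a) ▸ P.swap.c_mem_prismLift_iff

theorem v_mem_prismLift_iff : v ∈ prismLift a x y c b u v Z ↔ y ∈ Z :=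
  prismLift_swap (a := a) ▸ P.swap.u_mem_prismLift_iff

theorem exists_forall_mem_prismLift_iff (hp : p ∈ range c ∪ range b ∪ {u, v}) :
    ∃ s, ∀ Z, p ∈ prismLift a x y c b u v Z ↔ s ∈ Z := by
  rcases hp with (⟨k, rfl⟩ | ⟨k, rfl⟩) | rfl | rfl
  exacts [⟨a k, fun _ => P.c_mem_prismLift_iff⟩, ⟨a k, fun _ => P.b_mem_prismLift_iff⟩,
    ⟨x, fun _ => P.u_mem_prismLift_iff⟩, ⟨y, fun _ => P.v_mem_prismLift_iff⟩]

theorem prismLift_inter :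
    prismLift a x y c b u v (X ∩ Y) = prismLift a x y c b u v X ∩ prismLift a x y c b u v Y := by
  refine (subset_inter (prismLift_mono inter_subset_left)
    (prismLift_mono inter_subset_right)).antisymm ?_
  rintro p ⟨hX, hY⟩
  obtain ⟨s, hs⟩ := P.exists_forall_mem_prismLift_iff (prismLift_subset hX)
  exact (hs _).2 ⟨(hs X).1 hX, (hs Y).1 hY⟩

theorem prismLift_injOn (hX : X ⊆ range a ∪ {x, y}) (hY : Y ⊆ range a ∪ {x, y})
    (h : prismLift a x y c b u v X = prismLift a x y c b u v Y) : X = Y := by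
  suffices hsub : ∀ X Y, X ⊆ range a ∪ {x, y} →
      prismLift a x y c b u v X = prismLift a x y c b u v Y → X ⊆ Y from
    (hsub X Y hX h).antisymm (hsub Y X hY h.symm)
  intro X Y hX h s hs
  obtain ⟨q, hq⟩ : ∃ q, ∀ Z, q ∈ prismLift a x y c b u v Z ↔ s ∈ Z := by
    rcases hX hs with ⟨k, rfl⟩ | rfl | rfl
    exacts [⟨c k, fun _ => P.c_mem_prismLift_iff⟩, ⟨u, fun _ => P.u_mem_prismLift_iff⟩,
      ⟨v, fun _ => P.v_mem_prismLift_iff⟩]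
  exact (hq Y).1 (h ▸ (hq X).2 hs)

theorem mem_of_c_mem_convexHull (h : c m ∈ convexHull ℝ (prismLift a x y c b u v Z)) :
    a m ∈ Z := by
  obtain ⟨p, hp, hle⟩ := (g m).exists_le_of_mem_convexHull h
  rw [P.g_c, if_pos rfl] at hle
  rcases mem_prismLift.1 hp with ⟨k, hk, rfl | rfl⟩ | ⟨-, rfl⟩ | ⟨-, rfl⟩
  · rw [P.g_c] at hle
    split_ifs at hle with hmk
    exacts [hmk ▸ hk, absurd hle (by norm_num)]
  · rw [P.g_b] at hle
    split_ifs at hle with hmk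
    exacts [hmk ▸ hk, absurd hle (by norm_num)]
  · exact absurd hle (P.g_u_lt_one m).not_ge
  · rw [P.g_v] at hle
    exact absurd hle (P.g_u_lt_one m).not_ge

theorem mem_of_b_mem_convexHull (h : b m ∈ convexHull ℝ (prismLift a x y c b u v Z)) :
    a m ∈ Z :=
  P.swap.mem_of_c_mem_convexHull (prismLift_swap (a := a) ▸ h)

theorem mem_or_range_subset_of_u_mem_convexHull
    (h : u ∈ convexHull ℝ (prismLift a x y c b u v Z)) : x ∈ Z ∨ range a ⊆ Z := by
  by_contra! ⟨hx, haZ⟩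
  obtain ⟨_, ⟨m, rfl⟩, hm⟩ := not_subset.1 haZ
  -- `g m - g m u • t` is positive at `u` but nonpositive at every point of the lift
  obtain ⟨p, hp, hle⟩ := (g m - g m u • t).exists_le_of_mem_convexHull h
  have hpos := P.g_u_pos m
  rcases mem_prismLift.1 hp with ⟨k, hk, rfl | rfl⟩ | ⟨hxZ, -⟩ | ⟨-, rfl⟩
  · simp [P.g_c, P.t_c, P.t_u, show m ≠ k by rintro rfl; exact hm hk] at hle
    linarith
  · simp [P.g_b, P.t_b, P.t_u, show m ≠ k by rintro rfl; exact hm hk] at hle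
    linarith
  · exact hx hxZ
  · simp [P.g_v, P.t_v, P.t_u] at hle
    linarith

theorem mem_or_range_subset_of_v_mem_convexHull
    (h : v ∈ convexHull ℝ (prismLift a x y c b u v Z)) : y ∈ Z ∨ range a ⊆ Z :=
  P.swap.mem_or_range_subset_of_u_mem_convexHull (prismLift_swap (a := a) ▸ h)

open Classical in
theorem convexHull_prismLift_inter :
    convexHull ℝ (prismLift a x y c b u v Z) ∩ (range c ∪ range b ∪ {u, v}) =
      prismLift a x y c b u v (if range a ⊆ Z then range a ∪ {x, y} else Z) := by
  split_ifs with haZ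
  · rw [prismLift_range_union_pair, inter_eq_right]
    have hc : range c ⊆ prismLift a x y c b u v Z := by
      rintro _ ⟨k, rfl⟩
      exact P.c_mem_prismLift_iff.2 (haZ ⟨k, rfl⟩)
    have hb : range b ⊆ prismLift a x y c b u v Z := by
      rintro _ ⟨k, rfl⟩
      exact P.b_mem_prismLift_iff.2 (haZ ⟨k, rfl⟩)
    exact union_subset (union_subset (hc.trans (subset_convexHull ℝ _))
      (hb.trans (subset_convexHull ℝ _)))
      (pair_subset (convexHull_mono hc P.u_mem) (convexHull_mono hb P.v_mem))
  · refine Subset.antisymm ?_ (subset_inter (subset_convexHull ℝ _) prismLift_subset)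
    rintro p ⟨hp, (⟨m, rfl⟩ | ⟨m, rfl⟩) | rfl | rfl⟩
    · exact P.c_mem_prismLift_iff.2 (P.mem_of_c_mem_convexHull hp)
    · exact P.b_mem_prismLift_iff.2 (P.mem_of_b_mem_convexHull hp)
    · exact P.u_mem_prismLift_iff.2
        ((P.mem_or_range_subset_of_u_mem_convexHull hp).resolve_right haZ)
    · exact P.v_mem_prismLift_iff.2
        ((P.mem_or_range_subset_of_v_mem_convexHull hp).resolve_right haZ)

end IsPrismFrame

end PrismFrame

section LastCoordinate

variable {n : ℕ}

def snocZero (n : ℕ) : (Fin n → ℝ) →ₗᵢ[ℝ] (Fin (n + 1) → ℝ) where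
  toFun z := Fin.snoc z 0
  map_add' z w := by
    funext m
    induction m using Fin.lastCases <;> simp
  map_smul' r z := by
    funext m
    induction m using Fin.lastCases <;> simp
  norm_map' z := by
    refine le_antisymm ((pi_norm_le_iff_of_nonneg (norm_nonneg z)).2 fun m => ?_)
      ((pi_norm_le_iff_of_nonneg (norm_nonneg _)).2 fun m => ?_)
    · induction m using Fin.lastCases with
      | last => simp
      | cast i => simpa using norm_le_pi_norm z i
    · simpa using norm_le_pi_norm (Fin.snoc z 0 : Fin (n + 1) → ℝ) m.castSucc

theorem snocZero_apply (z : Fin n → ℝ) : snocZero n z = Fin.snoc z 0 := rfl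

def dropLast (n : ℕ) : (Fin (n + 1) → ℝ) →ₗ[ℝ] (Fin n → ℝ) :=
  LinearMap.funLeft ℝ ℝ Fin.castSucc

theorem dropLast_snocZero (z : Fin n → ℝ) : dropLast n (snocZero n z) = z := by
  funext m
  simp [dropLast, snocZero_apply]

theorem snocZero_dropLast {p : Fin (n + 1) → ℝ} (hp : p (Fin.last n) = 0) :
    snocZero n (dropLast n p) = p := by
  funext m
  induction m using Fin.lastCases <;> simp [dropLast, snocZero_apply, hp]

theorem dropLast_add_single (p : Fin (n + 1) → ℝ) :
    dropLast n (p + Pi.single (Fin.last n) 1) = dropLast n p := by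
  funext m
  simp [dropLast, Fin.castSucc_ne_last]

end LastCoordinate

open scoped Pointwise in
theorem exists_isPrismFrame {n : ℕ} (hn : 1 ≤ n) {c : Fin (n + 1) → Fin (n + 1) → ℝ}
    (hc : AffineIndependent ℝ c) (hc0 : ∀ k, c k (Fin.last n) = 0) {u : Fin (n + 1) → ℝ}
    (hu : u ∈ intrinsicInterior ℝ (convexHull ℝ (range c))) :
    ∃ g t, IsPrismFrame c (fun k => c k + Pi.single (Fin.last n) 1) u
      (u + Pi.single (Fin.last n) 1) g t := by
  have : Nontrivial (Fin (n + 1)) := Fin.nontrivial_iff_two_le.2 (by omega)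
  have hc' : snocZero n ∘ (dropLast n ∘ c) = c := funext fun k => snocZero_dropLast (hc0 k)
  have hbase : AffineIndependent ℝ (dropLast n ∘ c) :=
    AffineIndependent.of_comp (snocZero n).toLinearMap.toAffineMap (hc'.symm ▸ hc)
  let β : AffineBasis (Fin (n + 1)) ℝ (Fin n → ℝ) :=
    ⟨dropLast n ∘ c, hbase, hbase.affineSpan_eq_top_iff_card_eq_finrank_add_one.2 (by simp)⟩
  have hu_mem := intrinsicInterior_subset hu
  obtain ⟨u₀, hu₀, rfl⟩ : u ∈ snocZero n '' interior (convexHull ℝ (range β)) := by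
    have himage :
        convexHull ℝ (range c) = (snocZero n).toAffineIsometry '' convexHull ℝ (range β) := by
      rw [LinearIsometry.coe_toAffineIsometry, ← hc', range_comp]
      exact ((snocZero n).toLinearMap.image_convexHull _).symm
    have hspan : affineSpan ℝ (convexHull ℝ (range β)) = ⊤ := by
      rw [affineSpan_convexHull]
      exact β.tot
    rwa [himage, AffineIsometry.intrinsicInterior_image,
      intrinsicInterior_eq_interior_of_affineSpan_eq_top hspan] at hu
  rw [β.interior_convexHull] at hu₀
  have hg : ∀ m p, (β.coord m).comp (dropLast n).toAffineMap p = β.coord m (dropLast n p) :=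
    fun _ _ => rfl
  refine ⟨fun m => (β.coord m).comp (dropLast n).toAffineMap,
    (LinearMap.proj (Fin.last n)).toAffineMap, ?_⟩
  exact {
    g_c := fun m k => β.coord_apply m k
    g_b := fun m k => by rw [hg, dropLast_add_single]; exact β.coord_apply m k
    g_v := fun m => by rw [hg, hg, dropLast_add_single]
    g_u_pos := fun m => by rw [hg, dropLast_snocZero]; exact hu₀ m
    g_u_lt_one := fun m => by
      rw [hg, dropLast_snocZero]; exact β.coord_lt_one_of_forall_pos hu₀ m
    t_c := hc0
    t_b := fun k => by simp [hc0]
    t_u := by simp [snocZero_apply]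
    t_v := by simp [snocZero_apply]
    u_mem := hu_mem
    v_mem := by
      have hrange : range (fun k => c k + Pi.single (Fin.last n) 1) =
          (Pi.single (Fin.last n) 1 : Fin (n + 1) → ℝ) +ᵥ range c := by
        ext p
        simp [mem_vadd_set, add_comm]
      rw [hrange, convexHull_vadd]
      exact ⟨_, hu_mem, add_comm _ _⟩ }

theorem stmt_7_general (n : ℕ) (hn : 1 ≤ n)
    -- the construction of C_n
    (a : Fin (n + 1) → (Fin n → ℝ)) (ha : AffineIndependent ℝ a)
    (x y : Fin n → ℝ) (hxy : x ≠ y)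
    (hxP : x ∈ interior (convexHull ℝ (Set.range a)))
    (hyP : y ∈ interior (convexHull ℝ (Set.range a)))
    (hxD : x ∉ Set.range a) (hyD : y ∉ Set.range a)
    (i j : Fin (n + 1))
    (hxiu : ∀ i' : Fin (n + 1),
      x ∈ convexHull ℝ (insert y (Set.range a \ {a i'})) → i' = i)
    (hyju : ∀ j' : Fin (n + 1),
      y ∈ convexHull ℝ (insert x (Set.range a \ {a j'})) → j' = j)
    (𝒟 : Set (Set (Fin n → ℝ)))
    (h𝒟 : 𝒟 = {Z | Z ⊆ Set.range a ∪ {x, y} ∧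
                convexHull ℝ Z ∩ (Set.range a ∪ {x, y}) = Z} ∪
              {insert y (Set.range a \ {a i}), insert x (Set.range a \ {a j})})
    (clC : Set (Fin n → ℝ) → Set (Fin n → ℝ))
    (hclC : ∀ Z : Set (Fin n → ℝ), clC Z = ⋂₀ {W | W ∈ 𝒟 ∧ Z ⊆ W})
    -- the construction of K
    (c : Fin (n + 1) → (Fin (n + 1) → ℝ)) (hc : AffineIndependent ℝ c)
    (hc0 : ∀ k, c k (Fin.last n) = 0)
    (u : Fin (n + 1) → ℝ)
    (hu : u ∈ intrinsicInterior ℝ (convexHull ℝ (Set.range c)))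
    (b : Fin (n + 1) → (Fin (n + 1) → ℝ))
    (hb : ∀ k, b k = c k + Pi.single (Fin.last n) 1)
    (v : Fin (n + 1) → ℝ) (hv : v = u + Pi.single (Fin.last n) 1)
    (K : Set (Fin (n + 1) → ℝ))
    (hK : K = Set.range c ∪ Set.range b ∪ {u, v}) :
    ∃ φ : Set (Fin n → ℝ) → Set (Fin (n + 1) → ℝ),
      φ ∅ = ∅ ∧
      (∀ k : Fin (n + 1), φ {a k} = {c k, b k}) ∧
      φ {x} = {u} ∧
      φ {y} = {v} ∧
      (∀ S : Set (Fin n → ℝ), S ⊆ Set.range a ∪ {x, y} → clC S = S →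
        φ S = ⋃ s ∈ S, φ {s}) ∧
      (∀ X : Set (Fin n → ℝ), X ⊆ Set.range a ∪ {x, y} → clC X = X →
        φ X ⊆ K ∧ convexHull ℝ (φ X) ∩ K = φ X) ∧
      (∀ X Y : Set (Fin n → ℝ), X ⊆ Set.range a ∪ {x, y} → clC X = X →
        Y ⊆ Set.range a ∪ {x, y} → clC Y = Y → φ X = φ Y → X = Y) ∧
      (∀ X Y : Set (Fin n → ℝ), X ⊆ Set.range a ∪ {x, y} → clC X = X →
        Y ⊆ Set.range a ∪ {x, y} → clC Y = Y → φ (X ∩ Y) = φ X ∩ φ Y) ∧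
      (∀ X Y : Set (Fin n → ℝ), X ⊆ Set.range a ∪ {x, y} → clC X = X →
        Y ⊆ Set.range a ∪ {x, y} → clC Y = Y →
        φ (clC (X ∪ Y)) = convexHull ℝ (φ X ∪ φ Y) ∩ K) := by
  classical
  have : Nontrivial (Fin (n + 1)) := Fin.nontrivial_iff_two_le.2 (by omega)
  let β : AffineBasis (Fin (n + 1)) ℝ (Fin n → ℝ) :=
    ⟨a, ha, ha.affineSpan_eq_top_iff_card_eq_finrank_add_one.2 (by simp)⟩
  have hx : ∀ m, 0 < β.coord m x := β.interior_convexHull.subset hxP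
  have hy : ∀ m, 0 < β.coord m y := β.interior_convexHull.subset hyP
  obtain ⟨g, t, P⟩ := exists_isPrismFrame hn hc hc0 hu
  rw [← funext hb, ← hv] at P
  subst hK
  have hcl : ∀ Z ⊆ Set.range a ∪ {x, y}, convexHull ℝ (prismLift a x y c b u v Z) ∩
      (Set.range c ∪ Set.range b ∪ {u, v}) = prismLift a x y c b u v (clC Z) := by
    intro Z hZ
    have hclZ : clC Z = if Set.range a ⊆ Z then Set.range a ∪ {x, y} else Z := by
      rw [hclC, h𝒟]
      exact Cn.sInter_closedSets (β := β) hx hy hxD hyD hxiu hyju hZ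
    rw [hclZ]
    exact P.convexHull_prismLift_inter
  refine ⟨prismLift a x y c b u v, by simp [prismLift],
    prismLift_singleton_apply ha.injective hxD hyD, prismLift_singleton_left hxD hxy,
    prismLift_singleton_right hyD hxy, fun S _ _ => ?_, fun X hX hXc => ⟨prismLift_subset, ?_⟩,
    fun X Y hX _ hY _ => P.prismLift_injOn hX hY, fun X Y _ _ _ _ => P.prismLift_inter,
    fun X Y hX _ hY _ => ?_⟩
  · simp only [prismLift_singleton]
    rfl
  · rw [hcl X hX, hXc]
  · rw [← prismLift_union, hcl _ (Set.union_subset hX hY)]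

/-- `C_n` is a sub-geometry of `Co(ℝ^{n+1}, K)`.  With the construction
of `C_n` (on `D ∪ {x, y} ⊆ ℝⁿ`, `D = range a`) and the construction of `K`
(`bᵢ = cᵢ + e`, `v = u + e`, `K = {c₀, b₀, …, cₙ, bₙ, u, v}`), the map `φ` determined
by `φ(∅) = ∅`, `φ({aᵢ}) = {cᵢ, bᵢ}`, `φ({x}) = {u}`, `φ({y}) = {v}` and
`φ(S) = ⋃_{s ∈ S} φ({s})` is a well-defined injective map from the closed sets of
`C_n` to the closed sets of `Co(ℝ^{n+1}, K)` preserving intersections and closures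
of unions. -/
theorem stmt_7 (n : ℕ) (hn : 1 ≤ n)
    -- the construction of C_n
    (a : Fin (n + 1) → (Fin n → ℝ)) (ha : AffineIndependent ℝ a)
    (x y : Fin n → ℝ) (hxy : x ≠ y)
    (hxP : x ∈ interior (convexHull ℝ (Set.range a)))
    (hyP : y ∈ interior (convexHull ℝ (Set.range a)))
    (hxD : x ∉ Set.range a) (hyD : y ∉ Set.range a)
    (i j : Fin (n + 1))
    (hxi : x ∈ convexHull ℝ (insert y (Set.range a \ {a i})))
    (hxiu : ∀ i' : Fin (n + 1),
      x ∈ convexHull ℝ (insert y (Set.range a \ {a i'})) → i' = i)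
    (hyj : y ∈ convexHull ℝ (insert x (Set.range a \ {a j})))
    (hyju : ∀ j' : Fin (n + 1),
      y ∈ convexHull ℝ (insert x (Set.range a \ {a j'})) → j' = j)
    (𝒟 : Set (Set (Fin n → ℝ)))
    (h𝒟 : 𝒟 = {Z | Z ⊆ Set.range a ∪ {x, y} ∧
                convexHull ℝ Z ∩ (Set.range a ∪ {x, y}) = Z} ∪
              {insert y (Set.range a \ {a i}), insert x (Set.range a \ {a j})})
    (clC : Set (Fin n → ℝ) → Set (Fin n → ℝ))
    (hclC : ∀ Z : Set (Fin n → ℝ), clC Z = ⋂₀ {W | W ∈ 𝒟 ∧ Z ⊆ W})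
    -- the construction of K
    (c : Fin (n + 1) → (Fin (n + 1) → ℝ)) (hc : AffineIndependent ℝ c)
    (hc0 : ∀ k, c k (Fin.last n) = 0)
    (u : Fin (n + 1) → ℝ)
    (hu : u ∈ intrinsicInterior ℝ (convexHull ℝ (Set.range c)))
    (b : Fin (n + 1) → (Fin (n + 1) → ℝ))
    (hb : ∀ k, b k = c k + Pi.single (Fin.last n) 1)
    (v : Fin (n + 1) → ℝ) (hv : v = u + Pi.single (Fin.last n) 1)
    (K : Set (Fin (n + 1) → ℝ))
    (hK : K = Set.range c ∪ Set.range b ∪ {u, v}) :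
    ∃ φ : Set (Fin n → ℝ) → Set (Fin (n + 1) → ℝ),
      φ ∅ = ∅ ∧
      (∀ k : Fin (n + 1), φ {a k} = {c k, b k}) ∧
      φ {x} = {u} ∧
      φ {y} = {v} ∧
      (∀ S : Set (Fin n → ℝ), S ⊆ Set.range a ∪ {x, y} → clC S = S →
        φ S = ⋃ s ∈ S, φ {s}) ∧
      (∀ X : Set (Fin n → ℝ), X ⊆ Set.range a ∪ {x, y} → clC X = X →
        φ X ⊆ K ∧ convexHull ℝ (φ X) ∩ K = φ X) ∧
      (∀ X Y : Set (Fin n → ℝ), X ⊆ Set.range a ∪ {x, y} → clC X = X →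
        Y ⊆ Set.range a ∪ {x, y} → clC Y = Y → φ X = φ Y → X = Y) ∧
      (∀ X Y : Set (Fin n → ℝ), X ⊆ Set.range a ∪ {x, y} → clC X = X →
        Y ⊆ Set.range a ∪ {x, y} → clC Y = Y → φ (X ∩ Y) = φ X ∩ φ Y) ∧
      (∀ X Y : Set (Fin n → ℝ), X ⊆ Set.range a ∪ {x, y} → clC X = X →
        Y ⊆ Set.range a ∪ {x, y} → clC Y = Y →
        φ (clC (X ∪ Y)) = convexHull ℝ (φ X ∪ φ Y) ∩ K) :=
  stmt_7_general n hn a ha x y hxy hxP hyP hxD hyD i j hxiu hyju 𝒟 h𝒟 clC hclC c hc hc0 u hu b hb v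
    hv K hK
end

section
/- With the construction of K: for every proper subset I ⊊ {0, …, n}, u ∉ convexHull ℝ ({v} ∪ {cᵢ : i ∈ I} ∪ {bᵢ : i ∈ I}), and symmetrically v ∉ convexHull ℝ ({u} ∪ {cᵢ : i ∈ I} ∪ {bᵢ : i ∈ I}). -/
/-!
The last coordinate puts `c₀, …, cₙ, u` at height `0` and `b₀, …, bₙ, v` at height `1`. A point of
extremal height in the convex hull of points of heights in `[0, 1]` is a convex combination of the
points at that height alone, so both claims reduce to `u ∉ convexHull {cᵢ : i ∈ I}` (for `v`, after
translating by `-e`). This holds because `u` is in the relative interior of the simplex: moving `u`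
slightly away from a vertex `cⱼ`, `j ∉ I`, stays in the simplex, which forces the `j`-th barycentric
coordinate of `u` to be positive.
-/

open Finset Filter Topology
open scoped Pointwise

section Weights

variable {𝕜 E ι : Type*} [Field 𝕜] [LinearOrder 𝕜] [IsStrictOrderedRing 𝕜]
  [AddCommGroup E] [Module 𝕜 E] [Fintype ι]

lemma exists_weights_of_mem_convexHull_image {c : ι → E} {I : Set ι} {x : E}
    (hx : x ∈ convexHull 𝕜 (c '' I)) :
    ∃ a : ι → 𝕜, (∀ i, 0 ≤ a i) ∧ ∑ i, a i = 1 ∧ (∀ j ∉ I, a j = 0) ∧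
      ∑ i, a i • c i = x := by
  classical
  obtain ⟨κ, _, w, z, hw₀, hw₁, hz, rfl⟩ := mem_convexHull_iff_exists_fintype.1 hx
  choose g hgI hgz using hz
  refine ⟨fun i => ∑ k ∈ {k | g k = i}, w k, fun i => sum_nonneg fun k _ => hw₀ k,
    ?_, fun j hj => sum_eq_zero fun k hk => ?_, ?_⟩
  · rwa [← sum_fiberwise univ g w] at hw₁
  · exact absurd ((mem_filter.1 hk).2 ▸ hgI k) hj
  · rw [← sum_fiberwise univ g]
    refine sum_congr rfl fun i _ => ?_
    rw [sum_smul]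
    exact sum_congr rfl fun k hk => by rw [← hgz k, (mem_filter.1 hk).2]

lemma mem_convexHull_setOf_eq_of_le (L : E →ₗ[𝕜] 𝕜) {T : Set E} {r : 𝕜}
    (hT : ∀ p ∈ T, L p ≤ r) {x : E} (hx : x ∈ convexHull 𝕜 T) (hLx : L x = r) :
    x ∈ convexHull 𝕜 {p ∈ T | L p = r} := by
  classical
  obtain ⟨κ, _, w, z, hw₀, hw₁, hz, rfl⟩ := mem_convexHull_iff_exists_fintype.1 hx
  have hdefect : ∑ k, w k * (r - L (z k)) = 0 := by
    simp only [mul_sub, sum_sub_distrib, ← sum_mul, hw₁, one_mul, ← hLx, map_sum, map_smul,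
      smul_eq_mul, sub_self]
  have hface : ∀ k, w k ≠ 0 → L (z k) = r := fun k hk => by
    have := (sum_eq_zero_iff_of_nonneg fun k _ =>
      mul_nonneg (hw₀ k) (sub_nonneg.2 (hT _ (hz k)))).1 hdefect k (mem_univ k)
    linarith [(mul_eq_zero.1 this).resolve_left hk]
  rw [← centerMass_eq_of_sum_1 _ _ hw₁, ← centerMass_filter_ne_zero]
  refine centerMass_mem_convexHull _ (fun k _ => hw₀ k) ?_ fun k hk => ?_
  · rw [sum_filter_ne_zero, hw₁]; exact one_pos
  · exact ⟨hz k, hface k (mem_filter.1 hk).2⟩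

end Weights

lemma exists_pos_add_smul_sub_mem_of_mem_intrinsicInterior {F : Type*} [AddCommGroup F]
    [Module ℝ F] [TopologicalSpace F] [IsTopologicalAddGroup F] [ContinuousSMul ℝ F]
    {s : Set F} {x y : F} (hx : x ∈ intrinsicInterior ℝ s) (hy : y ∈ affineSpan ℝ s) :
    ∃ t : ℝ, 0 < t ∧ x + t • (x - y) ∈ s := by
  obtain ⟨x, hxint, rfl⟩ := mem_intrinsicInterior.1 hx
  let γ : ℝ → affineSpan ℝ s := fun t =>
    ⟨x + t • (x - y), by
      simpa [add_comm] using AffineSubspace.smul_vsub_vadd_mem _ t x.2 hy x.2⟩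
  have hγ : Continuous γ := by fun_prop
  have hγ0 : γ 0 = x := by ext; simp [γ]
  have hnear : ∀ᶠ t in 𝓝[>] (0 : ℝ), γ t ∈ ((↑) ⁻¹' s : Set (affineSpan ℝ s)) :=
    nhdsWithin_le_nhds <| (hγ.tendsto 0).eventually <| by
      rw [hγ0]; exact mem_interior_iff_mem_nhds.1 hxint
  obtain ⟨t, ht, htpos⟩ := (hnear.and self_mem_nhdsWithin).exists
  exact ⟨t, htpos, ht⟩

section Simplex

variable {ι F : Type*} [Fintype ι] [AddCommGroup F] [Module ℝ F] [TopologicalSpace F]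
  [IsTopologicalAddGroup F] [ContinuousSMul ℝ F] {c : ι → F} {u : F}

lemma AffineIndependent.pos_of_mem_intrinsicInterior (hc : AffineIndependent ℝ c)
    (hu : u ∈ intrinsicInterior ℝ (convexHull ℝ (Set.range c))) {a : ι → ℝ}
    (ha₁ : ∑ i, a i = 1) (hau : ∑ i, a i • c i = u) (j : ι) : 0 < a j := by
  classical
  obtain ⟨t, ht, hp⟩ := exists_pos_add_smul_sub_mem_of_mem_intrinsicInterior hu
    (subset_affineSpan ℝ _ (subset_convexHull ℝ _ ⟨j, rfl⟩))
  rw [← Set.image_univ] at hp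
  obtain ⟨w, hw₀, hw₁, -, hwp⟩ := exists_weights_of_mem_convexHull_image hp
  -- `(1 + t) • u = p + t • c j` with `p ∈ convexHull (range c)`; compare barycentric coordinates.
  have key := hc.eq_of_sum_eq_sum (s := univ) (w₁ := fun i => (1 + t) * a i)
    (w₂ := fun i => w i + if i = j then t else 0) ?_ ?_ j (mem_univ j)
  · rw [if_pos rfl] at key
    nlinarith [hw₀ j]
  · simp [← mul_sum, sum_add_distrib, ha₁, hw₁]
  · simp only [add_smul, mul_smul, ← smul_sum, sum_add_distrib, hau, hwp, ite_smul, zero_smul,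
      sum_ite_eq', mem_univ, if_true]
    module

lemma AffineIndependent.notMem_convexHull_image_of_mem_intrinsicInterior
    (hc : AffineIndependent ℝ c) (hu : u ∈ intrinsicInterior ℝ (convexHull ℝ (Set.range c)))
    {I : Set ι} (hI : I ≠ Set.univ) : u ∉ convexHull ℝ (c '' I) := by
  intro h
  obtain ⟨j, hj⟩ := (Set.ne_univ_iff_exists_notMem I).1 hI
  obtain ⟨a, -, ha₁, haI, hau⟩ := exists_weights_of_mem_convexHull_image h
  exact (hc.pos_of_mem_intrinsicInterior hu ha₁ hau j).ne' (haI j hj)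

end Simplex

/-- with the construction of `K` (`bᵢ = cᵢ + e`, `v = u + e`,
`u` in the relative interior of the simplex spanned by the `cᵢ`), for every proper
subset `I ⊊ {0, …, n}`, `u` is not in the convex hull of `{v} ∪ {cᵢ, bᵢ : i ∈ I}`,
and symmetrically `v` is not in the convex hull of `{u} ∪ {cᵢ, bᵢ : i ∈ I}`. -/
theorem stmt_8 (n : ℕ)
    (c : Fin (n + 1) → (Fin (n + 1) → ℝ)) (hc : AffineIndependent ℝ c)
    (hc0 : ∀ k, c k (Fin.last n) = 0)
    (u : Fin (n + 1) → ℝ)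
    (hu : u ∈ intrinsicInterior ℝ (convexHull ℝ (Set.range c)))
    (b : Fin (n + 1) → (Fin (n + 1) → ℝ))
    (hb : ∀ k, b k = c k + Pi.single (Fin.last n) 1)
    (v : Fin (n + 1) → ℝ) (hv : v = u + Pi.single (Fin.last n) 1)
    (I : Set (Fin (n + 1))) (hI : I ⊂ Set.univ) :
    u ∉ convexHull ℝ (insert v (c '' I ∪ b '' I)) ∧
    v ∉ convexHull ℝ (insert u (c '' I ∪ b '' I)) := by
  have hcI : u ∉ convexHull ℝ (c '' I) :=
    hc.notMem_convexHull_image_of_mem_intrinsicInterior hu hI.ne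
  have hu0 : u (Fin.last n) = 0 :=
    convexHull_min (by rintro _ ⟨k, rfl⟩; exact hc0 k)
      (convex_hyperplane (LinearMap.proj (Fin.last n)).isLinear 0) (intrinsicInterior_subset hu)
  have hb1 : ∀ k, b k (Fin.last n) = 1 := by simp [hb, hc0]
  have hv1 : v (Fin.last n) = 1 := by simp [hv, hu0]
  constructor
  · intro huK
    refine hcI (convexHull_mono ?_ (mem_convexHull_setOf_eq_of_le
      (-LinearMap.proj (Fin.last n)) (r := 0) ?_ huK (by simp [hu0])))
    · rintro _ ⟨rfl | hp | ⟨k, -, rfl⟩, hp0⟩ <;> simp_all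
    · rintro _ (rfl | ⟨k, -, rfl⟩ | ⟨k, -, rfl⟩) <;> simp [hv1, hc0, hb1]
  · intro hvK
    have hvb : v ∈ convexHull ℝ (b '' I) := by
      refine convexHull_mono ?_ (mem_convexHull_setOf_eq_of_le
        (LinearMap.proj (Fin.last n)) ?_ hvK hv1)
      · rintro _ ⟨rfl | ⟨k, -, rfl⟩ | hp, hp1⟩ <;> simp_all
      · rintro _ (rfl | ⟨k, -, rfl⟩ | ⟨k, -, rfl⟩) <;> simp [hu0, hc0, hb1]
    have hbI : b '' I = (Pi.single (Fin.last n) 1 : Fin (n + 1) → ℝ) +ᵥ c '' I := by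
      rw [← Set.image_vadd, Set.image_image]
      exact Set.image_congr fun k _ => (hb k).trans (add_comm _ _)
    rw [hbI, convexHull_vadd, hv, add_comm u] at hvb
    exact hcI (Set.vadd_mem_vadd_set_iff.1 hvb)
end

section
/- Let G₀ ⊆ ℝ² be a finite set and let Co(ℝ², G₀) be the convex geometry on G₀ with closure τ(Z) = (convexHull ℝ Z) ∩ G₀. Let (G, cl) be a finite convex geometry that is a sub-geometry of Co(ℝ², G₀). Then for all x, y, a, b, c ∈ G: if y ∈ cl({a,b,c}); cl({y}) ∩ cl({a,b}) = ∅, cl({y}) ∩ cl({b,c}) = ∅, cl({y}) ∩ cl({a,c}) = ∅, cl({y}) ∩ cl({x}) = ∅; x ∈ cl({y,a,b}); and x ∈ cl({y,a,c}); then cl({x}) ∩ cl({y,a}) ≠ ∅. -/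
open Set

section LineCrossing

variable {E : Type*} [AddCommGroup E] [Module ℝ E]

theorem combo₃_affine_apply (f : E →ᵃ[ℝ] ℝ) {a b c : E} {α β γ : ℝ} (h : α + β + γ = 1) :
    f (α • a + β • b + γ • c) = α * f a + β * f b + γ * f c := by
  rw [f.decomp]
  simp only [Pi.add_apply, map_add, map_smul, smul_eq_mul]
  linear_combination (-f 0) * h

theorem exists_mem_segment_apply_eq_zero (f : E →ᵃ[ℝ] ℝ) {u v : E} (h : f u * f v ≤ 0) :
    ∃ z ∈ segment ℝ u v, f z = 0 := by
  have : (0 : ℝ) ∈ f '' segment ℝ u v := by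
    rw [image_segment, segment_eq_uIcc, mem_uIcc]
    rcases mul_nonpos_iff.1 h with ⟨hu, hv⟩ | ⟨hu, hv⟩
    · exact Or.inr ⟨hv, hu⟩
    · exact Or.inl ⟨hu, hv⟩
  obtain ⟨z, hz, hfz⟩ := this
  exact ⟨z, hz, hfz⟩

theorem mul_apply_eq_of_mem_segment (ξ η : E →ᵃ[ℝ] ℝ) {u v z : E} (hz : z ∈ segment ℝ u v)
    (hξz : ξ z = 0) : (ξ v - ξ u) * η z = η u * ξ v - ξ u * η v := by
  obtain ⟨a, b, -, -, hab, rfl⟩ := hz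
  rw [Convex.combo_affine_apply hab] at hξz ⊢
  simp only [smul_eq_mul] at hξz ⊢
  linear_combination (η v - η u) * hξz + (η u * ξ v - ξ u * η v) * hab

def MeetsLineBelow (ξ η : E →ᵃ[ℝ] ℝ) (S : Set E) : Prop :=
  ∀ z ∈ S, ξ z = 0 → η z < 0

variable {ξ η : E →ᵃ[ℝ] ℝ}

theorem MeetsLineBelow.mono {S T : Set E} (hT : MeetsLineBelow ξ η T) (hST : S ⊆ T) :
    MeetsLineBelow ξ η S :=
  fun z hz => hT z (hST hz)

theorem MeetsLineBelow.neg {S : Set E} (hS : MeetsLineBelow ξ η S) : MeetsLineBelow (-ξ) η S :=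
  fun z hz hξz => hS z hz (by simpa using hξz)

theorem MeetsLineBelow.exists_mem_segment {u v : E} (h : MeetsLineBelow ξ η (segment ℝ u v))
    (huv : ξ u * ξ v ≤ 0) : ∃ z ∈ segment ℝ u v, ξ z = 0 ∧ η z < 0 := by
  obtain ⟨z, hz, hξz⟩ := exists_mem_segment_apply_eq_zero ξ huv
  exact ⟨z, hz, hξz, h z hz hξz⟩

theorem MeetsLineBelow.mul_neg {S : Set E} (hS : MeetsLineBelow ξ η S) (hSc : Convex ℝ S)
    {u v : E} (hu : u ∈ S) (hv : v ∈ S) (huv : ξ u * ξ v ≤ 0) (hne : ξ u ≠ ξ v) :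
    (ξ v - ξ u) * (η u * ξ v - ξ u * η v) < 0 := by
  obtain ⟨z, hz, hξz⟩ := exists_mem_segment_apply_eq_zero ξ huv
  have hηz := hS z (hSc.segment_subset hu hv hz) hξz
  have hd : 0 < (ξ v - ξ u) ^ 2 := by
    have : ξ v - ξ u ≠ 0 := sub_ne_zero.2 hne.symm
    positivity
  rw [← mul_apply_eq_of_mem_segment ξ η hz hξz, ← mul_assoc, ← sq]
  exact mul_neg_of_pos_of_neg hd hηz

theorem exists_mem_segment_above_of_triangle {S T : Set E} (hSc : Convex ℝ S) (hTc : Convex ℝ T)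
    (hS : MeetsLineBelow ξ η S) (hT : MeetsLineBelow ξ η T) {a b c : E} (haS : a ∈ S)
    (haT : a ∈ T) (hb : b ∈ S) (hc : c ∈ T) {α β γ : ℝ} (hα : 0 < α) (hβ : 0 < β) (hγ : 0 < γ)
    (hξ : α * ξ a + β * ξ b + γ * ξ c = 0) (hη : α * η a + β * η b + γ * η c = 0) :
    ξ b * ξ c ≤ 0 ∧ ∃ z ∈ segment ℝ b c, ξ z = 0 ∧ 0 < η z := by
  wlog ha : 0 ≤ ξ a generalizing ξ with H
  · have hneg := H hS.neg hT.neg (by simp only [AffineMap.coe_neg, Pi.neg_apply]; linarith)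
      (by simp only [AffineMap.coe_neg, Pi.neg_apply]; linarith)
    simpa only [AffineMap.coe_neg, Pi.neg_apply, neg_mul_neg, neg_eq_zero] using hneg
  -- `η u * ξ v - ξ u * η v` is `ξ v - ξ u` times the height at which `[u, v]` crosses `ξ = 0`.
  have hab : ξ b < 0 → 0 < η a * ξ b - ξ a * η b := fun hb0 =>
    pos_of_mul_neg_right (hS.mul_neg hSc haS hb (by nlinarith) (by linarith)) (by linarith)
  have hac : ξ c < 0 → 0 < η a * ξ c - ξ a * η c := fun hc0 =>
    pos_of_mul_neg_right (hT.mul_neg hTc haT hc (by nlinarith) (by linarith)) (by linarith)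
  have hN : β * (η a * ξ b - ξ a * η b) + γ * (η a * ξ c - ξ a * η c) = 0 := by
    linear_combination η a * hξ - ξ a * hη
  have hNb : γ * (η b * ξ c - ξ b * η c) = α * (η a * ξ b - ξ a * η b) := by
    linear_combination η b * hξ - ξ b * hη
  have hNc : β * (η b * ξ c - ξ b * η c) = -(α * (η a * ξ c - ξ a * η c)) := by
    linear_combination ξ c * hη - η c * hξ
  have cross : ξ b * ξ c ≤ 0 →
      ∃ z ∈ segment ℝ b c, ξ z = 0 ∧ (ξ c - ξ b) * η z = η b * ξ c - ξ b * η c :=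
    fun hbc => (exists_mem_segment_apply_eq_zero ξ hbc).imp
      fun z ⟨hz, hξz⟩ => ⟨hz, hξz, mul_apply_eq_of_mem_segment ξ η hz hξz⟩
  rcases lt_or_ge (ξ b) 0 with hb0 | hb0 <;> rcases lt_or_ge (ξ c) 0 with hc0 | hc0
  · nlinarith [hab hb0, hac hc0]
  · have hbc : ξ b * ξ c ≤ 0 := by nlinarith
    obtain ⟨z, hz, hξz, hηz⟩ := cross hbc
    have hN' : 0 < η b * ξ c - ξ b * η c :=
      pos_of_mul_pos_right (hNb ▸ mul_pos hα (hab hb0)) hγ.le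
    exact ⟨hbc, z, hz, hξz, pos_of_mul_pos_right (hηz ▸ hN') (by linarith)⟩
  · have hbc : ξ b * ξ c ≤ 0 := by nlinarith
    obtain ⟨z, hz, hξz, hηz⟩ := cross hbc
    have hN' : η b * ξ c - ξ b * η c < 0 :=
      neg_of_mul_neg_right (hNc ▸ neg_neg_of_pos (mul_pos hα (hac hc0))) hβ.le
    exact ⟨hbc, z, hz, hξz, pos_of_mul_neg_right (hηz ▸ hN') (by linarith)⟩
  · have ha0 : ξ a = 0 := by nlinarith
    have hb0' : ξ b = 0 := by nlinarith
    have hc0' : ξ c = 0 := by nlinarith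
    nlinarith [hS a haS ha0, hS b hb hb0', hT c hc hc0']

theorem exists_mem_convexHull_union_below {B C : Set E} (hB : MeetsLineBelow ξ η (convexHull ℝ B))
    (hC : MeetsLineBelow ξ η (convexHull ℝ C)) {b c b' c' : E} (hb : b ∈ convexHull ℝ B)
    (hc : c ∈ convexHull ℝ C) (hbc : ξ b * ξ c ≤ 0) (hb' : b' ∈ convexHull ℝ B)
    (hc' : c' ∈ convexHull ℝ C) (hb'c' : MeetsLineBelow ξ η (segment ℝ b' c')) :
    ∃ z ∈ convexHull ℝ (B ∪ C), ξ z = 0 ∧ η z < 0 := by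
  have hBC : convexHull ℝ B ⊆ convexHull ℝ (B ∪ C) := convexHull_mono subset_union_left
  have hCB : convexHull ℝ C ⊆ convexHull ℝ (B ∪ C) := convexHull_mono subset_union_right
  rcases le_or_gt (ξ b' * ξ c') 0 with h₁ | h₁
  · obtain ⟨z, hz, h⟩ := hb'c'.exists_mem_segment h₁
    exact ⟨z, (convex_convexHull ℝ _).segment_subset (hBC hb') (hCB hc') hz, h⟩
  rcases le_or_gt (ξ b' * ξ b) 0 with h₂ | h₂
  · have hseg := (convex_convexHull ℝ B).segment_subset hb' hb
    obtain ⟨z, hz, h⟩ := (hB.mono hseg).exists_mem_segment h₂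
    exact ⟨z, hBC (hseg hz), h⟩
  rcases le_or_gt (ξ c' * ξ c) 0 with h₃ | h₃
  · have hseg := (convex_convexHull ℝ C).segment_subset hc' hc
    obtain ⟨z, hz, h⟩ := (hC.mono hseg).exists_mem_segment h₃
    exact ⟨z, hCB (hseg hz), h⟩
  nlinarith [mul_pos h₂ h₃, mul_nonpos_of_nonneg_of_nonpos h₁.le hbc]

theorem exists_pos_combo₃_of_mem_convexHull {A B C : Set E} {x : E}
    (hx : x ∈ convexHull ℝ (A ∪ B ∪ C)) (hAB : x ∉ convexHull ℝ (A ∪ B))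
    (hAC : x ∉ convexHull ℝ (A ∪ C)) (hBC : x ∉ convexHull ℝ (B ∪ C)) :
    ∃ a ∈ convexHull ℝ A, ∃ b ∈ convexHull ℝ B, ∃ c ∈ convexHull ℝ C, ∃ α β γ : ℝ,
      0 < α ∧ 0 < β ∧ 0 < γ ∧ α + β + γ = 1 ∧ α • a + β • b + γ • c = x := by
  have hA : A.Nonempty := nonempty_iff_ne_empty.2 (by rintro rfl; simp_all)
  have hB : B.Nonempty := nonempty_iff_ne_empty.2 (by rintro rfl; simp_all)
  have hC : C.Nonempty := nonempty_iff_ne_empty.2 (by rintro rfl; simp_all)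
  rw [convexHull_union (hA.mono subset_union_left) hC, mem_convexJoin] at hx
  obtain ⟨u, hu, c, hc, s, t, hs, ht, hst, rfl⟩ := hx
  rw [convexHull_union hA hB, mem_convexJoin] at hu
  obtain ⟨a, ha, b, hb, s', t', hs', ht', hst', rfl⟩ := hu
  have mem₂ : ∀ {X Y : Set E} {y z : E} {μ ν : ℝ}, y ∈ convexHull ℝ X → z ∈ convexHull ℝ Y →
      0 ≤ μ → 0 ≤ ν → μ + ν = 1 → μ • y + ν • z ∈ convexHull ℝ (X ∪ Y) :=
    fun hy hz hμ hν hμν => convex_convexHull ℝ _ (convexHull_mono subset_union_left hy)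
      (convexHull_mono subset_union_right hz) hμ hν hμν
  have hs0 : 0 < s := hs.lt_of_ne' fun h => hAC (by
    rw [h, zero_smul, zero_add, show t = 1 by linarith, one_smul]
    exact convexHull_mono subset_union_right hc)
  have ht0 : 0 < t := ht.lt_of_ne' fun h => hAB (by
    rw [h, zero_smul, add_zero, show s = 1 by linarith, one_smul]
    exact mem₂ ha hb hs' ht' hst')
  have hs'0 : 0 < s' := hs'.lt_of_ne' fun h => hBC (by
    rw [h, zero_smul, zero_add, show t' = 1 by linarith, one_smul]
    exact mem₂ hb hc hs ht hst)
  have ht'0 : 0 < t' := ht'.lt_of_ne' fun h => hAC (by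
    rw [h, zero_smul, add_zero, show s' = 1 by linarith, one_smul]
    exact mem₂ ha hc hs ht hst)
  exact ⟨a, ha, b, hb, c, hc, s * s', s * t', t, mul_pos hs0 hs'0, mul_pos hs0 ht'0, ht0,
    by linear_combination s * hst' + hst, by simp only [smul_add, smul_smul]⟩

theorem exists_mem_convexHull_le_apply (f : E →ₗ[ℝ] ℝ) {s t : Set E} {p : E}
    (hp : p ∈ convexHull ℝ (s ∪ t)) (hs : ∀ x ∈ s, f x < f p) :
    ∃ y ∈ convexHull ℝ t, f p ≤ f y := by
  by_contra! ht
  have : convexHull ℝ (s ∪ t) ⊆ {x | f x < f p} :=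
    convexHull_min (union_subset hs fun y hy => ht y (subset_convexHull ℝ t hy))
      (convex_halfSpace_lt f.isLinear _)
  exact lt_irrefl (f p) (this hp)

/-- Affine coordinates with `q` at the origin and `p` on the negative `η`-axis; the last field,
injectivity of `(ξ, η)`, is where the dimension two enters. -/
structure LineCoords (ξ η : E →ᵃ[ℝ] ℝ) (q p : E) : Prop where
  ξ_q : ξ q = 0
  η_q : η q = 0
  ξ_p : ξ p = 0
  η_p : η p < 0
  eq_of_apply_eq_zero : ∀ z, ξ z = 0 → η z = 0 → z = q

namespace LineCoords

variable {q p : E}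

theorem mem_segment (hL : LineCoords ξ η q p) {u v : E} (hu : ξ u = 0) (hv : ξ v = 0)
    (hηu : η u ≤ 0) (hηv : 0 ≤ η v) : q ∈ segment ℝ u v := by
  obtain ⟨z, hz, hηz⟩ :=
    exists_mem_segment_apply_eq_zero η (mul_nonpos_of_nonpos_of_nonneg hηu hηv)
  have hξz : ξ z ∈ segment ℝ (ξ u) (ξ v) := image_segment ℝ ξ u v ▸ mem_image_of_mem ξ hz
  rw [hu, hv, segment_same, mem_singleton_iff] at hξz
  rwa [← hL.eq_of_apply_eq_zero z hξz hηz]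

theorem meetsLineBelow (hL : LineCoords ξ η q p) {S : Set E} (hS : Convex ℝ S) (hp : p ∈ S)
    (hq : q ∉ S) : MeetsLineBelow ξ η S := fun z hz hξz => by
  by_contra! hηz
  exact hq (hS.segment_subset hp hz (hL.mem_segment hL.ξ_p hξz hL.η_p.le hηz))

end LineCoords

end LineCrossing

theorem LineCoords.mem_convexHull_union_or {E : Type*} [NormedAddCommGroup E] [NormedSpace ℝ E]
    {ξ η : E →ᵃ[ℝ] ℝ} {q p : E} (hL : LineCoords ξ η q p) {Y A B C : Set E} (hY : Y.Finite)
    (hA : A.Finite) (hq : q ∈ convexHull ℝ (A ∪ B ∪ C)) (hqBC : q ∉ convexHull ℝ (B ∪ C))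
    (hqYA : q ∈ convexHull ℝ (Y ∪ A)) (hpB : p ∈ convexHull ℝ (Y ∪ A ∪ B))
    (hpC : p ∈ convexHull ℝ (Y ∪ A ∪ C)) (hpYA : p ∉ convexHull ℝ (Y ∪ A)) :
    q ∈ convexHull ℝ (A ∪ B ∪ {p}) ∨ q ∈ convexHull ℝ (A ∪ C ∪ {p}) := by
  by_contra! h
  obtain ⟨hqP, hqQ⟩ := h
  have hP := hL.meetsLineBelow (convex_convexHull ℝ _) (subset_convexHull ℝ _ (by simp)) hqP
  have hQ := hL.meetsLineBelow (convex_convexHull ℝ _) (subset_convexHull ℝ _ (by simp)) hqQ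
  obtain ⟨a, ha, b, hb, c, hc, α, β, γ, hα, hβ, hγ, hsum, hcombo⟩ :=
    exists_pos_combo₃_of_mem_convexHull hq (fun h => hqP (convexHull_mono subset_union_left h))
      (fun h => hqQ (convexHull_mono subset_union_left h)) hqBC
  have hξ : α * ξ a + β * ξ b + γ * ξ c = 0 := by
    rw [← combo₃_affine_apply ξ hsum, hcombo, hL.ξ_q]
  have hη : α * η a + β * η b + γ * η c = 0 := by
    rw [← combo₃_affine_apply η hsum, hcombo, hL.η_q]
  have hAP : convexHull ℝ A ⊆ convexHull ℝ (A ∪ B ∪ {p}) :=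
    convexHull_mono (subset_union_left.trans subset_union_left)
  have hBP : convexHull ℝ B ⊆ convexHull ℝ (A ∪ B ∪ {p}) :=
    convexHull_mono (subset_union_right.trans subset_union_left)
  have hAQ : convexHull ℝ A ⊆ convexHull ℝ (A ∪ C ∪ {p}) :=
    convexHull_mono (subset_union_left.trans subset_union_left)
  have hCQ : convexHull ℝ C ⊆ convexHull ℝ (A ∪ C ∪ {p}) :=
    convexHull_mono (subset_union_right.trans subset_union_left)
  obtain ⟨hbc, z₂, hz₂, hξz₂, hηz₂⟩ := exists_mem_segment_above_of_triangle (convex_convexHull ℝ _)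
    (convex_convexHull ℝ _) hP hQ (hAP ha) (hAQ ha) (hBP hb) (hCQ hc) hα hβ hγ hξ hη
  obtain ⟨f, u, hfYA, hfp⟩ := geometric_hahn_banach_closed_point (convex_convexHull ℝ (Y ∪ A))
    ((hY.union hA).isCompact_convexHull ℝ).isClosed hpYA
  have hf : ∀ x ∈ Y ∪ A, f x < f p := fun x hx => (hfYA x (subset_convexHull ℝ _ hx)).trans hfp
  obtain ⟨b', hb', hfb'⟩ := exists_mem_convexHull_le_apply (f : E →ₗ[ℝ] ℝ) hpB hf
  obtain ⟨c', hc', hfc'⟩ := exists_mem_convexHull_le_apply (f : E →ₗ[ℝ] ℝ) hpC hf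
  have hHc : Convex ℝ {x | f p ≤ f x} := convex_halfSpace_ge (f : E →ₗ[ℝ] ℝ).isLinear _
  have hH : MeetsLineBelow ξ η {x | f p ≤ f x} :=
    hL.meetsLineBelow hHc (le_refl (f p)) (not_le.2 ((hfYA q hqYA).trans hfp))
  obtain ⟨z₁, hz₁, hξz₁, hηz₁⟩ := exists_mem_convexHull_union_below (hP.mono hBP) (hQ.mono hCQ)
    hb hc hbc hb' hc' (hH.mono (hHc.segment_subset hfb' hfc'))
  have hz₂' : z₂ ∈ convexHull ℝ (B ∪ C) := (convex_convexHull ℝ _).segment_subset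
    (convexHull_mono subset_union_left hb) (convexHull_mono subset_union_right hc) hz₂
  exact hqBC ((convex_convexHull ℝ _).segment_subset hz₁ hz₂'
    (hL.mem_segment hξz₁ hξz₂ hηz₁.le hηz₂.le))

theorem exists_lineCoords {q p : Fin 2 → ℝ} (hqp : q ≠ p) :
    ∃ ξ η : (Fin 2 → ℝ) →ᵃ[ℝ] ℝ, LineCoords ξ η q p := by
  let l₁ : (Fin 2 → ℝ) →ₗ[ℝ] ℝ := (q 0 - p 0) • LinearMap.proj 1 - (q 1 - p 1) • LinearMap.proj 0
  let l₂ : (Fin 2 → ℝ) →ₗ[ℝ] ℝ := (q 0 - p 0) • LinearMap.proj 0 + (q 1 - p 1) • LinearMap.proj 1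
  set ξ := l₁.toAffineMap - AffineMap.const ℝ _ (l₁ q)
  set η := l₂.toAffineMap - AffineMap.const ℝ _ (l₂ q)
  have hξ : ∀ z, ξ z = (q 0 - p 0) * (z 1 - q 1) - (q 1 - p 1) * (z 0 - q 0) := fun z => by
    simp [ξ, l₁]; ring
  have hη : ∀ z, η z = (q 0 - p 0) * (z 0 - q 0) + (q 1 - p 1) * (z 1 - q 1) := fun z => by
    simp [η, l₂]; ring
  have hd : 0 < (q 0 - p 0) ^ 2 + (q 1 - p 1) ^ 2 := by
    have : q 0 ≠ p 0 ∨ q 1 ≠ p 1 := by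
      by_contra! h
      exact hqp (funext (Fin.forall_fin_two.2 h))
    rcases this with h | h <;> have := sub_ne_zero.2 h <;> positivity
  refine ⟨ξ, η, ⟨by simp [hξ], by simp [hη], by rw [hξ]; ring, by rw [hη]; nlinarith,
    fun z h₁ h₂ => funext fun i => ?_⟩⟩
  rw [hξ] at h₁
  rw [hη] at h₂
  have e₀ : ((q 0 - p 0) ^ 2 + (q 1 - p 1) ^ 2) * (z 0 - q 0) = 0 := by
    linear_combination (q 0 - p 0) * h₂ - (q 1 - p 1) * h₁
  have e₁ : ((q 0 - p 0) ^ 2 + (q 1 - p 1) ^ 2) * (z 1 - q 1) = 0 := by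
    linear_combination (q 1 - p 1) * h₂ + (q 0 - p 0) * h₁
  fin_cases i
  · exact sub_eq_zero.1 ((mul_eq_zero.1 e₀).resolve_left hd.ne')
  · exact sub_eq_zero.1 ((mul_eq_zero.1 e₁).resolve_left hd.ne')

theorem mem_convexHull_union_or_of_fin_two {Y A B C : Set (Fin 2 → ℝ)} {q p : Fin 2 → ℝ}
    (hY : Y.Finite) (hA : A.Finite) (hq : q ∈ convexHull ℝ (A ∪ B ∪ C))
    (hqBC : q ∉ convexHull ℝ (B ∪ C)) (hqYA : q ∈ convexHull ℝ (Y ∪ A))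
    (hpB : p ∈ convexHull ℝ (Y ∪ A ∪ B)) (hpC : p ∈ convexHull ℝ (Y ∪ A ∪ C))
    (hpYA : p ∉ convexHull ℝ (Y ∪ A)) :
    q ∈ convexHull ℝ (A ∪ B ∪ {p}) ∨ q ∈ convexHull ℝ (A ∪ C ∪ {p}) := by
  obtain ⟨ξ, η, hL⟩ := exists_lineCoords fun h : q = p => hpYA (h ▸ hqYA)
  exact hL.mem_convexHull_union_or hY hA hq hqBC hqYA hpB hpC hpYA

namespace IsConvexGeometry

variable {α : Type*} {G : Set α} {cl : Set α → Set α}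

theorem subset_cl (hG : IsConvexGeometry G cl) {Y : Set α} (hY : Y ⊆ G) : Y ⊆ cl Y := hG.1 Y hY

theorem cl_subset (hG : IsConvexGeometry G cl) {Y : Set α} (hY : Y ⊆ G) : cl Y ⊆ G := hG.2.1 Y hY

theorem cl_mono (hG : IsConvexGeometry G cl) {Y Z : Set α} (hYZ : Y ⊆ Z) (hZ : Z ⊆ G) :
    cl Y ⊆ cl Z :=
  hG.2.2.1 Y Z hYZ hZ

theorem cl_cl (hG : IsConvexGeometry G cl) {Y : Set α} (hY : Y ⊆ G) : cl (cl Y) = cl Y :=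
  hG.2.2.2.1 Y hY

theorem mem_cl_singleton (hG : IsConvexGeometry G cl) {z : α} (hz : z ∈ G) : z ∈ cl {z} :=
  hG.subset_cl (singleton_subset_iff.2 hz) rfl

theorem cl_singleton_subset (hG : IsConvexGeometry G cl) {S : Set α} {z : α} (hS : S ⊆ G)
    (hz : z ∈ cl S) : cl {z} ⊆ cl S :=
  (hG.cl_mono (singleton_subset_iff.2 hz) (hG.cl_subset hS)).trans (hG.cl_cl hS).subset

theorem cl_cl_union (hG : IsConvexGeometry G cl) {S T : Set α} (hS : S ⊆ G) (hT : T ⊆ G) :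
    cl (cl S ∪ T) = cl (S ∪ T) := by
  have hST : S ∪ T ⊆ G := union_subset hS hT
  refine Subset.antisymm ?_ (hG.cl_mono (union_subset_union_left T (hG.subset_cl hS))
    (union_subset (hG.cl_subset hS) hT))
  refine (hG.cl_mono (union_subset (hG.cl_mono subset_union_left hST) ?_) (hG.cl_subset hST)).trans
    (hG.cl_cl hST).subset
  exact subset_union_right.trans (hG.subset_cl hST)

theorem cl_cl_union_cl (hG : IsConvexGeometry G cl) {S T : Set α} (hS : S ⊆ G) (hT : T ⊆ G) :
    cl (cl S ∪ cl T) = cl (S ∪ T) := by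
  rw [hG.cl_cl_union hS (hG.cl_subset hT), union_comm, hG.cl_cl_union hT hS, union_comm]

theorem cl_inter (hG : IsConvexGeometry G cl) {X Y : Set α} (hX : X ⊆ G) (hY : Y ⊆ G)
    (hXc : cl X = X) (hYc : cl Y = Y) : cl (X ∩ Y) = X ∩ Y :=
  Subset.antisymm
    (subset_inter ((hG.cl_mono inter_subset_left hX).trans hXc.subset)
      ((hG.cl_mono inter_subset_right hY).trans hYc.subset))
    (hG.subset_cl (inter_subset_left.trans hX))

theorem notMem_cl_insert (hG : IsConvexGeometry G cl) {S : Set α} {x y : α} (hS : S ⊆ G)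
    (hx : x ∈ G) (hy : y ∈ G) (hyx : y ≠ x) (hyS : y ∉ cl S) (h : y ∈ cl (insert x S)) :
    x ∉ cl (insert y S) := by
  have key : ∀ z ∈ G, cl (cl S ∪ {z}) = cl (insert z S) := fun z hz => by
    rw [hG.cl_cl_union hS (singleton_subset_iff.2 hz), union_singleton]
  rw [← key y hy]
  exact hG.2.2.2.2.2 y hy x hx hyx (cl S) (hG.cl_subset hS) (hG.cl_cl hS) (by rwa [key x hx]) hyS

theorem notMem_cl_of_subset_cl_singleton (hG : IsConvexGeometry G cl) (hGfin : G.Finite)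
    {W : Set α} {y : α} (hy : y ∈ G) (hW : W ⊆ cl {y}) (hyW : y ∉ W) : y ∉ cl W := by
  intro hyW'
  have hWG : W ⊆ G := hW.trans (hG.cl_subset (singleton_subset_iff.2 hy))
  have hfin : {V | V ⊆ W ∧ y ∈ cl V}.Finite :=
    (hGfin.subset hWG).finite_subsets.subset fun V hV => hV.1
  obtain ⟨V, ⟨hVW, hyV⟩, hmin⟩ := hfin.exists_minimal ⟨W, subset_rfl, hyW'⟩
  obtain ⟨w, hw⟩ : V.Nonempty :=
    nonempty_iff_ne_empty.2 (by rintro rfl; rw [hG.2.2.2.2.1] at hyV; exact hyV)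
  have hyw : y ∉ cl (V \ {w}) := fun h => (hmin ⟨sdiff_subset.trans hVW, h⟩ sdiff_subset hw).2 rfl
  refine hG.notMem_cl_insert (sdiff_subset.trans (hVW.trans hWG)) (hWG (hVW hw)) hy
    (fun h => hyW (h ▸ hVW hw)) hyw (by rwa [insert_sdiff_singleton, insert_eq_of_mem hw]) ?_
  exact hG.cl_mono (singleton_subset_iff.2 (mem_insert y _))
    (insert_subset hy (sdiff_subset.trans (hVW.trans hWG))) (hW (hVW hw))

theorem cl_cl_singleton_sdiff (hG : IsConvexGeometry G cl) (hGfin : G.Finite) {y : α}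
    (hy : y ∈ G) : cl (cl {y} \ {y}) = cl {y} \ {y} := by
  have hyG : {y} ⊆ G := singleton_subset_iff.2 hy
  refine Subset.antisymm (fun z hz => ⟨?_, ?_⟩)
    (hG.subset_cl (sdiff_subset.trans (hG.cl_subset hyG)))
  · exact (hG.cl_mono sdiff_subset (hG.cl_subset hyG)).trans (hG.cl_cl hyG).subset hz
  · intro hzy
    rw [mem_singleton_iff] at hzy
    subst hzy
    exact hG.notMem_cl_of_subset_cl_singleton (W := cl {z} \ {z}) hGfin hy sdiff_subset
      (fun h => h.2 rfl) hz

end IsConvexGeometry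

/-- The body of `IsSubGeometry`, for a given embedding `φ`. -/
def IsSubGeometryMap_s9 {α β : Type*} (A : Set α) (clG : Set α → Set α) (B : Set β)
    (clH : Set β → Set β) (φ : Set α → Set β) : Prop :=
  (∀ X : Set α, X ⊆ A → clG X = X → φ X ⊆ B ∧ clH (φ X) = φ X) ∧
  (∀ X Y : Set α, X ⊆ A → clG X = X → Y ⊆ A → clG Y = Y → φ X = φ Y → X = Y) ∧
  (∀ X Y : Set α, X ⊆ A → clG X = X → Y ⊆ A → clG Y = Y →
    φ (X ∩ Y) = φ X ∩ φ Y) ∧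
  (∀ X Y : Set α, X ⊆ A → clG X = X → Y ⊆ A → clG Y = Y →
    φ (clG (X ∪ Y)) = clH (φ X ∪ φ Y))

theorem convexHull_union_convexHull_inter {E : Type*} [AddCommGroup E] [Module ℝ E]
    {s t B : Set E} (ht : t ⊆ B) :
    convexHull ℝ (s ∪ (convexHull ℝ t ∩ B)) ∩ B = convexHull ℝ (s ∪ t) ∩ B := by
  congr 1
  refine Subset.antisymm ?_ (convexHull_mono (union_subset_union_right s
    (subset_inter (subset_convexHull ℝ t) ht)))
  exact (convexHull_mono (union_subset_union_right s inter_subset_left)).trans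
    (convexHull_convexHull_union_right s t).subset

namespace IsSubGeometryMap_s9

variable {α β : Type*} {A : Set α} {clG : Set α → Set α} {B : Set β} {clH : Set β → Set β}
  {φ : Set α → Set β}

theorem map_subset (hφ : IsSubGeometryMap_s9 A clG B clH φ) (hG : IsConvexGeometry A clG) {S : Set α}
    (hS : S ⊆ A) : φ (clG S) ⊆ B :=
  (hφ.1 _ (hG.cl_subset hS) (hG.cl_cl hS)).1

theorem mono (hφ : IsSubGeometryMap_s9 A clG B clH φ) {U V : Set α} (hU : U ⊆ A) (hUc : clG U = U)
    (hV : V ⊆ A) (hVc : clG V = V) (hUV : U ⊆ V) : φ U ⊆ φ V := by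
  rw [← inter_eq_left.2 hUV, hφ.2.2.1 U V hU hUc hV hVc]
  exact inter_subset_right

theorem map_cl_singleton_subset (hφ : IsSubGeometryMap_s9 A clG B clH φ)
    (hG : IsConvexGeometry A clG) {S : Set α} {z : α} (hS : S ⊆ A) (hz : z ∈ clG S) :
    φ (clG {z}) ⊆ φ (clG S) :=
  have hzA : {z} ⊆ A := singleton_subset_iff.2 (hG.cl_subset hS hz)
  hφ.mono (hG.cl_subset hzA) (hG.cl_cl hzA) (hG.cl_subset hS) (hG.cl_cl hS)
    (hG.cl_singleton_subset hS hz)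

theorem map_cl_union (hφ : IsSubGeometryMap_s9 A clG B clH φ) (hG : IsConvexGeometry A clG)
    {S T : Set α} (hS : S ⊆ A) (hT : T ⊆ A) :
    φ (clG (S ∪ T)) = clH (φ (clG S) ∪ φ (clG T)) := by
  rw [← hG.cl_cl_union_cl hS hT]
  exact hφ.2.2.2 _ _ (hG.cl_subset hS) (hG.cl_cl hS) (hG.cl_subset hT) (hG.cl_cl hT)

theorem map_cl_pair (hφ : IsSubGeometryMap_s9 A clG B clH φ) (hG : IsConvexGeometry A clG)
    {a b : α} (ha : a ∈ A) (hb : b ∈ A) :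
    φ (clG {a, b}) = clH (φ (clG {a}) ∪ φ (clG {b})) := by
  rw [insert_eq]
  exact hφ.map_cl_union hG (singleton_subset_iff.2 ha) (singleton_subset_iff.2 hb)

theorem exists_forall_mem_map_cl_iff (hφ : IsSubGeometryMap_s9 A clG B clH φ)
    (hG : IsConvexGeometry A clG) (hAfin : A.Finite) {z : α} (hz : z ∈ A) :
    ∃ q, ∀ S ⊆ A, q ∈ φ (clG S) ↔ z ∈ clG S := by
  have hzA : {z} ⊆ A := singleton_subset_iff.2 hz
  have hW : clG {z} \ {z} ⊆ A := sdiff_subset.trans (hG.cl_subset hzA)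
  have hWc := hG.cl_cl_singleton_sdiff hAfin hz
  obtain ⟨q, hq, hqW⟩ : ∃ q ∈ φ (clG {z}), q ∉ φ (clG {z} \ {z}) := by
    by_contra! h
    have hWz := hφ.2.1 _ _ hW hWc (hG.cl_subset hzA) (hG.cl_cl hzA)
      (Subset.antisymm (hφ.mono hW hWc (hG.cl_subset hzA) (hG.cl_cl hzA) sdiff_subset) h)
    have hzW : z ∈ clG {z} \ {z} := by rw [hWz]; exact hG.mem_cl_singleton hz
    exact hzW.2 rfl
  refine ⟨q, fun S hS => ⟨fun hqS => by_contra fun hzS => hqW ?_,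
    fun hzS => hφ.map_cl_singleton_subset hG hS hzS hq⟩⟩
  have hI : clG {z} ∩ clG S ⊆ clG {z} \ {z} := fun x hx => ⟨hx.1, fun hxz => hzS (hxz ▸ hx.2)⟩
  have hIA : clG {z} ∩ clG S ⊆ A := inter_subset_right.trans (hG.cl_subset hS)
  refine hφ.mono hIA (hG.cl_inter (hG.cl_subset hzA) (hG.cl_subset hS) (hG.cl_cl hzA) (hG.cl_cl hS))
    hW hWc hI ?_
  rw [hφ.2.2.1 _ _ (hG.cl_subset hzA) (hG.cl_cl hzA) (hG.cl_subset hS) (hG.cl_cl hS)]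
  exact ⟨hq, hqS⟩

theorem map_cl_triple {E : Type*} [AddCommGroup E] [Module ℝ E] {A : Set α} {B : Set E}
    {φ : Set α → Set E} (hφ : IsSubGeometryMap_s9 A clG B (fun Z => convexHull ℝ Z ∩ B) φ)
    (hG : IsConvexGeometry A clG) {a b c : α} (ha : a ∈ A) (hb : b ∈ A) (hc : c ∈ A) :
    φ (clG {a, b, c}) = convexHull ℝ (φ (clG {a}) ∪ φ (clG {b}) ∪ φ (clG {c})) ∩ B := by
  have hbc : {b, c} ⊆ A := insert_subset hb (singleton_subset_iff.2 hc)
  rw [insert_eq, hφ.map_cl_union hG (singleton_subset_iff.2 ha) hbc, hφ.map_cl_pair hG hb hc,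
    union_assoc]
  exact convexHull_union_convexHull_inter (union_subset
    (hφ.map_subset hG (singleton_subset_iff.2 hb)) (hφ.map_subset hG (singleton_subset_iff.2 hc)))

section ConvexHull

variable {E : Type*} [AddCommGroup E] [Module ℝ E] {B : Set E} {φ : Set α → Set E}
  {q : E} {z : α}

theorem mem_convexHull_pair_iff (hφ : IsSubGeometryMap_s9 A clG B (fun Z => convexHull ℝ Z ∩ B) φ)
    (hG : IsConvexGeometry A clG) (hq : ∀ S ⊆ A, q ∈ φ (clG S) ↔ z ∈ clG S) (hz : z ∈ A)
    {u v : α} (hu : u ∈ A) (hv : v ∈ A) :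
    q ∈ convexHull ℝ (φ (clG {u}) ∪ φ (clG {v})) ↔ z ∈ clG {u, v} := by
  have hqB : q ∈ B := hφ.map_subset hG (singleton_subset_iff.2 hz)
    ((hq _ (singleton_subset_iff.2 hz)).2 (hG.mem_cl_singleton hz))
  rw [← hq _ (insert_subset hu (singleton_subset_iff.2 hv)), hφ.map_cl_pair hG hu hv]
  exact (and_iff_left hqB).symm

theorem mem_convexHull_triple_iff (hφ : IsSubGeometryMap_s9 A clG B (fun Z => convexHull ℝ Z ∩ B) φ)
    (hG : IsConvexGeometry A clG) (hq : ∀ S ⊆ A, q ∈ φ (clG S) ↔ z ∈ clG S) (hz : z ∈ A)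
    {u v w : α} (hu : u ∈ A) (hv : v ∈ A) (hw : w ∈ A) :
    q ∈ convexHull ℝ (φ (clG {u}) ∪ φ (clG {v}) ∪ φ (clG {w})) ↔ z ∈ clG {u, v, w} := by
  have hqB : q ∈ B := hφ.map_subset hG (singleton_subset_iff.2 hz)
    ((hq _ (singleton_subset_iff.2 hz)).2 (hG.mem_cl_singleton hz))
  rw [← hq _ (insert_subset hu (insert_subset hv (singleton_subset_iff.2 hw))),
    hφ.map_cl_triple hG hu hv hw]
  exact (and_iff_left hqB).symm

theorem notMem_cl_insert_of_mem_convexHull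
    (hφ : IsSubGeometryMap_s9 A clG B (fun Z => convexHull ℝ Z ∩ B) φ) (hG : IsConvexGeometry A clG)
    (hq : ∀ S ⊆ A, q ∈ φ (clG S) ↔ z ∈ clG S) {p : E} {x a d : α} (hpx : p ∈ φ (clG {x}))
    (hz : z ∈ A) (hx : x ∈ A) (ha : a ∈ A) (hd : d ∈ A) (hzx : z ≠ x) (hzad : z ∉ clG {a, d})
    (hqd : q ∈ convexHull ℝ (φ (clG {a}) ∪ φ (clG {d}) ∪ {p})) : x ∉ clG {z, a, d} := by
  refine hG.notMem_cl_insert (insert_subset ha (singleton_subset_iff.2 hd)) hx hz hzx hzad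
    ((hφ.mem_convexHull_triple_iff hG hq hz hx ha hd).1 (convexHull_mono ?_ hqd))
  exact union_subset (union_subset (subset_union_right.trans subset_union_left) subset_union_right)
    (singleton_subset_iff.2 (Or.inl (Or.inl hpx)))

end ConvexHull

end IsSubGeometryMap_s9

/-- Theorem `sharp` of the paper: in any finite sub-geometry `(G, cl)`
of a finite two-dimensional geometry `Co(ℝ², G₀)`: if `y ∈ cl {a,b,c}`, the closure
of `y` meets neither `cl {a,b}`, `cl {b,c}`, `cl {a,c}` nor `cl {x}`, and
`x ∈ cl {y,a,b}` and `x ∈ cl {y,a,c}`, then `cl {x} ∩ cl {y,a} ≠ ∅`. -/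
theorem stmt_9 {α : Type*} (G₀ : Set (Fin 2 → ℝ)) (hG₀ : G₀.Finite)
    (G : Set α) (cl : Set α → Set α) (hG : IsConvexGeometry G cl) (hGfin : G.Finite)
    (hsub : IsSubGeometry G cl G₀ (fun Z => convexHull ℝ Z ∩ G₀))
    (x y a b c : α)
    (hx : x ∈ G) (hy : y ∈ G) (ha : a ∈ G) (hb : b ∈ G) (hc : c ∈ G)
    (h1 : y ∈ cl {a, b, c})
    (h2 : cl {y} ∩ cl {a, b} = ∅)
    (h3 : cl {y} ∩ cl {b, c} = ∅)
    (h4 : cl {y} ∩ cl {a, c} = ∅)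
    (h5 : cl {y} ∩ cl {x} = ∅)
    (h6 : x ∈ cl {y, a, b})
    (h7 : x ∈ cl {y, a, c}) :
    cl {x} ∩ cl {y, a} ≠ ∅ := by
  obtain ⟨φ, hφ⟩ := hsub
  replace hφ : IsSubGeometryMap_s9 G cl G₀ (fun Z => convexHull ℝ Z ∩ G₀) φ := hφ
  intro hxya
  have hyy : y ∈ cl {y} := hG.mem_cl_singleton hy
  have hxx : x ∈ cl {x} := hG.mem_cl_singleton hx
  have hyx : y ≠ x := by
    rintro rfl
    exact eq_empty_iff_forall_notMem.1 h5 y ⟨hyy, hyy⟩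
  obtain ⟨q, hq⟩ := hφ.exists_forall_mem_map_cl_iff hG hGfin hy
  obtain ⟨p, hp⟩ := hφ.exists_forall_mem_map_cl_iff hG hGfin hx
  have hqy : q ∈ φ (cl {y}) := (hq _ (singleton_subset_iff.2 hy)).2 hyy
  have hpx : p ∈ φ (cl {x}) := (hp _ (singleton_subset_iff.2 hx)).2 hxx
  have hqBC : q ∉ convexHull ℝ (φ (cl {b}) ∪ φ (cl {c})) := fun h =>
    eq_empty_iff_forall_notMem.1 h3 y ⟨hyy, (hφ.mem_convexHull_pair_iff hG hq hy hb hc).1 h⟩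
  have hpYA : p ∉ convexHull ℝ (φ (cl {y}) ∪ φ (cl {a})) := fun h =>
    eq_empty_iff_forall_notMem.1 hxya x ⟨hxx, (hφ.mem_convexHull_pair_iff hG hp hx hy ha).1 h⟩
  rcases mem_convexHull_union_or_of_fin_two
      (hG₀.subset (hφ.map_subset hG (singleton_subset_iff.2 hy)))
      (hG₀.subset (hφ.map_subset hG (singleton_subset_iff.2 ha)))
      ((hφ.mem_convexHull_triple_iff hG hq hy ha hb hc).2 h1) hqBC
      (subset_convexHull ℝ _ (Or.inl hqy))
      ((hφ.mem_convexHull_triple_iff hG hp hx hy ha hb).2 h6)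
      ((hφ.mem_convexHull_triple_iff hG hp hx hy ha hc).2 h7) hpYA with h | h
  · exact hφ.notMem_cl_insert_of_mem_convexHull hG hq hpx hy hx ha hb hyx
      (fun h => eq_empty_iff_forall_notMem.1 h2 y ⟨hyy, h⟩) h h6
  · exact hφ.notMem_cl_insert_of_mem_convexHull hG hq hpx hy hx ha hc hyx
      (fun h => eq_empty_iff_forall_notMem.1 h4 y ⟨hyy, h⟩) h h7
end

section
/- Let m ≥ 5 and let p : Fin m → ℝ² be the vertices of a convex polygon listed in circular order. Let i₁ < i₂ < i₃ < i₄ < i₅ be five indices in Fin m, and suppose a point q ∈ ℝ² lies on both the segment joining p i₁ and p i₃ and the segment joining p i₂ and p i₄. Then q ∈ convexHull ℝ {p i₅, p i₂, p i₃}. -/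
/-- The signed area (cross product) of the triangle `o, a, b` in the plane. -/
def cross2 (o a b : Fin 2 → ℝ) : ℝ :=
  (a 0 - o 0) * (b 1 - o 1) - (a 1 - o 1) * (b 0 - o 0)

/-- `p : Fin m → ℝ²` lists the vertices of a convex polygon in circular order:
for every index `i`, all points `p j` with `j ∉ {i, i+1}` lie strictly on the same
side of the line through `p i` and `p (i+1)` (indices taken mod `m`). -/
def InCircularConvexPosition {m : ℕ} [NeZero m] (p : Fin m → (Fin 2 → ℝ)) : Prop :=
  ∀ i j k : Fin m, j ≠ i → j ≠ i + 1 → k ≠ i → k ≠ i + 1 →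
    0 < cross2 (p i) (p (i + 1)) (p j) * cross2 (p i) (p (i + 1)) (p k)

/-!
Every vertex is an extreme point of the polygon. Hence for a chord `p u p v`, two consecutive
vertices off the chord lie strictly on the same side of it: otherwise their edge meets the line
`p u p v` in a point `x`, and among the collinear points `x, p u, p v` either a vertex lies between
the other two (so in the hull of three other vertices) or `x` lies between `p u` and `p v`, which
are strictly on one side of the edge. Walking along an arc, all vertices of an arc avoiding `u, v`
are on one side of the chord. Thus `p i₄, p i₅` are on one side of `p i₂ p i₃`, `p i₁, p i₂` on
one side of `p i₃ p i₅`, and `p i₃, p i₄` on one side of `p i₅ p i₂`; as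
`q ∈ [p i₁, p i₃] ∩ [p i₂, p i₄]`, its barycentric coordinates with respect to `p i₅, p i₂, p i₃`
are nonnegative.
-/

@[simp] lemma cross2_self_first (o a : Fin 2 → ℝ) : cross2 o a o = 0 := by
  simp only [cross2]; ring

@[simp] lemma cross2_self_second (o a : Fin 2 → ℝ) : cross2 o a a = 0 := by
  simp only [cross2]; ring

lemma cross2_cyclic (a b c : Fin 2 → ℝ) : cross2 a b c = cross2 b c a := by
  simp only [cross2]; ring

lemma cross2_smul_add_smul (o z x y : Fin 2 → ℝ) {a b : ℝ} (hab : a + b = 1) :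
    cross2 o z (a • x + b • y) = a * cross2 o z x + b * cross2 o z y := by
  obtain rfl : b = 1 - a := by linarith
  simp only [cross2, Pi.add_apply, Pi.smul_apply, smul_eq_mul]; ring

lemma continuous_cross2 (o z : Fin 2 → ℝ) : Continuous (cross2 o z) := by
  unfold cross2; fun_prop

lemma cross2_eq_zero_of_mem_segment {o z x : Fin 2 → ℝ} (hx : x ∈ segment ℝ o z) :
    cross2 o z x = 0 := by
  obtain ⟨a, b, -, -, hab, rfl⟩ := hx
  simp [cross2_smul_add_smul o z o z hab]

lemma cross2_mul_pos_of_mem_segment {o z x y q : Fin 2 → ℝ}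
    (h : 0 < cross2 o z x * cross2 o z y) (hq : q ∈ segment ℝ x y) :
    0 < cross2 o z x * cross2 o z q := by
  obtain ⟨a, b, ha, hb, hab, rfl⟩ := hq
  rw [cross2_smul_add_smul o z x y hab, mul_add, mul_left_comm, mul_left_comm _ b]
  rcases ha.eq_or_lt with rfl | ha
  · simpa [show b = 1 by linarith] using h
  · exact add_pos_of_pos_of_nonneg (mul_pos ha (mul_self_pos.2 (left_ne_zero_of_mul h.ne')))
      (mul_nonneg hb h.le)

lemma cross2_mul_nonneg_of_mem_segment {o z x y q : Fin 2 → ℝ} (hx : cross2 o z x = 0)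
    (hq : q ∈ segment ℝ x y) : 0 ≤ cross2 o z y * cross2 o z q := by
  obtain ⟨a, b, -, hb, hab, rfl⟩ := hq
  rw [cross2_smul_add_smul o z x y hab, hx, mul_zero, zero_add, mul_left_comm]
  exact mul_nonneg hb (mul_self_nonneg _)

lemma exists_mem_segment_cross2_eq_zero {o z x y : Fin 2 → ℝ}
    (h : cross2 o z x * cross2 o z y ≤ 0) : ∃ q ∈ segment ℝ x y, cross2 o z q = 0 := by
  have ivt {a b} (ha : a ∈ segment ℝ x y) (hb : b ∈ segment ℝ x y) :=
    (convex_segment x y).isPreconnected.intermediate_value ha hb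
      (continuous_cross2 o z).continuousOn
  rcases mul_nonpos_iff.1 h with ⟨hx, hy⟩ | ⟨hx, hy⟩
  · exact ivt (right_mem_segment ℝ x y) (left_mem_segment ℝ x y) ⟨hy, hx⟩
  · exact ivt (left_mem_segment ℝ x y) (right_mem_segment ℝ x y) ⟨hx, hy⟩

lemma mem_affineSpan_pair_of_cross2_eq_zero {a b c : Fin 2 → ℝ} (hab : a ≠ b)
    (h : cross2 a b c = 0) : c ∈ line[ℝ, a, b] := by
  have hd : (b 0 - a 0) ^ 2 + (b 1 - a 1) ^ 2 ≠ 0 := by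
    intro hd
    refine hab (funext fun i => ?_)
    fin_cases i <;> simp <;> nlinarith [sq_nonneg (b 0 - a 0), sq_nonneg (b 1 - a 1)]
  -- the parameter of the orthogonal projection of `c` on the line
  set t := ((c 0 - a 0) * (b 0 - a 0) + (c 1 - a 1) * (b 1 - a 1)) /
    ((b 0 - a 0) ^ 2 + (b 1 - a 1) ^ 2)
  convert AffineMap.lineMap_mem_affineSpan_pair t a b
  unfold cross2 at h
  funext i
  fin_cases i <;> simp [AffineMap.lineMap_apply, t] <;> field_simp
  · linear_combination (a 1 - b 1) * h
  · linear_combination (b 0 - a 0) * h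

lemma convex_cross2_wedge_diff_apex (o₁ z₁ o₂ z₂ : Fin 2 → ℝ) (c₁ c₂ : ℝ) :
    Convex ℝ {x | 0 ≤ cross2 o₁ z₁ x * c₁ ∧ 0 ≤ cross2 o₂ z₂ x * c₂ ∧
      (0 < cross2 o₁ z₁ x * c₁ ∨ 0 < cross2 o₂ z₂ x * c₂)} := by
  intro x ⟨hx₁, hx₂, hx⟩ y ⟨hy₁, hy₂, hy⟩ a b ha hb hab
  simp only [Set.mem_ofPred_eq, cross2_smul_add_smul _ _ x y hab, add_mul, mul_assoc]
  refine ⟨by positivity, by positivity, ?_⟩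
  rcases ha.eq_or_lt with rfl | ha
  · simpa [show b = 1 by linarith] using hy
  · rcases hx with hx | hx
    · exact Or.inl (by nlinarith [mul_pos ha hx, mul_nonneg hb hy₁])
    · exact Or.inr (by nlinarith [mul_pos ha hx, mul_nonneg hb hy₂])

lemma mem_convexHull_of_cross2_mul_nonneg {a b c q : Fin 2 → ℝ} (hD : cross2 a b c ≠ 0)
    (ha : 0 ≤ cross2 b c a * cross2 b c q) (hb : 0 ≤ cross2 c a b * cross2 c a q)
    (hc : 0 ≤ cross2 a b c * cross2 a b q) : q ∈ convexHull ℝ {a, b, c} := by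
  set D := cross2 a b c
  rw [← cross2_cyclic] at ha
  rw [← cross2_cyclic, ← cross2_cyclic] at hb
  have weight_nonneg : ∀ X, 0 ≤ D * X → 0 ≤ X / D := fun X h => by
    rw [← mul_div_mul_left X D hD]; exact div_nonneg h (mul_self_nonneg D)
  -- Cramer's rule: the barycentric coordinates of `q` are ratios of signed areas
  have cramer : D • q = cross2 b c q • a + cross2 c a q • b + cross2 a b q • c := by
    funext i
    fin_cases i <;> simp [D, cross2] <;> ring
  have hq : q = (cross2 b c q / D) • a + (cross2 c a q / D) • b + (cross2 a b q / D) • c := by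
    conv_lhs => rw [← inv_smul_smul₀ hD q, cramer]
    simp only [smul_add, smul_smul, div_eq_inv_mul]
  have hsum : cross2 b c q / D + cross2 c a q / D + cross2 a b q / D = 1 := by
    rw [← add_div, ← add_div, div_eq_one_iff_eq hD]
    simp only [D, cross2]; ring
  rw [hq]
  simpa [Fin.sum_univ_three] using (convex_convexHull ℝ {a, b, c}).sum_mem
    (t := Finset.univ) (w := ![cross2 b c q / D, cross2 c a q / D, cross2 a b q / D])
    (z := ![a, b, c])
    (by simp [Fin.forall_fin_succ, weight_nonneg _ ha, weight_nonneg _ hb, weight_nonneg _ hc])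
    (by simpa [Fin.sum_univ_three] using hsum)
    (fun i _ => subset_convexHull ℝ _ (by fin_cases i <;> simp))

lemma Fin.pos_mul_of_forall_pos_mul_add_one {m : ℕ} [NeZero m] {g : Fin m → ℝ} {j k : Fin m}
    (hjk : j < k) (h : ∀ t, j ≤ t → t < k → 0 < g t * g (t + 1)) : 0 < g j * g k := by
  obtain ⟨k, hk⟩ := k
  induction k, (show j.val + 1 ≤ k from hjk) using Nat.le_induction with
  | base =>
    have e : j + 1 = ⟨j + 1, hk⟩ := Fin.ext (Fin.val_add_one_of_lt' hk)
    rw [← e]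
    exact h j le_rfl hjk
  | succ n hjn ih =>
    have e : (⟨n, by omega⟩ + 1 : Fin m) = ⟨n + 1, hk⟩ := Fin.ext (Fin.val_add_one_of_lt' hk)
    have hjn' := ih (by omega) (Fin.lt_def.2 hjn)
      (fun t h₁ h₂ => h t h₁ (h₂.trans (Fin.lt_def.2 (Nat.lt_succ_self _))))
    have hn := h ⟨n, by omega⟩ (Fin.le_def.2 (by simp only; omega))
      (Fin.lt_def.2 (Nat.lt_succ_self _))
    rw [e] at hn
    nlinarith [mul_pos hjn' hn, mul_self_nonneg (g ⟨n, by omega⟩)]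

lemma Fin.add_one_ne_self {m : ℕ} [NeZero m] (hm : 2 ≤ m) (v : Fin m) : v + 1 ≠ v := by
  rw [Ne, add_eq_left, Fin.ext_iff, Fin.val_one', Fin.val_zero, Nat.mod_eq_of_lt (by omega)]
  omega

lemma Fin.add_one_add_one_ne_self {m : ℕ} [NeZero m] (hm : 3 ≤ m) (v : Fin m) :
    v + 1 + 1 ≠ v := by
  rw [Ne, add_assoc, add_eq_left, Fin.ext_iff, Fin.val_add, Fin.val_one', Fin.val_zero,
    Nat.mod_eq_of_lt (by omega : 1 < m), Nat.mod_eq_of_lt (by omega : 1 + 1 < m)]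
  omega

lemma mul_nonneg_of_mul_pos_of_mul_nonneg {x y z : ℝ} (hxy : 0 < x * y) (hxz : 0 ≤ x * z) :
    0 ≤ y * z := by
  nlinarith [mul_nonneg hxy.le hxz, mul_self_pos.2 (left_ne_zero_of_mul hxy.ne')]

namespace InCircularConvexPosition

variable {m : ℕ} [NeZero m] {p : Fin m → Fin 2 → ℝ}

theorem notMem_convexHull_image_compl (hp : InCircularConvexPosition p) (hm : 3 ≤ m)
    (w : Fin m) : p w ∉ convexHull ℝ (p '' {w}ᶜ) := by
  obtain ⟨v, rfl⟩ : ∃ v, w = v + 1 := ⟨w - 1, (sub_add_cancel w 1).symm⟩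
  have h₁ := Fin.add_one_ne_self (by omega) v
  have h₂ := Fin.add_one_add_one_ne_self hm v
  have h₃ := Fin.add_one_ne_self (by omega) (v + 1)
  -- `p (v + 1)` is the apex of the wedge bounded by the lines of its two edges; the wedge minus
  -- its apex is convex and contains every other vertex
  have hW := convex_cross2_wedge_diff_apex (p (v + 1)) (p (v + 1 + 1)) (p v) (p (v + 1))
    (cross2 (p (v + 1)) (p (v + 1 + 1)) (p v)) (cross2 (p v) (p (v + 1)) (p (v + 1 + 1)))
  intro h
  refine absurd (convexHull_min ?_ hW h) (by simp)
  rintro _ ⟨j, hj, rfl⟩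
  have hj : j ≠ v + 1 := hj
  have hpos₁ : j ≠ v + 1 + 1 → _ := (hp (v + 1) j v hj · h₁.symm h₂.symm)
  have hpos₂ : j ≠ v → _ := (hp v j (v + 1 + 1) · hj h₂ h₃)
  by_cases hj₁ : j = v + 1 + 1
  · subst hj₁
    exact ⟨by simp, (hpos₂ h₂).le, Or.inr (hpos₂ h₂)⟩
  by_cases hj₂ : j = v
  · subst hj₂
    exact ⟨(hpos₁ hj₁).le, by simp, Or.inl (hpos₁ hj₁)⟩
  exact ⟨(hpos₁ hj₁).le, (hpos₂ hj₂).le, Or.inl (hpos₁ hj₁)⟩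

theorem injective (hp : InCircularConvexPosition p) (hm : 3 ≤ m) : Function.Injective p :=
  fun u v huv => by_contra fun h => hp.notMem_convexHull_image_compl hm u
    (subset_convexHull ℝ _ ⟨v, Ne.symm h, huv.symm⟩)

theorem cross2_mul_cross2_add_one_pos (hp : InCircularConvexPosition p) (hm : 3 ≤ m)
    {u v j : Fin m} (huv : u ≠ v) (hju : j ≠ u) (hjv : j ≠ v) (hj₁u : j + 1 ≠ u)
    (hj₁v : j + 1 ≠ v) : 0 < cross2 (p u) (p v) (p j) * cross2 (p u) (p v) (p (j + 1)) := by
  by_contra! h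
  obtain ⟨x, hx, hx₀⟩ := exists_mem_segment_cross2_eq_zero h
  have not_between : ∀ {w w'}, w' ≠ w → j ≠ w → j + 1 ≠ w → p w ∉ segment ℝ x (p w') :=
    fun {w w'} hw' hj hj₁ hw => hp.notMem_convexHull_image_compl hm w <|
      (convex_convexHull ℝ _).segment_subset
        (segment_subset_convexHull (s := p '' {w}ᶜ) ⟨j, hj, rfl⟩ ⟨j + 1, hj₁, rfl⟩ hx)
        (subset_convexHull ℝ _ ⟨w', hw', rfl⟩) hw
  have hcol : Collinear ℝ {x, p u, p v} := collinear_insert_of_mem_affineSpan_pair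
    (mem_affineSpan_pair_of_cross2_eq_zero ((hp.injective hm).ne huv) hx₀)
  rcases hcol.wbtw_or_wbtw_or_wbtw with hb | hb | hb
  · exact not_between huv.symm hju hj₁u (mem_segment_iff_wbtw.2 hb)
  · exact not_between huv hjv hj₁v (segment_symm ℝ (p u) x ▸ mem_segment_iff_wbtw.2 hb)
  · have hpos := cross2_mul_pos_of_mem_segment (hp j v u hjv.symm hj₁v.symm hju.symm hj₁u.symm)
      (mem_segment_iff_wbtw.2 hb)
    rw [cross2_eq_zero_of_mem_segment hx, mul_zero] at hpos
    exact hpos.false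

theorem cross2_mul_cross2_pos (hp : InCircularConvexPosition p) (hm : 3 ≤ m) {u v j k : Fin m}
    (huv : u ≠ v) (hjk : j < k) (hu : u ∉ Set.Icc j k) (hv : v ∉ Set.Icc j k) :
    0 < cross2 (p u) (p v) (p j) * cross2 (p u) (p v) (p k) := by
  refine Fin.pos_mul_of_forall_pos_mul_add_one (g := fun t ↦ cross2 (p u) (p v) (p t)) hjk
    fun t hjt htk => ?_
  have ht : t ∈ Set.Icc j k := ⟨hjt, htk.le⟩
  have ht₁ : t + 1 ∈ Set.Icc j k := by
    have := Fin.val_add_one_of_lt' (i := t) (by omega)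
    simp only [Set.mem_Icc, Fin.le_def, this] at ht ⊢
    omega
  exact hp.cross2_mul_cross2_add_one_pos hm huv (ne_of_mem_of_not_mem ht hu)
    (ne_of_mem_of_not_mem ht hv) (ne_of_mem_of_not_mem ht₁ hu) (ne_of_mem_of_not_mem ht₁ hv)

end InCircularConvexPosition

/-- Lemma 5 of the paper: if the vertices of a convex polygon are
listed in circular order and `q` lies on both the segment `[p i₁, p i₃]` and the
segment `[p i₂, p i₄]`, where `i₁ < i₂ < i₃ < i₄ < i₅`, then `q` lies in the
triangle spanned by `p i₅, p i₂, p i₃`. -/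
theorem stmt_10 (m : ℕ) [NeZero m] (hm : 5 ≤ m) (p : Fin m → (Fin 2 → ℝ))
    (hp : InCircularConvexPosition p)
    (i₁ i₂ i₃ i₄ i₅ : Fin m)
    (h12 : i₁ < i₂) (h23 : i₂ < i₃) (h34 : i₃ < i₄) (h45 : i₄ < i₅)
    (q : Fin 2 → ℝ)
    (hq1 : q ∈ segment ℝ (p i₁) (p i₃))
    (hq2 : q ∈ segment ℝ (p i₂) (p i₄)) :
    q ∈ convexHull ℝ ({p i₅, p i₂, p i₃} : Set (Fin 2 → ℝ)) := by
  have hm₃ : 3 ≤ m := by omega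
  have h₂₃₄₅ := hp.cross2_mul_cross2_pos hm₃ h23.ne h45
    (fun h => h.1.not_gt (h23.trans h34)) (fun h => h.1.not_gt h34)
  have h₃₅₁₂ := hp.cross2_mul_cross2_pos hm₃ (h34.trans h45).ne h12
    (fun h => h.2.not_gt h23) (fun h => h.2.not_gt (h23.trans (h34.trans h45)))
  have h₅₂₃₄ := hp.cross2_mul_cross2_pos hm₃ (h23.trans (h34.trans h45)).ne' h34
    (fun h => h.2.not_gt h45) (fun h => h.1.not_gt h23)
  refine mem_convexHull_of_cross2_mul_nonneg (left_ne_zero_of_mul h₅₂₃₄.ne') ?_ ?_ ?_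
  · exact mul_nonneg_of_mul_pos_of_mul_nonneg h₂₃₄₅
      (cross2_mul_nonneg_of_mem_segment (cross2_self_first _ _) hq2)
  · exact mul_nonneg_of_mul_pos_of_mul_nonneg h₃₅₁₂
      (cross2_mul_nonneg_of_mem_segment (cross2_self_first _ _)
        (segment_symm ℝ (p i₁) _ ▸ hq1))
  · exact mul_nonneg_of_mul_pos_of_mul_nonneg (h₅₂₃₄.trans_eq (mul_comm _ _))
      (cross2_mul_nonneg_of_mem_segment (cross2_self_second _ _) hq2)
end

section
/- Let m ≥ 4 and let p : Fin m → ℝ² be the vertices of a convex polygon listed in circular order. Let the index set Fin m be partitioned into three disjoint sets I_A, I_B, I_C. Suppose the vertices of one of the parts are separated by vertices of the others in the circular order: there exist indices i₁ < i₂ < i₃ < i₄ in Fin m such that i₁ and i₃ belong to the same part T ∈ {I_A, I_B, I_C} while i₂ and i₄ do not belong to T. Set A = p '' I_A, B = p '' I_B, C = p '' I_C. Then convexHull ℝ (A ∪ B ∪ C) ⊆ convexHull ℝ (A ∪ B) ∪ convexHull ℝ (A ∪ C) ∪ convexHull ℝ (B ∪ C). -/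
open Finset in
theorem exists_mem_convexHull_insert_image_compl {𝕜 E ι : Type*} [Field 𝕜] [LinearOrder 𝕜]
    [IsStrictOrderedRing 𝕜] [AddCommGroup E] [Module 𝕜 E] [Fintype ι]
    (z : ι → E) {w l : ι → 𝕜} (hw : ∀ i, 0 ≤ w i) (hw1 : ∑ i, w i = 1) (hl1 : ∑ i, l i = 1) :
    ∃ j, ∑ i, w i • z i ∈ convexHull 𝕜 (insert (∑ i, l i • z i) (z '' {j}ᶜ)) := by
  classical
  have hpos : (univ.filter fun i ↦ 0 < l i).Nonempty := by
    by_contra h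
    rw [not_nonempty_iff_eq_empty, filter_eq_empty_iff] at h
    have : ∑ i, l i ≤ 0 := sum_nonpos fun i _ ↦ not_lt.mp (h (mem_univ i))
    linarith
  -- Take away the largest multiple `t • x` keeping all weights nonnegative; the index `j`
  -- realising `t = min (w i / l i)` over `l i > 0` then gets weight zero.
  obtain ⟨j, hj, hmin⟩ := exists_min_image _ (fun i ↦ w i / l i) hpos
  rw [mem_filter_univ] at hj
  set t := w j / l j
  set c : Option ι → 𝕜 := fun o ↦ o.elim t fun i ↦ w i - t * l i
  set y : Option ι → E := fun o ↦ o.elim (∑ i, l i • z i) z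
  have hc : ∀ o, 0 ≤ c o := by
    rintro (_ | i)
    · exact div_nonneg (hw j) hj.le
    show 0 ≤ w i - t * l i
    rcases lt_or_ge 0 (l i) with h | h
    · exact sub_nonneg.mpr ((le_div_iff₀ h).mp (hmin i (by simpa using h)))
    · nlinarith [hw i, div_nonneg (hw j) hj.le]
  have hcj : c (some j) = 0 := by simp only [c, t, Option.elim]; field_simp; ring
  have hsum : ∑ o ∈ univ.erase (some j), c o = 1 := by
    rw [sum_erase _ hcj, Fintype.sum_option]
    simp only [c, Option.elim, sum_sub_distrib, ← mul_sum, hw1, hl1]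
    ring
  have hcomb : ∑ o ∈ univ.erase (some j), c o • y o = ∑ i, w i • z i := by
    rw [sum_erase _ (by rw [hcj, zero_smul]), Fintype.sum_option]
    simp only [c, y, Option.elim, sub_smul, sum_sub_distrib, smul_sum, mul_smul]
    abel
  refine ⟨j, hcomb ▸ (convex_convexHull 𝕜 _).sum_mem (fun o _ ↦ hc o) hsum ?_⟩
  rintro (_ | i) hi
  · exact subset_convexHull 𝕜 _ (Set.mem_insert _ _)
  · exact subset_convexHull 𝕜 _ (Set.mem_insert_of_mem _
      ⟨i, fun h ↦ by simp_all, rfl⟩)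

open Finset Module in
theorem exists_card_le_finrank_mem_convexHull_insert_s11 {𝕜 E : Type*} [Field 𝕜] [LinearOrder 𝕜]
    [IsStrictOrderedRing 𝕜] [AddCommGroup E] [Module 𝕜 E] [FiniteDimensional 𝕜 E]
    {s : Set E} {q : E} (hq : q ∈ convexHull 𝕜 s) (x : E) :
    ∃ t : Finset E, ↑t ⊆ s ∧ #t ≤ finrank 𝕜 E ∧ q ∈ convexHull 𝕜 (insert x ↑t) := by
  classical
  obtain ⟨ι, _, z, w, hzs, hai, hw, hw1, rfl⟩ := eq_pos_convex_span_of_mem_convexHull hq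
  have himage : ∀ u : Finset ι, ↑(u.image z) ⊆ s := fun u ↦ by
    rw [coe_image]; exact (Set.image_subset_range _ _).trans hzs
  have hcard : Fintype.card ι ≤ finrank 𝕜 E + 1 :=
    hai.card_le_finrank_succ.trans (by gcongr; exact Submodule.finrank_le _)
  -- A family of `finrank + 1` affinely independent points spans `E`, so then `x` is an affine
  -- combination of it.
  rcases hcard.lt_or_eq with hlt | heq
  · refine ⟨univ.image z, himage _, card_image_le.trans (by simpa [Nat.lt_succ_iff] using hlt),
      (convex_convexHull 𝕜 _).sum_mem (fun i _ ↦ (hw i).le) hw1 fun i _ ↦ ?_⟩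
    exact subset_convexHull 𝕜 _ (Set.mem_insert_of_mem _ (by simp))
  · have hx : x ∈ affineSpan 𝕜 (Set.range z) := by
      rw [hai.affineSpan_eq_top_iff_card_eq_finrank_add_one.mpr heq]; trivial
    obtain ⟨l, hl1, rfl⟩ := eq_affineCombination_of_mem_affineSpan_of_fintype hx
    rw [affineCombination_eq_linear_combination _ _ _ hl1]
    obtain ⟨j, hj⟩ := exists_mem_convexHull_insert_image_compl z (fun i ↦ (hw i).le) hw1 hl1
    refine ⟨(univ.erase j).image z, himage _, card_image_le.trans ?_, ?_⟩
    · simp [card_erase_of_mem, heq]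
    · simpa [← Set.compl_eq_univ_sdiff] using hj

open Finset in
theorem Finset.coe_subset_union_or_of_card_le_two {α : Type*} {A B C : Set α} {t : Finset α}
    (ht : ↑t ⊆ A ∪ B ∪ C) (hcard : #t ≤ 2) : ↑t ⊆ A ∪ B ∨ ↑t ⊆ A ∪ C ∨ ↑t ⊆ B ∪ C := by
  classical
  by_contra! h
  obtain ⟨⟨u, hut, huAB⟩, ⟨v, hvt, hvAC⟩, ⟨w, hwt, hwBC⟩⟩ :=
    And.imp Set.not_subset.mp (And.imp Set.not_subset.mp Set.not_subset.mp) h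
  have hu := ht hut
  have hv := ht hvt
  have hw := ht hwt
  simp only [Set.mem_union] at hu hv hw huAB hvAC hwBC
  have : #{u, v, w} ≤ #t := card_le_card
    (insert_subset hut (insert_subset hvt (singleton_subset_iff.mpr hwt)))
  rw [card_eq_three.mpr ⟨u, v, w, by rintro rfl; tauto, by rintro rfl; tauto,
    by rintro rfl; tauto, rfl⟩] at this
  omega

open Module in
theorem convexHull_union_union_subset {𝕜 E : Type*} [Field 𝕜] [LinearOrder 𝕜]
    [IsStrictOrderedRing 𝕜] [AddCommGroup E] [Module 𝕜 E] [FiniteDimensional 𝕜 E]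
    (hE : finrank 𝕜 E ≤ 2) {A B C : Set E} {x : E} (hAB : x ∈ convexHull 𝕜 (A ∪ B))
    (hAC : x ∈ convexHull 𝕜 (A ∪ C)) (hBC : x ∈ convexHull 𝕜 (B ∪ C)) :
    convexHull 𝕜 (A ∪ B ∪ C) ⊆
      convexHull 𝕜 (A ∪ B) ∪ convexHull 𝕜 (A ∪ C) ∪ convexHull 𝕜 (B ∪ C) := by
  intro q hq
  obtain ⟨t, hts, htcard, hqt⟩ := exists_card_le_finrank_mem_convexHull_insert_s11 hq x
  have hmem : ∀ {X : Set E}, x ∈ convexHull 𝕜 X → ↑t ⊆ X → q ∈ convexHull 𝕜 X :=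
    fun hx htX ↦ convexHull_min (Set.insert_subset hx (htX.trans (subset_convexHull 𝕜 _)))
      (convex_convexHull 𝕜 _) hqt
  rcases Finset.coe_subset_union_or_of_card_le_two hts (htcard.trans hE) with h | h | h
  · exact Or.inl (Or.inl (hmem hAB h))
  · exact Or.inl (Or.inr (hmem hAC h))
  · exact Or.inr (hmem hBC h)

theorem cross2_rotate (o a b : Fin 2 → ℝ) : cross2 o a b = cross2 a b o := by
  unfold cross2; ring

theorem cross2_swap (o a b : Fin 2 → ℝ) : cross2 o a b = -cross2 o b a := by
  unfold cross2; ring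

theorem cross2_mul_cross2 (o d u v w : Fin 2 → ℝ) :
    cross2 o u w * cross2 o d v = cross2 o u v * cross2 o d w + cross2 o v w * cross2 o d u := by
  unfold cross2; ring

theorem cross2_sub_cross2 (a b c d : Fin 2 → ℝ) :
    cross2 b d c - cross2 b d a = -(cross2 a c d - cross2 a c b) := by
  unfold cross2; ring

theorem cross2_smul_sub_cross2_smul (a b c d : Fin 2 → ℝ) :
    cross2 b d c • a - cross2 b d a • c = -(cross2 a c d • b - cross2 a c b • d) := by
  ext i; fin_cases i <;> simp [cross2] <;> ring

theorem mem_segment_of_mul_neg {E : Type*} [AddCommGroup E] [Module ℝ E] {u v : ℝ}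
    (h : u * v < 0) (P Q : E) : (v - u)⁻¹ • (v • P - u • Q) ∈ segment ℝ P Q := by
  have hvu : v - u ≠ 0 := fun h0 ↦ by rw [sub_eq_zero.mp h0] at h; nlinarith [sq_nonneg u]
  refine ⟨v / (v - u), -u / (v - u), ?_, ?_, by field_simp; ring, by module⟩ <;>
  rcases mul_neg_iff.mp h with ⟨hu, hv⟩ | ⟨hu, hv⟩
  all_goals first
    | exact div_nonneg (by linarith) (by linarith)
    | exact div_nonneg_of_nonpos (by linarith) (by linarith)

theorem segment_inter_nonempty_of_cross2 {a b c d : Fin 2 → ℝ}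
    (hac : cross2 a c b * cross2 a c d < 0) (hbd : cross2 b d a * cross2 b d c < 0) :
    (segment ℝ a c ∩ segment ℝ b d).Nonempty := by
  refine ⟨_, mem_segment_of_mul_neg hbd a c, ?_⟩
  rw [cross2_sub_cross2, cross2_smul_sub_cross2_smul, inv_neg, neg_smul_neg]
  exact mem_segment_of_mul_neg hac b d

theorem mul_pos_of_mul_pos_mul_pos {a b c : ℝ} (ha : 0 < c * a) (hb : 0 < c * b) :
    0 < a * b := by
  nlinarith [mul_pos ha hb, sq_nonneg c]

def IsConvexChain {m : ℕ} (e : ℝ) (p : Fin m → Fin 2 → ℝ) : Prop :=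
  ∀ i j k : Fin m, (i : ℕ) + 1 = j → k ≠ i → k ≠ j → 0 < e * cross2 (p i) (p j) (p k)

section
variable {m : ℕ} {p : Fin m → Fin 2 → ℝ} {e : ℝ}

theorem IsConvexChain.cross2_pos (h : IsConvexChain e p) {i j k : Fin m} (hij : i < j)
    (hjk : j < k) : 0 < e * cross2 (p i) (p j) (p k) := by
  rw [Fin.lt_def] at hij hjk
  have hedge : ∀ l l' : Fin m, (l : ℕ) + 1 = l' → (i : ℕ) < l →
      0 < e * cross2 (p i) (p l) (p l') := fun l l' hl hil ↦ by
    rw [cross2_rotate]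
    exact h l l' i hl (Fin.ne_of_lt hil) (Fin.ne_of_lt (by rw [Fin.lt_def]; omega))
  rcases (Nat.succ_le_of_lt hij).eq_or_lt with hj | hj
  · exact h i j k hj (Fin.ne_of_gt (by rw [Fin.lt_def]; omega)) (Fin.ne_of_gt hjk)
  set d : Fin m := ⟨i + 1, by omega⟩
  have hd : ∀ l : Fin m, (j : ℕ) ≤ l → 0 < e * cross2 (p i) (p d) (p l) := fun l hl ↦
    h i d l rfl (Fin.ne_of_gt (by rw [Fin.lt_def]; omega))
      (Fin.ne_of_gt (by rw [Fin.lt_def]; simp only [d]; omega))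
  suffices ∀ n, (j : ℕ) < n → ∀ hn : n < m, 0 < e * cross2 (p i) (p j) (p ⟨n, hn⟩) from
    this k hjk k.isLt
  intro n hjn
  induction n, hjn using Nat.le_induction with
  | base => exact fun hn ↦ hedge j _ rfl hij
  | succ n hjn ih =>
    intro hn
    set v : Fin m := ⟨n, by omega⟩
    set w : Fin m := ⟨n + 1, hn⟩
    have huv := ih (by omega)
    have hvw := hedge v w rfl (by simp only [v]; omega)
    have hdu := hd j le_rfl
    have hdv := hd v (by simp only [v]; omega)
    have hdw := hd w (by simp only [w]; omega)
    -- Around `p i`, the points `p j, p v, p w` lie in the open half-plane beyond the edge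
    -- `p i p d`, where the angular order is transitive (a Grassmann–Plücker identity).
    have key : (e * cross2 (p i) (p j) (p w)) * (e * cross2 (p i) (p d) (p v)) =
        (e * cross2 (p i) (p j) (p v)) * (e * cross2 (p i) (p d) (p w)) +
          (e * cross2 (p i) (p v) (p w)) * (e * cross2 (p i) (p d) (p j)) := by
      linear_combination e ^ 2 * cross2_mul_cross2 (p i) (p d) (p j) (p v) (p w)
    exact (mul_pos_iff_of_pos_right hdv).mp
      (key ▸ add_pos (mul_pos huv hdw) (mul_pos hvw hdu))

theorem IsConvexChain.segment_inter_nonempty (h : IsConvexChain e p) {i j k l : Fin m}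
    (hij : i < j) (hjk : j < k) (hkl : k < l) :
    (segment ℝ (p i) (p k) ∩ segment ℝ (p j) (p l)).Nonempty := by
  apply segment_inter_nonempty_of_cross2
  · rw [cross2_swap (p i) (p k) (p j), neg_mul, neg_lt_zero]
    exact mul_pos_of_mul_pos_mul_pos (h.cross2_pos hij hjk) (h.cross2_pos (hij.trans hjk) hkl)
  · rw [← cross2_rotate (p i), cross2_swap (p j) (p l) (p k), mul_neg, neg_lt_zero]
    exact mul_pos_of_mul_pos_mul_pos (h.cross2_pos hij (hjk.trans hkl)) (h.cross2_pos hjk hkl)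

theorem InCircularConvexPosition.exists_isConvexChain [NeZero m]
    (hp : InCircularConvexPosition p) (hm : 3 ≤ m) : ∃ e, IsConvexChain e p := by
  have hsucc : ∀ i j : Fin m, (i : ℕ) + 1 = j → i + 1 = j := fun i j hij ↦
    Fin.ext (by rw [Fin.val_add_one_of_lt' (by omega)]; exact hij)
  have h0 : 0 < m := by omega
  have h1 : 1 < m := by omega
  set e := cross2 (p ⟨0, h0⟩) (p ⟨1, h1⟩) (p ⟨2, hm⟩)
  suffices ∀ n, ∀ i j k : Fin m, (i : ℕ) = n → (i : ℕ) + 1 = j → k ≠ i → k ≠ j →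
      0 < e * cross2 (p i) (p j) (p k) from ⟨e, fun i j k ↦ this i i j k rfl⟩
  intro n
  induction n with
  | zero =>
    intro i j k hi hij hki hkj
    obtain rfl : i = ⟨0, h0⟩ := Fin.ext hi
    obtain rfl : j = ⟨1, h1⟩ := Fin.ext hij.symm
    have h := hp ⟨0, h0⟩ k ⟨2, hm⟩
    rw [hsucc _ _ hij] at h
    rw [mul_comm]
    exact h hki hkj (Fin.ne_of_val_ne (by simp)) (Fin.ne_of_val_ne (by simp))
  | succ n ih =>
    intro i j k hi hij hki hkj
    set prev : Fin m := ⟨n, by omega⟩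
    have hprev := ih prev i j rfl (by simp [prev, hi])
      (Fin.ne_of_val_ne (by simp [prev]; omega)) (Fin.ne_of_val_ne (by omega))
    have hedge := hp i k prev
    rw [hsucc _ _ hij] at hedge
    rw [cross2_rotate] at hprev
    refine mul_pos_of_mul_pos_mul_pos (c := cross2 (p i) (p j) (p prev)) ?_ ?_
    · rwa [mul_comm]
    · rw [mul_comm]
      exact hedge hki hkj (Fin.ne_of_val_ne (by simp [prev]; omega))
        (Fin.ne_of_val_ne (by simp [prev]; omega))
end

theorem stmt_11_general (m : ℕ) [NeZero m] (p : Fin m → (Fin 2 → ℝ))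
    (hp : InCircularConvexPosition p)
    (IA IB IC : Set (Fin m))
    (hcover : IA ∪ IB ∪ IC = Set.univ)
    (i₁ i₂ i₃ i₄ : Fin m) (h12 : i₁ < i₂) (h23 : i₂ < i₃) (h34 : i₃ < i₄)
    (hsep : (i₁ ∈ IA ∧ i₃ ∈ IA ∧ i₂ ∉ IA ∧ i₄ ∉ IA) ∨
            (i₁ ∈ IB ∧ i₃ ∈ IB ∧ i₂ ∉ IB ∧ i₄ ∉ IB) ∨
            (i₁ ∈ IC ∧ i₃ ∈ IC ∧ i₂ ∉ IC ∧ i₄ ∉ IC)) :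
    convexHull ℝ (p '' IA ∪ p '' IB ∪ p '' IC) ⊆
      convexHull ℝ (p '' IA ∪ p '' IB) ∪ convexHull ℝ (p '' IA ∪ p '' IC) ∪
        convexHull ℝ (p '' IB ∪ p '' IC) := by
  obtain ⟨e, he⟩ := hp.exists_isConvexChain (by omega)
  obtain ⟨x, hx13, hx24⟩ := he.segment_inter_nonempty h12 h23 h34
  have hseg {s : Set (Fin m)} {i j : Fin m} (hi : i ∈ s) (hj : j ∈ s) :
      x ∈ segment ℝ (p i) (p j) → x ∈ convexHull ℝ (p '' s) :=
    fun hx ↦ segment_subset_convexHull (Set.mem_image_of_mem p hi) (Set.mem_image_of_mem p hj) hx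
  have h2 := Set.eq_univ_iff_forall.mp hcover i₂
  have h4 := Set.eq_univ_iff_forall.mp hcover i₄
  have hsub {s t : Set (Fin m)} (hst : s ⊆ t) :=
    convexHull_mono (𝕜 := ℝ) (Set.image_mono (f := p) hst)
  obtain ⟨hAB, hAC, hBC⟩ : x ∈ convexHull ℝ (p '' IA ∪ p '' IB) ∧
      x ∈ convexHull ℝ (p '' IA ∪ p '' IC) ∧ x ∈ convexHull ℝ (p '' IB ∪ p '' IC) := by
    simp only [← Set.image_union]
    rcases hsep with ⟨h1, h3, h2', h4'⟩ | ⟨h1, h3, h2', h4'⟩ | ⟨h1, h3, h2', h4'⟩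
    · have hA := hseg h1 h3 hx13
      refine ⟨hsub Set.subset_union_left hA, hsub Set.subset_union_left hA, hseg ?_ ?_ hx24⟩
      all_goals simp only [Set.mem_union] at *; tauto
    · have hB := hseg h1 h3 hx13
      refine ⟨hsub Set.subset_union_right hB, hseg ?_ ?_ hx24, hsub Set.subset_union_left hB⟩
      all_goals simp only [Set.mem_union] at *; tauto
    · have hC := hseg h1 h3 hx13
      refine ⟨hseg ?_ ?_ hx24, hsub Set.subset_union_right hC, hsub Set.subset_union_right hC⟩
      all_goals simp only [Set.mem_union] at *; tauto
  exact convexHull_union_union_subset (Module.finrank_fin_fun ℝ).le hAB hAC hBC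

/-- Lemma 6 of the paper: if the vertex indices of a convex polygon
(listed in circular order) are partitioned into `I_A, I_B, I_C`, and the vertices of
one of the parts are separated in the circular order by vertices of the other parts,
then the hull of `A ∪ B ∪ C` is covered by the hulls of the pairwise unions. -/
theorem stmt_11 (m : ℕ) [NeZero m] (hm : 4 ≤ m) (p : Fin m → (Fin 2 → ℝ))
    (hp : InCircularConvexPosition p)
    (IA IB IC : Set (Fin m))
    (hAB : Disjoint IA IB) (hAC : Disjoint IA IC) (hBC : Disjoint IB IC)
    (hcover : IA ∪ IB ∪ IC = Set.univ)
    (i₁ i₂ i₃ i₄ : Fin m) (h12 : i₁ < i₂) (h23 : i₂ < i₃) (h34 : i₃ < i₄)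
    (hsep : (i₁ ∈ IA ∧ i₃ ∈ IA ∧ i₂ ∉ IA ∧ i₄ ∉ IA) ∨
            (i₁ ∈ IB ∧ i₃ ∈ IB ∧ i₂ ∉ IB ∧ i₄ ∉ IB) ∨
            (i₁ ∈ IC ∧ i₃ ∈ IC ∧ i₂ ∉ IC ∧ i₄ ∉ IC)) :
    convexHull ℝ (p '' IA ∪ p '' IB ∪ p '' IC) ⊆
      convexHull ℝ (p '' IA ∪ p '' IB) ∪ convexHull ℝ (p '' IA ∪ p '' IC) ∪
        convexHull ℝ (p '' IB ∪ p '' IC) :=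
  stmt_11_general m p hp IA IB IC hcover i₁ i₂ i₃ i₄ h12 h23 h34 hsep
end
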